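/- arXiv:math/9803130 — 6 statements merged into one kernel-verified Lean document; each statement's English description precedes it below -/
import Mathlib

section
/- With the convention T_{0,0}(x,q) = 1, the generating series of stacks with empty rows allowed satisfy, for every n ≥ 2, the three-term recurrence (1 − x q^n) · T_{0,n}(x,q) = 2 · T_{0,n−1}(x,q) − T_{0,n−2}(x,q) in the ring of formal power series in x and q. -/
/-- A sequence of length `n` is unimodal if it weakly increases then weakly decreases. -/
def Unimodal {n : ℕ} (a : Fin n → ℕ) : Prop :=
  ∃ p : Fin n, (∀ i j : Fin n, i ≤ j → j ≤ p → a i ≤ a j) ∧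
    (∀ i j : Fin n, p ≤ i → i ≤ j → a j ≤ a i)

/-- The number of stacks of height `n` with empty rows allowed (unimodal sequences of
nonnegative integers of length `n`) having width (maximal entry) `w` and
area (sum of entries) `s`. -/
noncomputable def stackCount (n w s : ℕ) : ℕ :=
  Nat.card {a : Fin n → ℕ // Unimodal a ∧ Finset.univ.sup a = w ∧ ∑ i, a i = s}

def StkSet (n w s : ℕ) : Set (Fin n → ℕ) :=
  {a | Unimodal a ∧ Finset.univ.sup a = w ∧ ∑ i, a i = s}

lemma stackCount_eq_ncard (n w s : ℕ) : stackCount n w s = (StkSet n w s).ncard := by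
  rw [Set.ncard]; rfl

lemma StkSet_finite (n w s : ℕ) : (StkSet n w s).Finite := by
  apply Set.Finite.subset (Set.Finite.pi (fun _ : Fin n => Set.finite_Iic s))
  intro a ha
  simp only [Set.mem_pi, Set.mem_univ, Set.mem_Iic, forall_true_left]
  intro i
  calc a i ≤ ∑ j, a j := Finset.single_le_sum (fun j _ => Nat.zero_le _) (Finset.mem_univ i)
  _ = s := ha.2.2

lemma unimodal_comp_mono {n : ℕ} {a : Fin n → ℕ} (h : Unimodal a) {g : ℕ → ℕ}
    (hg : Monotone g) : Unimodal (fun i => g (a i)) := by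
  obtain ⟨p, hinc, hdec⟩ := h
  exact ⟨p, fun i j hij hjp => hg (hinc i j hij hjp), fun i j hpi hij => hg (hdec i j hpi hij)⟩

lemma unimodal_tail {m : ℕ} {a : Fin (m+2) → ℕ} (h : Unimodal a) :
    Unimodal (fun i : Fin (m+1) => a i.succ) := by
  obtain ⟨p, hinc, hdec⟩ := h
  refine ⟨⟨p.val - 1, by omega⟩, ?_, ?_⟩
  · intro i j hij hjp
    rw [Fin.le_def] at hij hjp
    simp only at hjp
    rcases Nat.eq_zero_or_pos p.val with hp | hp
    · have : i = j := Fin.ext (by omega)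
      rw [this]
    · exact hinc i.succ j.succ (by rw [Fin.le_def]; simp; omega)
        (by rw [Fin.le_def]; simp; omega)
  · intro i j hpi hij
    rw [Fin.le_def] at hpi hij
    simp only at hpi
    exact hdec i.succ j.succ (by rw [Fin.le_def]; simp; omega)
      (by rw [Fin.le_def]; simp; omega)

lemma unimodal_init {m : ℕ} {a : Fin (m+2) → ℕ} (h : Unimodal a) :
    Unimodal (fun i : Fin (m+1) => a i.castSucc) := by
  obtain ⟨p, hinc, hdec⟩ := h
  refine ⟨⟨min p.val m, by omega⟩, ?_, ?_⟩
  · intro i j hij hjp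
    rw [Fin.le_def] at hij hjp
    simp only at hjp
    exact hinc i.castSucc j.castSucc (by rw [Fin.le_def]; simpa)
      (by rw [Fin.le_def]; simp; omega)
  · intro i j hpi hij
    rw [Fin.le_def] at hpi hij
    simp only at hpi
    rcases le_or_gt p.val m with hp | hp
    · exact hdec i.castSucc j.castSucc (by rw [Fin.le_def]; simp; omega)
        (by rw [Fin.le_def]; simpa)
    · have : i = j := Fin.ext (by omega)
      rw [this]

lemma unimodal_cons0 {m : ℕ} {b : Fin (m+1) → ℕ} (h : Unimodal b) :
    Unimodal (Fin.cons 0 b : Fin (m+2) → ℕ) := by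
  obtain ⟨p, hinc, hdec⟩ := h
  refine ⟨p.succ, ?_, ?_⟩
  · intro i j hij hjp
    cases i using Fin.cases with
    | zero => simp
    | succ i' =>
      cases j using Fin.cases with
      | zero =>
        exact absurd hij (by rw [Fin.le_def]; simp)
      | succ j' =>
        rw [Fin.le_def] at hij hjp
        simp only [Fin.val_succ] at hij hjp
        simpa using hinc i' j' (by rw [Fin.le_def]; omega) (by rw [Fin.le_def]; omega)
  · intro i j hpi hij
    cases i using Fin.cases with
    | zero => exact absurd hpi (by rw [Fin.le_def]; simp)
    | succ i' =>
      cases j using Fin.cases with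
      | zero => exact absurd hij (by rw [Fin.le_def]; simp)
      | succ j' =>
        rw [Fin.le_def] at hpi hij
        simp only [Fin.val_succ] at hpi hij
        simpa using hdec i' j' (by rw [Fin.le_def]; omega) (by rw [Fin.le_def]; omega)

lemma unimodal_snoc0 {m : ℕ} {b : Fin (m+1) → ℕ} (h : Unimodal b) :
    Unimodal (Fin.snoc b 0 : Fin (m+2) → ℕ) := by
  obtain ⟨p, hinc, hdec⟩ := h
  refine ⟨p.castSucc, ?_, ?_⟩
  · intro i j hij hjp
    rw [Fin.le_def] at hij hjp
    simp only [Fin.coe_castSucc] at hjp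
    obtain ⟨j', rfl⟩ : ∃ j' : Fin (m+1), j = j'.castSucc :=
      ⟨⟨j.val, by omega⟩, Fin.ext (by simp)⟩
    obtain ⟨i', rfl⟩ : ∃ i' : Fin (m+1), i = i'.castSucc :=
      ⟨⟨i.val, by simp at hij hjp; omega⟩, Fin.ext (by simp)⟩
    rw [Fin.snoc_castSucc, Fin.snoc_castSucc]
    exact hinc _ _ (by rw [Fin.le_def]; simpa using hij) (by rw [Fin.le_def]; simpa using hjp)
  · intro i j hpi hij
    rw [Fin.le_def] at hpi hij
    simp only [Fin.coe_castSucc] at hpi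
    rcases le_or_gt (m+1) j.val with hj | hj
    · have : j = Fin.last (m+1) := Fin.ext (by simpa using by omega)
      rw [this, Fin.snoc_last]
      exact Nat.zero_le _
    · obtain ⟨j', rfl⟩ : ∃ j' : Fin (m+1), j = j'.castSucc :=
        ⟨⟨j.val, by omega⟩, Fin.ext (by simp)⟩
      obtain ⟨i', rfl⟩ : ∃ i' : Fin (m+1), i = i'.castSucc :=
        ⟨⟨i.val, by simp at hij; omega⟩, Fin.ext (by simp)⟩
      rw [Fin.snoc_castSucc, Fin.snoc_castSucc]
      exact hdec _ _ (by rw [Fin.le_def]; simpa using hpi) (by rw [Fin.le_def]; simpa using hij)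

lemma unimodal_pos {m : ℕ} {a : Fin (m+1) → ℕ} (h : Unimodal a) (h0 : a 0 ≠ 0)
    (hl : a (Fin.last m) ≠ 0) : ∀ i, 1 ≤ a i := by
  obtain ⟨p, hinc, hdec⟩ := h
  intro i
  rcases le_total i p with hip | hpi
  · have := hinc 0 i (Fin.zero_le i) hip
    omega
  · have := hdec i (Fin.last m) hpi (Fin.le_last i)
    omega

lemma sup_cons_zero {m : ℕ} (b : Fin (m+1) → ℕ) :
    Finset.univ.sup (Fin.cons 0 b : Fin (m+2) → ℕ) = Finset.univ.sup b := by
  apply le_antisymm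
  · apply Finset.sup_le
    intro i _
    cases i using Fin.cases with
    | zero => simp
    | succ j => simpa using Finset.le_sup (f := b) (Finset.mem_univ j)
  · apply Finset.sup_le
    intro j _
    have : b j = (Fin.cons 0 b : Fin (m+2) → ℕ) j.succ := by simp
    rw [this]
    exact Finset.le_sup (Finset.mem_univ j.succ)

lemma sup_snoc_zero {m : ℕ} (b : Fin (m+1) → ℕ) :
    Finset.univ.sup (Fin.snoc b 0 : Fin (m+2) → ℕ) = Finset.univ.sup b := by
  apply le_antisymm
  · apply Finset.sup_le
    intro i _
    rcases le_or_gt (m+1) i.val with hi | hi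
    · have : i = Fin.last (m+1) := Fin.ext (by simpa using by omega)
      rw [this, Fin.snoc_last]
      exact Nat.zero_le _
    · have : i = (⟨i.val, by omega⟩ : Fin (m+1)).castSucc := Fin.ext (by simp)
      rw [this, Fin.snoc_castSucc]
      exact Finset.le_sup (Finset.mem_univ _)
  · apply Finset.sup_le
    intro j _
    have : b j = (Fin.snoc b 0 : Fin (m+2) → ℕ) j.castSucc := by simp
    rw [this]
    exact Finset.le_sup (Finset.mem_univ j.castSucc)

lemma sup_add_one {m : ℕ} (b : Fin (m+1) → ℕ) :
    Finset.univ.sup (fun i => b i + 1) = Finset.univ.sup b + 1 := by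
  apply le_antisymm
  · exact Finset.sup_le fun i _ => Nat.succ_le_succ (Finset.le_sup (Finset.mem_univ i))
  · obtain ⟨i, -, hi⟩ := Finset.exists_mem_eq_sup Finset.univ Finset.univ_nonempty b
    rw [hi]
    exact Finset.le_sup (f := fun i => b i + 1) (Finset.mem_univ i)

lemma sup_sub_one {m : ℕ} (a : Fin (m+1) → ℕ) :
    Finset.univ.sup (fun i => a i - 1) = Finset.univ.sup a - 1 := by
  apply le_antisymm
  · exact Finset.sup_le fun i _ =>
      Nat.sub_le_sub_right (Finset.le_sup (Finset.mem_univ i)) 1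
  · obtain ⟨i, -, hi⟩ := Finset.exists_mem_eq_sup Finset.univ Finset.univ_nonempty a
    rw [hi]
    exact Finset.le_sup (f := fun i => a i - 1) (Finset.mem_univ i)

lemma ncard_first_zero (m w s : ℕ) :
    (StkSet (m+2) w s ∩ {a | a 0 = 0}).ncard = stackCount (m+1) w s := by
  have himg : (fun (a : Fin (m+2) → ℕ) (i : Fin (m+1)) => a i.succ) ''
      (StkSet (m+2) w s ∩ {a | a 0 = 0}) = StkSet (m+1) w s := by
    ext b
    constructor
    · rintro ⟨a, ⟨⟨hu, hsup, hsum⟩, h0⟩, rfl⟩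
      have ha : a = Fin.cons 0 (fun i => a i.succ) := by
        funext i
        cases i using Fin.cases with
        | zero => simpa using h0
        | succ j => simp
      refine ⟨unimodal_tail hu, ?_, ?_⟩
      · rw [ha, sup_cons_zero] at hsup; exact hsup
      · rw [Fin.sum_univ_succ, h0, zero_add] at hsum; exact hsum
    · rintro ⟨hu, hsup, hsum⟩
      refine ⟨Fin.cons 0 b, ⟨⟨unimodal_cons0 hu, ?_, ?_⟩, by simp⟩, ?_⟩
      · rw [sup_cons_zero]; exact hsup
      · rw [Fin.sum_univ_succ]; simpa using hsum
      · funext i; simp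
  have hinj : Set.InjOn (fun (a : Fin (m+2) → ℕ) (i : Fin (m+1)) => a i.succ)
      (StkSet (m+2) w s ∩ {a | a 0 = 0}) := by
    intro a ha a' ha' h
    funext i
    cases i using Fin.cases with
    | zero => rw [ha.2, ha'.2]
    | succ j => exact congrFun h j
  rw [stackCount_eq_ncard, ← himg, Set.ncard_image_of_injOn hinj]

lemma ncard_last_zero (m w s : ℕ) :
    (StkSet (m+2) w s ∩ {a | a (Fin.last (m+1)) = 0}).ncard = stackCount (m+1) w s := by
  have himg : (fun (a : Fin (m+2) → ℕ) (i : Fin (m+1)) => a i.castSucc) ''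
      (StkSet (m+2) w s ∩ {a | a (Fin.last (m+1)) = 0}) = StkSet (m+1) w s := by
    ext b
    constructor
    · rintro ⟨a, ⟨⟨hu, hsup, hsum⟩, h0⟩, rfl⟩
      have ha : a = Fin.snoc (fun i => a i.castSucc) 0 := by
        funext i
        cases i using Fin.lastCases with
        | last => simpa using h0
        | cast j => simp
      refine ⟨unimodal_init hu, ?_, ?_⟩
      · rw [ha, sup_snoc_zero] at hsup; exact hsup
      · rw [Fin.sum_univ_castSucc, h0, add_zero] at hsum; exact hsum
    · rintro ⟨hu, hsup, hsum⟩
      refine ⟨Fin.snoc b 0, ⟨⟨unimodal_snoc0 hu, ?_, ?_⟩, by simp⟩, ?_⟩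
      · rw [sup_snoc_zero]; exact hsup
      · rw [Fin.sum_univ_castSucc]; simpa using hsum
      · funext i; simp
  have hinj : Set.InjOn (fun (a : Fin (m+2) → ℕ) (i : Fin (m+1)) => a i.castSucc)
      (StkSet (m+2) w s ∩ {a | a (Fin.last (m+1)) = 0}) := by
    intro a ha a' ha' h
    funext i
    cases i using Fin.lastCases with
    | last => rw [ha.2, ha'.2]
    | cast j => exact congrFun h j
  rw [stackCount_eq_ncard, ← himg, Set.ncard_image_of_injOn hinj]

lemma ncard_both_zero (m w s : ℕ) :
    (StkSet (m+3) w s ∩ {a | a 0 = 0} ∩ {a | a (Fin.last (m+2)) = 0}).ncard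
      = stackCount (m+1) w s := by
  have himg : (fun (a : Fin (m+3) → ℕ) (i : Fin (m+1)) => a i.castSucc.succ) ''
      (StkSet (m+3) w s ∩ {a | a 0 = 0} ∩ {a | a (Fin.last (m+2)) = 0})
        = StkSet (m+1) w s := by
    ext b
    constructor
    · rintro ⟨a, ⟨⟨⟨hu, hsup, hsum⟩, h0⟩, hl⟩, rfl⟩
      have ha : a = Fin.cons 0 (Fin.snoc (fun i => a i.castSucc.succ) 0) := by
        funext i
        cases i using Fin.cases with
        | zero => simpa using h0
        | succ j =>
          cases j using Fin.lastCases with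
          | last => rw [Fin.cons_succ, Fin.snoc_last, Fin.succ_last]; exact hl
          | cast j' => rw [Fin.cons_succ, Fin.snoc_castSucc]
      refine ⟨unimodal_init (unimodal_tail hu), ?_, ?_⟩
      · rw [ha, sup_cons_zero, sup_snoc_zero] at hsup; exact hsup
      · rw [ha, Fin.sum_cons, Fin.sum_univ_castSucc] at hsum
        simpa using hsum
    · rintro ⟨hu, hsup, hsum⟩
      refine ⟨Fin.cons 0 (Fin.snoc b 0), ⟨⟨⟨unimodal_cons0 (unimodal_snoc0 hu), ?_, ?_⟩,
          by simp⟩, ?_⟩, ?_⟩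
      · rw [sup_cons_zero, sup_snoc_zero]; exact hsup
      · rw [Fin.sum_cons, Fin.sum_univ_castSucc]; simpa using hsum
      · show (Fin.cons 0 (Fin.snoc b 0 : Fin (m+2) → ℕ) : Fin (m+3) → ℕ) (Fin.last (m+2)) = 0
        rw [← Fin.succ_last, Fin.cons_succ, Fin.snoc_last]
      · funext i
        show (Fin.cons 0 (Fin.snoc b 0 : Fin (m+2) → ℕ) : Fin (m+3) → ℕ) i.castSucc.succ = b i
        rw [Fin.cons_succ, Fin.snoc_castSucc]
  have hinj : Set.InjOn (fun (a : Fin (m+3) → ℕ) (i : Fin (m+1)) => a i.castSucc.succ)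
      (StkSet (m+3) w s ∩ {a | a 0 = 0} ∩ {a | a (Fin.last (m+2)) = 0}) := by
    intro a ha a' ha' h
    funext i
    cases i using Fin.cases with
    | zero => rw [ha.1.2, ha'.1.2]
    | succ j =>
      cases j using Fin.lastCases with
      | last => rw [Fin.succ_last, ha.2, ha'.2]
      | cast j' => exact congrFun h j'
  rw [stackCount_eq_ncard, ← himg, Set.ncard_image_of_injOn hinj]

lemma ncard_both_zero_two (w s : ℕ) :
    (StkSet 2 w s ∩ {a | a 0 = 0} ∩ {a | a (Fin.last 1) = 0}).ncard
      = if w = 0 ∧ s = 0 then 1 else 0 := by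
  have hzero : ∀ a : Fin 2 → ℕ, a 0 = 0 → a (Fin.last 1) = 0 → a = fun _ => 0 := by
    intro a h0 hl
    funext i
    fin_cases i
    · exact h0
    · exact hl
  split_ifs with h
  · obtain ⟨rfl, rfl⟩ := h
    have : (StkSet 2 0 0 ∩ {a | a 0 = 0} ∩ {a | a (Fin.last 1) = 0})
        = {fun _ => 0} := by
      ext a
      constructor
      · rintro ⟨⟨-, h0⟩, hl⟩
        exact hzero a h0 hl
      · rintro rfl
        refine ⟨⟨⟨⟨0, ?_, ?_⟩, ?_, ?_⟩, rfl⟩, rfl⟩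
        · intro i j _ _; exact le_refl 0
        · intro i j _ _; exact le_refl 0
        · simp
        · simp
    rw [this, Set.ncard_singleton]
  · rw [Set.ncard_eq_zero (((StkSet_finite 2 w s).inter_of_left _).inter_of_left _)]
    ext a
    simp only [Set.mem_inter_iff, Set.mem_setOf_eq, Set.mem_empty_iff_false, iff_false]
    rintro ⟨⟨⟨-, hsup, hsum⟩, h0⟩, hl⟩
    have := hzero a h0 hl
    subst this
    apply h
    constructor
    · rw [← hsup]; simp
    · rw [← hsum]; simp

lemma ncard_pos (m w s : ℕ) :
    (StkSet (m+2) w s ∩ {a | a 0 ≠ 0 ∧ a (Fin.last (m+1)) ≠ 0}).ncard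
      = if 1 ≤ w ∧ m+2 ≤ s then stackCount (m+2) (w-1) (s-(m+2)) else 0 := by
  split_ifs with hc
  · have himg : (fun (a : Fin (m+2) → ℕ) (i : Fin (m+2)) => a i - 1) ''
        (StkSet (m+2) w s ∩ {a | a 0 ≠ 0 ∧ a (Fin.last (m+1)) ≠ 0})
          = StkSet (m+2) (w-1) (s-(m+2)) := by
      ext b
      constructor
      · rintro ⟨a, ⟨⟨hu, hsup, hsum⟩, h0, hl⟩, rfl⟩
        have hpos : ∀ i, 1 ≤ a i := unimodal_pos hu h0 hl
        refine ⟨unimodal_comp_mono hu (fun x y hxy => Nat.sub_le_sub_right hxy 1), ?_, ?_⟩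
        · rw [sup_sub_one, hsup]
        · show ∑ i, (a i - 1) = s - (m+2)
          have h1 : ∑ i, (a i - 1 + 1) = ∑ i, a i :=
            Finset.sum_congr rfl (fun i _ => by have := hpos i; omega)
          rw [Finset.sum_add_distrib] at h1
          simp only [Finset.sum_const, Finset.card_univ, Fintype.card_fin,
            smul_eq_mul, mul_one] at h1
          omega
      · rintro ⟨hu, hsup, hsum⟩
        refine ⟨fun i => b i + 1, ⟨⟨unimodal_comp_mono hu (fun x y hxy => by omega), ?_, ?_⟩,
            by simp, by simp⟩, ?_⟩
        · rw [sup_add_one, hsup]; omega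
        · rw [Finset.sum_add_distrib]
          simp only [Finset.sum_const, Finset.card_univ, Fintype.card_fin,
            smul_eq_mul, mul_one]
          omega
        · funext i; simp
    have hinj : Set.InjOn (fun (a : Fin (m+2) → ℕ) (i : Fin (m+2)) => a i - 1)
        (StkSet (m+2) w s ∩ {a | a 0 ≠ 0 ∧ a (Fin.last (m+1)) ≠ 0}) := by
      intro a ha a' ha' h
      have hpos : ∀ i, 1 ≤ a i := unimodal_pos ha.1.1 ha.2.1 ha.2.2
      have hpos' : ∀ i, 1 ≤ a' i := unimodal_pos ha'.1.1 ha'.2.1 ha'.2.2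
      funext i
      have := congrFun h i
      simp only at this
      have h1 := hpos i
      have h2 := hpos' i
      omega
    rw [stackCount_eq_ncard, ← himg, Set.ncard_image_of_injOn hinj]
  · rw [Set.ncard_eq_zero ((StkSet_finite (m+2) w s).inter_of_left _)]
    ext a
    simp only [Set.mem_inter_iff, Set.mem_setOf_eq, Set.mem_empty_iff_false, iff_false]
    rintro ⟨⟨hu, hsup, hsum⟩, h0, hl⟩
    have hpos : ∀ i, 1 ≤ a i := unimodal_pos hu h0 hl
    apply hc
    constructor
    · calc 1 ≤ a 0 := hpos 0
      _ ≤ Finset.univ.sup a := Finset.le_sup (Finset.mem_univ 0)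
      _ = w := hsup
    · calc m + 2 = ∑ _i : Fin (m+2), 1 := by simp
      _ ≤ ∑ i, a i := Finset.sum_le_sum (fun i _ => hpos i)
      _ = s := hsum

lemma ncard_both_zero' (m w s : ℕ) :
    (StkSet (m+1+2) w s ∩ {a | a 0 = 0} ∩ {a | a (Fin.last (m+1+1)) = 0}).ncard
      = stackCount (m+1) w s := ncard_both_zero m w s

lemma ncard_both_zero_two' (w s : ℕ) :
    (StkSet (0+2) w s ∩ {a | a 0 = 0} ∩ {a | a (Fin.last (0+1)) = 0}).ncard
      = if w = 0 ∧ s = 0 then 1 else 0 := ncard_both_zero_two w s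

lemma key_count (m w s : ℕ) :
    stackCount (m+2) w s
      + (StkSet (m+2) w s ∩ {a | a 0 = 0} ∩ {a | a (Fin.last (m+1)) = 0}).ncard
    = 2 * stackCount (m+1) w s
      + (if 1 ≤ w ∧ m+2 ≤ s then stackCount (m+2) (w-1) (s-(m+2)) else 0) := by
  have hfin := StkSet_finite (m+2) w s
  have hfinA : (StkSet (m+2) w s ∩ {a | a 0 = 0}).Finite := hfin.inter_of_left _
  have hfinB : (StkSet (m+2) w s ∩ {a | a (Fin.last (m+1)) = 0}).Finite := hfin.inter_of_left _
  have hfinP : (StkSet (m+2) w s ∩ {a | a 0 ≠ 0 ∧ a (Fin.last (m+1)) ≠ 0}).Finite :=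
    hfin.inter_of_left _
  have hunion : StkSet (m+2) w s
      = ((StkSet (m+2) w s ∩ {a | a 0 = 0}) ∪ (StkSet (m+2) w s ∩ {a | a (Fin.last (m+1)) = 0}))
        ∪ (StkSet (m+2) w s ∩ {a | a 0 ≠ 0 ∧ a (Fin.last (m+1)) ≠ 0}) := by
    ext a
    simp only [Set.mem_union, Set.mem_inter_iff, Set.mem_setOf_eq]
    tauto
  have hdisj : Disjoint
      ((StkSet (m+2) w s ∩ {a | a 0 = 0}) ∪ (StkSet (m+2) w s ∩ {a | a (Fin.last (m+1)) = 0}))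
      (StkSet (m+2) w s ∩ {a | a 0 ≠ 0 ∧ a (Fin.last (m+1)) ≠ 0}) := by
    rw [Set.disjoint_left]
    intro a ha hb
    simp only [Set.mem_union, Set.mem_inter_iff, Set.mem_setOf_eq] at ha hb
    tauto
  have hAB : StkSet (m+2) w s ∩ {a | a 0 = 0} ∩ {a | a (Fin.last (m+1)) = 0}
      = (StkSet (m+2) w s ∩ {a | a 0 = 0}) ∩ (StkSet (m+2) w s ∩ {a | a (Fin.last (m+1)) = 0}) := by
    ext a
    simp only [Set.mem_inter_iff, Set.mem_setOf_eq]
    tauto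
  have e1 : (StkSet (m+2) w s).ncard
      = ((StkSet (m+2) w s ∩ {a | a 0 = 0}) ∪ (StkSet (m+2) w s ∩ {a | a (Fin.last (m+1)) = 0})).ncard
        + (StkSet (m+2) w s ∩ {a | a 0 ≠ 0 ∧ a (Fin.last (m+1)) ≠ 0}).ncard := by
    conv_lhs => rw [hunion]
    exact Set.ncard_union_eq hdisj (hfinA.union hfinB) hfinP
  have e2 := Set.ncard_union_add_ncard_inter
    (StkSet (m+2) w s ∩ {a | a 0 = 0}) (StkSet (m+2) w s ∩ {a | a (Fin.last (m+1)) = 0})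
    hfinA hfinB
  rw [ncard_first_zero m w s, ncard_last_zero m w s] at e2
  rw [ncard_pos m w s] at e1
  rw [stackCount_eq_ncard (m+2), hAB]
  linarith [e1, e2]

/-- With the convention `T_{0,0}(x,q) = 1`, the generating series of stacks with empty
rows allowed satisfy, for every `n ≥ 2`, the three-term recurrence
`(1 − x qⁿ)·T_{0,n} = 2·T_{0,n−1} − T_{0,n−2}`.  Here the variable `X 0` plays the role
of `x` (marking the width) and `X 1` the role of `q` (marking the area). -/
theorem stmt0
    (T : ℕ → MvPowerSeries (Fin 2) ℤ)
    (hT0 : T 0 = 1)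
    (hT : ∀ n : ℕ, 1 ≤ n → ∀ w s : ℕ,
      (MvPowerSeries.coeff (Finsupp.single (0 : Fin 2) w + Finsupp.single 1 s)) (T n)
        = (stackCount n w s : ℤ)) :
    ∀ n : ℕ, 2 ≤ n →
      (1 - MvPowerSeries.X (0 : Fin 2) * MvPowerSeries.X 1 ^ n) * T n
        = 2 * T (n - 1) - T (n - 2) := by
  intro n hn
  obtain ⟨m, rfl⟩ : ∃ m, n = m + 2 := ⟨n - 2, by omega⟩
  simp only [show m + 2 - 1 = m + 1 from by omega, show m + 2 - 2 = m from by omega]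
  apply MvPowerSeries.ext
  intro d
  have hd : d = Finsupp.single (0 : Fin 2) (d 0) + Finsupp.single 1 (d 1) := by
    ext i
    fin_cases i <;> simp [Finsupp.single_apply]
  obtain ⟨w, s, rfl⟩ : ∃ w s, d = Finsupp.single (0 : Fin 2) w + Finsupp.single 1 s :=
    ⟨d 0, d 1, hd⟩
  have hX : (MvPowerSeries.X (0:Fin 2) : MvPowerSeries (Fin 2) ℤ) * MvPowerSeries.X 1 ^ (m+2)
      = MvPowerSeries.monomial (Finsupp.single (0:Fin 2) 1 + Finsupp.single 1 (m+2)) 1 := by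
    rw [MvPowerSeries.X_pow_eq, MvPowerSeries.X_def, MvPowerSeries.monomial_mul_monomial, one_mul]
  rw [sub_mul, one_mul, map_sub, hX, MvPowerSeries.coeff_monomial_mul]
  rw [map_sub, two_mul, map_add]
  rw [hT (m+1) (by omega) w s, hT (m+2) (by omega) w s]
  have hle : (Finsupp.single (0:Fin 2) 1 + Finsupp.single 1 (m+2)
      ≤ Finsupp.single (0:Fin 2) w + Finsupp.single 1 s) ↔ (1 ≤ w ∧ m+2 ≤ s) := by
    rw [Finsupp.le_def]
    constructor
    · intro h
      have h0 := h 0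
      have h1 := h 1
      simp [Finsupp.single_apply] at h0 h1
      exact ⟨h0, h1⟩
    · intro ⟨h1, h2⟩ i
      fin_cases i <;> simp [Finsupp.single_apply] <;> omega
  have hcoeffP : (if (Finsupp.single (0:Fin 2) 1 + Finsupp.single 1 (m+2)
        ≤ Finsupp.single (0:Fin 2) w + Finsupp.single 1 s) then
        (1:ℤ) * (MvPowerSeries.coeff ((Finsupp.single (0:Fin 2) w + Finsupp.single 1 s)
          - (Finsupp.single (0:Fin 2) 1 + Finsupp.single 1 (m+2)))) (T (m+2)) else 0)
      = (if 1 ≤ w ∧ m+2 ≤ s then (stackCount (m+2) (w-1) (s-(m+2)) : ℤ) else 0) := by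
    by_cases hc : 1 ≤ w ∧ m + 2 ≤ s
    · rw [if_pos (hle.mpr hc), if_pos hc, one_mul]
      have hsub : (Finsupp.single (0:Fin 2) w + Finsupp.single 1 s)
          - (Finsupp.single (0:Fin 2) 1 + Finsupp.single 1 (m+2))
          = Finsupp.single (0:Fin 2) (w-1) + Finsupp.single 1 (s-(m+2)) := by
        ext i
        fin_cases i <;> simp [Finsupp.tsub_apply, Finsupp.single_apply]
      rw [hsub, hT (m+2) (by omega) (w-1) (s-(m+2))]
    · rw [if_neg (fun h => hc (hle.mp h)), if_neg hc]
  rw [hcoeffP]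
  have hcoeffB : (MvPowerSeries.coeff (Finsupp.single (0:Fin 2) w + Finsupp.single 1 s)) (T m)
      = ((StkSet (m+2) w s ∩ {a | a 0 = 0} ∩ {a | a (Fin.last (m+1)) = 0}).ncard : ℤ) := by
    rcases m with _ | k
    · rw [hT0, MvPowerSeries.coeff_one, ncard_both_zero_two']
      have hzero : (Finsupp.single (0:Fin 2) w + Finsupp.single 1 s = 0) ↔ (w = 0 ∧ s = 0) := by
        constructor
        · intro h
          constructor
          · have := DFunLike.congr_fun h (0 : Fin 2)
            simpa [Finsupp.single_apply] using this
          · have := DFunLike.congr_fun h (1 : Fin 2)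
            simpa [Finsupp.single_apply] using this
        · rintro ⟨rfl, rfl⟩
          simp
      by_cases hws : w = 0 ∧ s = 0
      · rw [if_pos (hzero.mpr hws), if_pos hws]; norm_num
      · rw [if_neg (fun h => hws (hzero.mp h)), if_neg hws]; norm_num
    · rw [hT (k+1) (by omega) w s, ncard_both_zero', stackCount_eq_ncard]
  rw [hcoeffB]
  have hkey := key_count m w s
  by_cases hc : 1 ≤ w ∧ m + 2 ≤ s
  · rw [if_pos hc] at hkey ⊢
    have hz := congrArg (Nat.cast : ℕ → ℤ) hkey
    push_cast at hz
    linarith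
  · rw [if_neg hc] at hkey ⊢
    have hz := congrArg (Nat.cast : ℕ → ℤ) hkey
    push_cast at hz
    linarith
end

section
/- Define polynomials V_n = V_n(x,q) by V₀ = V₁ = 1 and V_n = 2·V_{n−1} + (x q^{n−1} − 1)·V_{n−2} for n ≥ 2. Then for every n ≥ 1 the width-and-area generating series for stacks having n (possibly empty) rows satisfies T_{0,n}(x,q) · ∏_{i=1}^{n} (1 − x q^i) = V_n(x,q); equivalently T_{0,n}(x,q) = V_n / (xq;q)_n where (xq;q)_n = (1−xq)(1−xq²)⋯(1−xq^n). -/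
namespace StmtAux

open Finset

lemma unimodal_iff {n : ℕ} (hn : 0 < n) (a : Fin n → ℕ) :
    Unimodal a ↔ ∀ i j k : Fin n, i ≤ j → j ≤ k → min (a i) (a k) ≤ a j := by
  constructor
  · rintro ⟨p, h1, h2⟩ i j k hij hjk
    rcases le_total j p with h | h
    · exact le_trans (min_le_left _ _) (h1 i j hij h)
    · exact le_trans (min_le_right _ _) (h2 j k h hjk)
  · intro h
    have : Nonempty (Fin n) := ⟨⟨0, hn⟩⟩
    obtain ⟨p, -, hp⟩ := Finset.exists_max_image (univ : Finset (Fin n)) a univ_nonempty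
    refine ⟨p, fun i j hij hjp => ?_, fun i j hpi hij => ?_⟩
    · have := h i j p hij hjp
      rcases min_cases (a i) (a p) with ⟨he, _⟩ | ⟨he, hle⟩
      · omega
      · have := hp i (mem_univ i); omega
    · have := h p i j hpi hij
      rcases min_cases (a p) (a j) with ⟨he, hle⟩ | ⟨he, _⟩
      · have := hp j (mem_univ j); omega
      · omega

def C (n w s : ℕ) : Set (Fin n → ℕ) :=
  {a | Unimodal a ∧ Finset.univ.sup a = w ∧ ∑ i, a i = s}

lemma stackCount_eq (n w s : ℕ) : stackCount n w s = (C n w s).ncard :=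
  Nat.card_coe_set_eq (C n w s) ▸ rfl

lemma C_finite (n w s : ℕ) : (C n w s).Finite := by
  apply Set.Finite.subset (Set.Finite.pi (fun _ : Fin n => Set.finite_Iic s))
  rintro a ⟨-, -, hsum⟩
  intro i _
  simp only [Set.mem_Iic]
  calc a i ≤ ∑ j, a j := Finset.single_le_sum (fun j _ => Nat.zero_le _) (mem_univ i)
  _ = s := hsum

lemma sup_univ_succ {n : ℕ} (a : Fin (n + 1) → ℕ) :
    Finset.univ.sup a = max (a 0) (Finset.univ.sup (a ∘ Fin.succ)) := by
  refine le_antisymm (Finset.sup_le fun i _ => ?_)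
    (max_le (Finset.le_sup (mem_univ 0))
      (Finset.sup_le fun j _ => Finset.le_sup (f := a) (mem_univ j.succ)))
  rcases Fin.eq_zero_or_eq_succ i with rfl | ⟨j, rfl⟩
  · exact le_max_left _ _
  · exact le_trans (Finset.le_sup (f := a ∘ Fin.succ) (mem_univ j)) (le_max_right _ _)

lemma sup_univ_castSucc {n : ℕ} (a : Fin (n + 1) → ℕ) :
    Finset.univ.sup a = max (Finset.univ.sup (a ∘ Fin.castSucc)) (a (Fin.last n)) := by
  refine le_antisymm (Finset.sup_le fun i _ => ?_)
    (max_le (Finset.sup_le fun j _ => Finset.le_sup (f := a) (mem_univ j.castSucc))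
      (Finset.le_sup (mem_univ (Fin.last n))))
  rcases Fin.eq_castSucc_or_eq_last i with ⟨j, rfl⟩ | rfl
  · exact le_trans (Finset.le_sup (f := a ∘ Fin.castSucc) (mem_univ j)) (le_max_left _ _)
  · exact le_max_right _ _


lemma mem_C {n w s : ℕ} (a : Fin n → ℕ) :
    a ∈ C n w s ↔ Unimodal a ∧ Finset.univ.sup a = w ∧ ∑ i, a i = s := Iff.rfl

section
variable {n w s : ℕ}

lemma zeroHead (hn : 0 < n) (w s : ℕ) :
    {a : Fin (n+1) → ℕ | a ∈ C (n+1) w s ∧ a 0 = 0} = Fin.cons 0 '' C n w s := by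
  ext a
  simp only [Set.mem_setOf_eq, Set.mem_image, mem_C]
  constructor
  · rintro ⟨⟨hu, hw, hs⟩, h0⟩
    refine ⟨a ∘ Fin.succ, ⟨?_, ?_, ?_⟩, ?_⟩
    · rw [unimodal_iff hn]
      intro i j k hij hjk
      exact (unimodal_iff (Nat.succ_pos n) a).1 hu i.succ j.succ k.succ
        (Fin.succ_le_succ_iff.2 hij) (Fin.succ_le_succ_iff.2 hjk)
    · rw [sup_univ_succ, h0] at hw; simpa using hw
    · rw [Fin.sum_univ_succ, h0, zero_add] at hs; exact hs
    · funext i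
      rcases Fin.eq_zero_or_eq_succ i with rfl | ⟨j, rfl⟩
      · simp [h0]
      · simp
  · rintro ⟨b, ⟨hu, hw, hs⟩, rfl⟩
    have htail : Fin.cons (0:ℕ) b ∘ Fin.succ = b := by funext i; simp
    refine ⟨⟨?_, ?_, ?_⟩, by simp⟩
    · rw [unimodal_iff (Nat.succ_pos n)]
      intro i j k hij hjk
      rcases Fin.eq_zero_or_eq_succ j with rfl | ⟨j', rfl⟩
      · have : i = 0 := le_antisymm hij (Fin.zero_le i)
        subst this; simp
      · rcases Fin.eq_zero_or_eq_succ i with rfl | ⟨i', rfl⟩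
        · simp
        · rcases Fin.eq_zero_or_eq_succ k with rfl | ⟨k', rfl⟩
          · exact absurd (le_trans hij hjk) (by simp [Fin.le_def])
          · simpa using (unimodal_iff hn b).1 hu i' j' k'
              (Fin.succ_le_succ_iff.1 hij) (Fin.succ_le_succ_iff.1 hjk)
    · rw [sup_univ_succ, htail]; simpa using hw
    · simp [Fin.sum_univ_succ, hs]

lemma zeroLast (hn : 0 < n) (w s : ℕ) :
    {a : Fin (n+1) → ℕ | a ∈ C (n+1) w s ∧ a (Fin.last n) = 0}
      = (fun b => Fin.snoc b 0) '' C n w s := by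
  ext a
  simp only [Set.mem_setOf_eq, Set.mem_image, mem_C]
  constructor
  · rintro ⟨⟨hu, hw, hs⟩, h0⟩
    refine ⟨a ∘ Fin.castSucc, ⟨?_, ?_, ?_⟩, ?_⟩
    · rw [unimodal_iff hn]
      intro i j k hij hjk
      exact (unimodal_iff (Nat.succ_pos n) a).1 hu i.castSucc j.castSucc k.castSucc
        (Fin.castSucc_le_castSucc_iff.2 hij) (Fin.castSucc_le_castSucc_iff.2 hjk)
    · rw [sup_univ_castSucc, h0] at hw; simpa using hw
    · rw [Fin.sum_univ_castSucc, h0, add_zero] at hs; exact hs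
    · funext i
      rcases Fin.eq_castSucc_or_eq_last i with ⟨j, rfl⟩ | rfl
      · simp
      · simp [h0]
  · rintro ⟨b, ⟨hu, hw, hs⟩, rfl⟩
    have htail : (Fin.snoc b (0:ℕ)) ∘ Fin.castSucc = b := by funext i; simp
    refine ⟨⟨?_, ?_, ?_⟩, by simp⟩
    · rw [unimodal_iff (Nat.succ_pos n)]
      intro i j k hij hjk
      rcases Fin.eq_castSucc_or_eq_last j with ⟨j', rfl⟩ | rfl
      · rcases Fin.eq_castSucc_or_eq_last k with ⟨k', rfl⟩ | rfl
        · rcases Fin.eq_castSucc_or_eq_last i with ⟨i', rfl⟩ | rfl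
          · simpa using (unimodal_iff hn b).1 hu i' j' k'
              (Fin.castSucc_le_castSucc_iff.1 hij) (Fin.castSucc_le_castSucc_iff.1 hjk)
          · exact absurd (le_trans hij hjk) (by simp [Fin.le_def])
        · simp
      · have : k = Fin.last n := le_antisymm (Fin.le_last k) hjk
        subst this; simp
    · rw [sup_univ_castSucc, htail]; simpa using hw
    · simp [Fin.sum_univ_castSucc, hs]

-- all entries positive if both ends positive
lemma all_pos {a : Fin (n+1) → ℕ} (hu : Unimodal a) (h0 : a 0 ≠ 0)
    (hl : a (Fin.last n) ≠ 0) (i : Fin (n+1)) : 1 ≤ a i := by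
  have := (unimodal_iff (Nat.succ_pos n) a).1 hu 0 i (Fin.last n) (Fin.zero_le i) (Fin.le_last i)
  omega

lemma sub_max (x y : ℕ) : max x y - 1 = max (x - 1) (y - 1) := by
  rcases le_total x y with h | h
  · rw [max_eq_right h, max_eq_right (Nat.sub_le_sub_right h 1)]
  · rw [max_eq_left h, max_eq_left (Nat.sub_le_sub_right h 1)]

lemma pos_eq (n w s : ℕ) :
    {a : Fin (n+1) → ℕ | a ∈ C (n+1) (w+1) (s + (n+1)) ∧ a 0 ≠ 0 ∧ a (Fin.last n) ≠ 0}
      = (fun b i => b i + 1) '' C (n+1) w s := by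
  ext a
  simp only [Set.mem_setOf_eq, Set.mem_image, mem_C]
  constructor
  · rintro ⟨⟨hu, hw, hs⟩, h0, hl⟩
    have hpos := all_pos hu h0 hl
    refine ⟨fun i => a i - 1, ⟨?_, ?_, ?_⟩, ?_⟩
    · rw [unimodal_iff (Nat.succ_pos n)]
      intro i j k hij hjk
      have := (unimodal_iff (Nat.succ_pos n) a).1 hu i j k hij hjk
      have := hpos i; have := hpos j; have := hpos k
      omega
    · have : Finset.univ.sup (fun i => a i - 1) = Finset.univ.sup a - 1 :=
        (Finset.comp_sup_eq_sup_comp (· - 1) (fun x y => sub_max x y) rfl).symm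
      rw [this, hw]; simp
    · show (∑ i, (a i - 1)) = s
      have h1 : ∑ i, a i = ∑ i, ((a i - 1) + 1) := by
        apply Finset.sum_congr rfl; intro i _; have := hpos i; omega
      rw [Finset.sum_add_distrib, Finset.sum_const, card_univ, Fintype.card_fin,
        smul_eq_mul, mul_one] at h1
      omega
    · funext i; have := hpos i; simp; omega
  · rintro ⟨b, ⟨hu, hw, hs⟩, rfl⟩
    have hsup : Finset.univ.sup (fun i => b i + 1) = Finset.univ.sup b + 1 := by
      refine le_antisymm (Finset.sup_le fun i _ =>
        Nat.add_le_add_right (Finset.le_sup (mem_univ i)) 1) ?_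
      obtain ⟨i, -, hi⟩ := Finset.exists_mem_eq_sup (univ : Finset (Fin (n+1)))
        univ_nonempty b
      rw [hi]
      exact Finset.le_sup (f := fun i => b i + 1) (mem_univ i)
    refine ⟨⟨?_, ?_, ?_⟩, by simp, by simp⟩
    · rw [unimodal_iff (Nat.succ_pos n)]
      intro i j k hij hjk
      have := (unimodal_iff (Nat.succ_pos n) b).1 hu i j k hij hjk
      omega
    · rw [hsup, hw]
    · rw [Finset.sum_add_distrib, Finset.sum_const, card_univ, Fintype.card_fin,
        smul_eq_mul, mul_one, hs]

lemma pos_empty (n w s : ℕ) (h : w = 0 ∨ s < n + 1) :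
    {a : Fin (n+1) → ℕ | a ∈ C (n+1) w s ∧ a 0 ≠ 0 ∧ a (Fin.last n) ≠ 0} = ∅ := by
  ext a
  simp only [Set.mem_setOf_eq, Set.mem_empty_iff_false, iff_false, not_and, mem_C]
  rintro ⟨hu, hw, hs⟩ h0 hl
  have hpos := all_pos hu h0 hl
  rcases h with rfl | hlt
  · have : a 0 ≤ Finset.univ.sup a := Finset.le_sup (mem_univ 0)
    omega
  · have : ∑ i : Fin (n+1), 1 ≤ ∑ i, a i := Finset.sum_le_sum fun i _ => hpos i
    rw [Finset.sum_const, card_univ, Fintype.card_fin, smul_eq_mul, mul_one] at this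
    omega

end


lemma snoc_inj {n : ℕ} :
    Function.Injective (fun (b : Fin n → ℕ) => (Fin.snoc b 0 : Fin (n+1) → ℕ)) := by
  intro b b' h
  funext i
  have := congrFun h i.castSucc
  simpa [Fin.snoc_castSucc] using this

lemma cons_inj {n : ℕ} :
    Function.Injective (fun (b : Fin n → ℕ) => (Fin.cons 0 b : Fin (n+1) → ℕ)) := by
  intro b b' h
  funext i
  have := congrFun h i.succ
  simpa using this

lemma add_one_inj {n : ℕ} : Function.Injective (fun (b : Fin n → ℕ) i => b i + 1) := by
  intro b b' h
  funext i
  have := congrFun h i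
  simpa using this

lemma unimodal_one (a : Fin 1 → ℕ) : Unimodal a :=
  ⟨0, fun i j _ _ => le_of_eq (congrArg a (Subsingleton.elim i j)),
    fun i j _ _ => le_of_eq (congrArg a (Subsingleton.elim j i))⟩

lemma mem_C_one {w s : ℕ} (a : Fin 1 → ℕ) : a ∈ C 1 w s ↔ a 0 = w ∧ a 0 = s := by
  rw [mem_C]
  constructor
  · rintro ⟨-, hw, hs⟩
    rw [Fin.sum_univ_one] at hs
    rw [Finset.univ_unique, Finset.sup_singleton] at hw
    exact ⟨hw, hs⟩
  · rintro ⟨hw, hs⟩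
    exact ⟨unimodal_one a, by rw [Finset.univ_unique, Finset.sup_singleton]; exact hw,
      by rw [Fin.sum_univ_one]; exact hs⟩

lemma stackCount_one (w s : ℕ) : stackCount 1 w s = if w = s then 1 else 0 := by
  rw [stackCount_eq]
  split
  · next h =>
    subst h
    have : C 1 w w = {fun _ => w} := by
      ext a
      rw [mem_C_one, Set.mem_singleton_iff]
      constructor
      · rintro ⟨h, -⟩; funext i; rw [Subsingleton.elim i 0, h]
      · rintro rfl; exact ⟨rfl, rfl⟩
    rw [this, Set.ncard_singleton]
  · next h =>
    have : C 1 w s = ∅ := by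
      ext a
      rw [mem_C_one]
      simp only [Set.mem_empty_iff_false, iff_false]
      rintro ⟨h1, h2⟩; exact h (h1 ▸ h2 ▸ rfl)
    rw [this, Set.ncard_empty]

lemma zlast_card (n w s : ℕ) :
    {b : Fin (n+1) → ℕ | b ∈ C (n+1) w s ∧ b (Fin.last n) = 0}.ncard
      = if n = 0 then (if w = 0 ∧ s = 0 then 1 else 0) else stackCount n w s := by
  rcases n with _ | m
  · rw [if_pos rfl]
    show {b : Fin 1 → ℕ | b ∈ C 1 w s ∧ b (Fin.last 0) = 0}.ncard = _
    have hlast : Fin.last 0 = (0 : Fin 1) := rfl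
    by_cases h : w = 0 ∧ s = 0
    · obtain ⟨rfl, rfl⟩ := h
      rw [if_pos ⟨rfl, rfl⟩]
      have he : {b : Fin 1 → ℕ | b ∈ C 1 0 0 ∧ b (Fin.last 0) = 0} = {fun _ => 0} := by
        ext b
        simp only [Set.mem_setOf_eq, mem_C_one, hlast, Set.mem_singleton_iff]
        constructor
        · rintro ⟨⟨h1, -⟩, -⟩; funext i; rw [Subsingleton.elim i 0, h1]
        · rintro rfl; exact ⟨⟨rfl, rfl⟩, rfl⟩
      rw [he, Set.ncard_singleton]
    · rw [if_neg h]
      have he : {b : Fin 1 → ℕ | b ∈ C 1 w s ∧ b (Fin.last 0) = 0} = ∅ := by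
        ext b
        simp only [Set.mem_setOf_eq, mem_C_one, hlast, Set.mem_empty_iff_false, iff_false]
        rintro ⟨⟨h1, h2⟩, h3⟩
        exact h ⟨by omega, by omega⟩
      rw [he, Set.ncard_empty]
  · rw [if_neg (by omega : ¬ (m + 1 = 0)), zeroLast (Nat.succ_pos m) w s,
      Set.ncard_image_of_injective _ snoc_inj, stackCount_eq]

lemma key_count (n w s : ℕ) :
    stackCount (n+2) w s + (if n = 0 then (if w = 0 ∧ s = 0 then 1 else 0) else stackCount n w s)
      = 2 * stackCount (n+1) w s
        + (if 1 ≤ w ∧ n + 2 ≤ s then stackCount (n+2) (w-1) (s-(n+2)) else 0) := by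
  set A := {a : Fin (n+2) → ℕ | a ∈ C (n+2) w s ∧ a 0 = 0} with hA_def
  set B := {a : Fin (n+2) → ℕ | a ∈ C (n+2) w s ∧ a (Fin.last (n+1)) = 0} with hB_def
  set P := {a : Fin (n+2) → ℕ | a ∈ C (n+2) w s ∧ a 0 ≠ 0 ∧ a (Fin.last (n+1)) ≠ 0} with hP_def
  have hfinU := C_finite (n+2) w s
  have hfinA : A.Finite := hfinU.subset (fun a ha => ha.1)
  have hfinB : B.Finite := hfinU.subset (fun a ha => ha.1)
  have hfinP : P.Finite := hfinU.subset (fun a ha => ha.1)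
  have hA : A = Fin.cons 0 '' C (n+1) w s := zeroHead (Nat.succ_pos n) w s
  have hB : B = (fun b => Fin.snoc b 0) '' C (n+1) w s := zeroLast (Nat.succ_pos n) w s
  have hAcard : A.ncard = stackCount (n+1) w s := by
    rw [hA, Set.ncard_image_of_injective _ (cons_inj), stackCount_eq]
  have hBcard : B.ncard = stackCount (n+1) w s := by
    rw [hB, Set.ncard_image_of_injective _ snoc_inj, stackCount_eq]
  have hAB : A ∩ B
      = Fin.cons 0 '' {b : Fin (n+1) → ℕ | b ∈ C (n+1) w s ∧ b (Fin.last n) = 0} := by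
    ext a
    constructor
    · rintro ⟨ha, hb⟩
      rw [hA] at ha
      obtain ⟨b, hbC, rfl⟩ := ha
      refine ⟨b, ⟨hbC, ?_⟩, rfl⟩
      rw [hB_def] at hb
      have := hb.2
      rwa [← Fin.succ_last, Fin.cons_succ] at this
    · rintro ⟨b, ⟨hbC, hb0⟩, rfl⟩
      have hmemA : Fin.cons 0 b ∈ A := by rw [hA]; exact ⟨b, hbC, rfl⟩
      have hmemC : Fin.cons 0 b ∈ C (n+2) w s := by
        rw [hA_def] at hmemA; exact hmemA.1
      refine ⟨hmemA, ?_⟩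
      rw [hB_def]
      exact ⟨hmemC, by rw [← Fin.succ_last, Fin.cons_succ]; exact hb0⟩
  have hABcard : (A ∩ B).ncard
      = (if n = 0 then (if w = 0 ∧ s = 0 then 1 else 0) else stackCount n w s) := by
    rw [hAB, Set.ncard_image_of_injective _ (cons_inj), zlast_card]
  have hUnion : C (n+2) w s = (A ∪ B) ∪ P := by
    ext a
    simp only [hA_def, hB_def, hP_def, Set.mem_union, Set.mem_setOf_eq]
    by_cases h0 : a 0 = 0 <;> by_cases hl : a (Fin.last (n+1)) = 0 <;> tauto
  have hdisj : Disjoint (A ∪ B) P := by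
    rw [Set.disjoint_left]
    rintro a ha hp
    rw [hP_def] at hp
    rcases ha with ha | ha
    · rw [hA_def] at ha; exact hp.2.1 ha.2
    · rw [hB_def] at ha; exact hp.2.2 ha.2
  have hcard1 : stackCount (n+2) w s = (A ∪ B).ncard + P.ncard := by
    rw [stackCount_eq, hUnion, Set.ncard_union_eq hdisj (hfinA.union hfinB) hfinP]
  have hcard2 : (A ∪ B).ncard + (A ∩ B).ncard = A.ncard + B.ncard :=
    Set.ncard_union_add_ncard_inter A B hfinA hfinB
  have hPcard : P.ncard
      = (if 1 ≤ w ∧ n + 2 ≤ s then stackCount (n+2) (w-1) (s-(n+2)) else 0) := by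
    split
    · next h =>
      have himg := pos_eq (n+1) (w-1) (s-(n+2))
      rw [show w - 1 + 1 = w by omega, show s - (n+2) + (n+1+1) = s by omega] at himg
      rw [hP_def, himg, Set.ncard_image_of_injective _ add_one_inj, stackCount_eq]
    · next h =>
      rw [hP_def, pos_empty (n+1) w s (by omega), Set.ncard_empty]
  rw [← hABcard, ← hPcard]
  omega

open MvPowerSeries Finsupp

abbrev M := MvPowerSeries (Fin 2) ℤ

lemma fin2_eq (d : Fin 2 →₀ ℕ) :
    d = Finsupp.single 0 (d 0) + Finsupp.single 1 (d 1) := by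
  ext i
  fin_cases i <;> simp

lemma single_add_single_eq_zero (w s : ℕ) :
    (Finsupp.single (0 : Fin 2) w + Finsupp.single 1 s = 0) ↔ (w = 0 ∧ s = 0) := by
  constructor
  · intro h
    constructor
    · have := DFunLike.congr_fun h (0 : Fin 2); simpa using this
    · have := DFunLike.congr_fun h (1 : Fin 2); simpa using this
  · rintro ⟨rfl, rfl⟩; simp

lemma mono_eq (k : ℕ) : (X (0 : Fin 2) * X 1 ^ k : M)
    = monomial (Finsupp.single 0 1 + Finsupp.single 1 k) 1 := by
  rw [X_pow_eq, X, monomial_mul_monomial, one_mul]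

lemma coeff_mul_mono (f : M) (k w s : ℕ) :
    (coeff (Finsupp.single (0 : Fin 2) w + Finsupp.single 1 s)) (f * (X 0 * X 1 ^ k))
      = if 1 ≤ w ∧ k ≤ s then
          (coeff (Finsupp.single (0 : Fin 2) (w - 1) + Finsupp.single 1 (s - k))) f
        else 0 := by
  rw [mono_eq, coeff_mul_monomial]
  have hle : (Finsupp.single (0 : Fin 2) 1 + Finsupp.single 1 k
      ≤ Finsupp.single (0 : Fin 2) w + Finsupp.single 1 s) ↔ (1 ≤ w ∧ k ≤ s) := by
    rw [Finsupp.le_def]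
    constructor
    · intro h
      exact ⟨by have := h 0; simpa using this, by have := h 1; simpa using this⟩
    · rintro ⟨h1, h2⟩ i
      fin_cases i <;> simpa
  split
  · next h =>
    rw [if_pos (hle.1 h), mul_one]
    have hsub : (Finsupp.single (0 : Fin 2) w + Finsupp.single 1 s)
        - (Finsupp.single (0 : Fin 2) 1 + Finsupp.single 1 k)
        = Finsupp.single (0 : Fin 2) (w - 1) + Finsupp.single 1 (s - k) := by
      ext i
      fin_cases i <;> simp [Finsupp.tsub_apply]
    rw [hsub]
  · next h =>
    rw [if_neg (fun hc => h (hle.2 hc))]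

lemma key_ps (T : ℕ → M)
    (hT : ∀ n : ℕ, 1 ≤ n → ∀ w s : ℕ,
      (coeff (Finsupp.single (0 : Fin 2) w + Finsupp.single 1 s)) (T n) = (stackCount n w s : ℤ))
    (hT0 : T 0 = 1) (n : ℕ) :
    T (n+2) * (1 - X 0 * X 1 ^ (n+2)) = 2 * T (n+1) - T n := by
  have e1 : T (n+2) * (1 - X 0 * X 1 ^ (n+2)) = T (n+2) - T (n+2) * (X 0 * X 1 ^ (n+2)) := by
    ring
  have e2 : 2 * T (n+1) - T n = T (n+1) + T (n+1) - T n := by ring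
  rw [e1, e2]
  ext d
  obtain ⟨w, s, rfl⟩ : ∃ w s, d = Finsupp.single 0 w + Finsupp.single 1 s :=
    ⟨d 0, d 1, fin2_eq d⟩
  rw [map_sub, map_sub, map_add, coeff_mul_mono, hT (n+2) (by omega) w s,
    hT (n+1) (by omega) w s, hT (n+2) (by omega) (w-1) (s-(n+2))]
  have key := key_count n w s
  rcases n with _ | m
  · rw [hT0, MvPowerSeries.coeff_one, if_congr (single_add_single_eq_zero w s) rfl rfl]
    rw [if_pos rfl] at key
    simp only [zero_add] at key ⊢
    split_ifs at key ⊢ <;> push_cast <;> omega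
  · rw [hT (m+1) (by omega) w s]
    rw [if_neg (by omega : ¬(m+1=0))] at key
    split_ifs at key ⊢ <;> push_cast <;> omega

lemma base_ps (T : ℕ → M)
    (hT : ∀ n : ℕ, 1 ≤ n → ∀ w s : ℕ,
      (coeff (Finsupp.single (0 : Fin 2) w + Finsupp.single 1 s)) (T n) = (stackCount n w s : ℤ)) :
    T 1 * (1 - X 0 * X 1 ^ 1) = 1 := by
  have e1 : T 1 * (1 - X 0 * X 1 ^ 1) = T 1 - T 1 * (X 0 * X 1 ^ 1) := by ring
  rw [e1]
  ext d
  obtain ⟨w, s, rfl⟩ : ∃ w s, d = Finsupp.single 0 w + Finsupp.single 1 s :=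
    ⟨d 0, d 1, fin2_eq d⟩
  rw [map_sub, coeff_mul_mono, hT 1 (by omega) w s, hT 1 (by omega) (w-1) (s-1),
    MvPowerSeries.coeff_one, if_congr (single_add_single_eq_zero w s) rfl rfl,
    stackCount_one, stackCount_one]
  split_ifs <;> push_cast <;> omega

end StmtAux

open StmtAux MvPowerSeries

/-- Defining `V₀ = V₁ = 1` and `V_n = 2·V_{n−1} + (x q^{n−1} − 1)·V_{n−2}` for `n ≥ 2`,
the width-and-area generating series for stacks having `n` (possibly empty) rows
satisfies `T_{0,n}·∏_{i=1}^{n}(1 − x qⁱ) = V_n`.  Here `X 0` plays the role of `x` and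
`X 1` the role of `q`. -/
theorem stmt1
    (T V : ℕ → MvPowerSeries (Fin 2) ℤ)
    (hT0 : T 0 = 1)
    (hT : ∀ n : ℕ, 1 ≤ n → ∀ w s : ℕ,
      (MvPowerSeries.coeff (Finsupp.single (0 : Fin 2) w + Finsupp.single 1 s)) (T n)
        = (stackCount n w s : ℤ))
    (hV0 : V 0 = 1) (hV1 : V 1 = 1)
    (hVrec : ∀ n : ℕ, 2 ≤ n →
      V n = 2 * V (n - 1)
        + (MvPowerSeries.X (0 : Fin 2) * MvPowerSeries.X 1 ^ (n - 1) - 1) * V (n - 2)) :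
    ∀ n : ℕ, 1 ≤ n →
      T n * ∏ i ∈ Finset.Icc 1 n,
          (1 - MvPowerSeries.X (0 : Fin 2) * MvPowerSeries.X 1 ^ i) = V n := by
  have main : ∀ n : ℕ,
      T n * ∏ i ∈ Finset.Icc 1 n, (1 - X (0 : Fin 2) * X 1 ^ i) = V n := by
    intro n
    induction n using Nat.strong_induction_on with
    | _ n ih =>
      match n, ih with
      | 0, _ =>
        rw [hT0, hV0, Finset.Icc_eq_empty (by omega : ¬(1:ℕ) ≤ 0), Finset.prod_empty, one_mul]
      | 1, _ =>
        rw [hV1, Finset.Icc_self, Finset.prod_singleton]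
        exact base_ps T hT
      | (m+2), ih =>
        rw [hVrec (m+2) (by omega)]
        have h1 : m + 2 - 1 = m + 1 := rfl
        have h2 : m + 2 - 2 = m := rfl
        rw [h1, h2, ← ih (m+1) (by omega), ← ih m (by omega),
          Finset.prod_Icc_succ_top (by omega : 1 ≤ m + 2),
          Finset.prod_Icc_succ_top (by omega : 1 ≤ m + 1)]
        have hk := key_ps T hT hT0 m
        set Q := ∏ i ∈ Finset.Icc 1 m, (1 - X (0:Fin 2) * X 1 ^ i : MvPowerSeries (Fin 2) ℤ)
          with hQ
        calc T (m+2) * (Q * (1 - X 0 * X 1 ^ (m+1)) * (1 - X 0 * X 1 ^ (m+2)))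
            = (T (m+2) * (1 - X 0 * X 1 ^ (m+2))) * (Q * (1 - X 0 * X 1 ^ (m+1))) := by ring
          _ = (2 * T (m+1) - T m) * (Q * (1 - X 0 * X 1 ^ (m+1))) := by rw [hk]
          _ = 2 * (T (m+1) * (Q * (1 - X 0 * X 1 ^ (m+1))))
              + (X 0 * X 1 ^ (m+1) - 1) * (T m * Q) := by ring
  exact fun n _ => main n
end

section
/- Let V_n = V_n(x,q) be defined by V₀ = V₁ = 1 and V_n = 2·V_{n−1} + (x q^{n−1} − 1)·V_{n−2} for n ≥ 2. Then for every n ≥ 0, V_n = 1 + Σ_{1 ≤ k ≤ n/2} ( x^k q^{k²} · Σ_{m=k}^{n−k} [m choose k]_q · [n−m−1 choose k−1]_q ). -/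
/-!
Write `Vₙ = ∑ₖ cₖ(n) xᵏ` and `Cₖ(t) = ∑ₙ cₖ(n) tⁿ`. Since `V₀ = V₁ = 1` and the recurrence
determine `V`, it suffices that `C₀ = 1 / (1 - t)` and `(1 - t)² Cₖ₊₁(t) = q t² Cₖ(qt)`.
The claimed formula says `Cₖ = q^(k²) t Bₖ Bₖ₋₁` for `k ≥ 1`, where `Bₖ(t) = ∑ₘ [m, k]_q tᵐ`,
and the q-Pascal rule reads `qᵏ (1 - t) Bₖ₊₁(t) = t Bₖ(qt)`: one factor `1 - t` goes to each
Gaussian factor of `Cₖ₊₁`.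
-/

/-- The q-Pochhammer symbol `(q;q)_n` in the two-variable polynomial ring, where the
variable `X 1` plays the role of `q`. -/
noncomputable def qpochM (n : ℕ) : MvPolynomial (Fin 2) ℤ :=
  ∏ i ∈ Finset.range n, (1 - MvPolynomial.X 1 ^ (i + 1))

open Finset PowerSeries

variable {R : Type*} [CommRing R]

def qBinom (q : R) : ℕ → ℕ → R
  | _, 0 => 1
  | 0, _ + 1 => 0
  | n + 1, k + 1 => qBinom q n (k + 1) + q ^ (n - k) * qBinom q n k

def qPochhammer (q : R) (n : ℕ) : R := ∏ i ∈ range n, (1 - q ^ (i + 1))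

namespace qBinom

variable (q : R)

@[simp] theorem zero_right (n : ℕ) : qBinom q n 0 = 1 := by cases n <;> rfl

theorem succ_succ (n k : ℕ) :
    qBinom q (n + 1) (k + 1) = qBinom q n (k + 1) + q ^ (n - k) * qBinom q n k := rfl

theorem eq_zero_of_lt {n k : ℕ} (h : n < k) : qBinom q n k = 0 := by
  induction n generalizing k with
  | zero => obtain ⟨k, rfl⟩ := Nat.exists_eq_succ_of_ne_zero (by omega : k ≠ 0); rfl
  | succ n ih =>
    obtain ⟨k, rfl⟩ := Nat.exists_eq_succ_of_ne_zero (by omega : k ≠ 0)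
    rw [succ_succ, ih (by omega), ih (by omega), mul_zero, add_zero]

@[simp] theorem self (n : ℕ) : qBinom q n n = 1 := by
  induction n with
  | zero => rfl
  | succ n ih =>
    rw [succ_succ, eq_zero_of_lt q n.lt_succ_self, ih, Nat.sub_self, pow_zero, one_mul, zero_add]

theorem mul_qPochhammer_mul_qPochhammer {n k : ℕ} (h : k ≤ n) :
    qBinom q n k * qPochhammer q k * qPochhammer q (n - k) = qPochhammer q n := by
  induction n generalizing k with
  | zero =>
    obtain rfl : k = 0 := by omega
    simp [qPochhammer]
  | succ n ih =>
    rcases k with _ | k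
    · simp [qPochhammer]
    rcases Nat.lt_or_ge n (k + 1) with hlt | hk
    · obtain rfl : k = n := by omega
      simp [qPochhammer]
    have hsucc (m : ℕ) : qPochhammer q (m + 1) = qPochhammer q m * (1 - q ^ (m + 1)) :=
      prod_range_succ _ m
    have hnk : qPochhammer q (n - k) = qPochhammer q (n - (k + 1)) * (1 - q ^ (n - k)) := by
      rw [show n - k = n - (k + 1) + 1 by omega, hsucc]
    have hpow : q ^ (n - k) * q ^ (k + 1) = q ^ (n + 1) := by rw [← pow_add]; congr 1; omega
    rw [succ_succ, Nat.add_sub_add_right]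
    linear_combination (1 - q ^ (n - k)) * ih hk
      + q ^ (n - k) * (1 - q ^ (k + 1)) * ih (k.le_succ.trans hk)
      + qBinom q n (k + 1) * qPochhammer q (k + 1) * hnk
      + q ^ (n - k) * qBinom q n k * qPochhammer q (n - k) * hsucc k
      - qPochhammer q n * hpow - hsucc n

end qBinom

theorem PowerSeries.coeff_succ_one_sub_X_mul (f : R⟦X⟧) (n : ℕ) :
    coeff (n + 1) ((1 - X) * f) = coeff (n + 1) f - coeff n f := by
  rw [sub_mul, one_mul, map_sub, coeff_succ_X_mul]

theorem PowerSeries.coeff_add_two_one_sub_X_sq_mul (f : R⟦X⟧) (n : ℕ) :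
    coeff (n + 2) ((1 - X) ^ 2 * f) = coeff (n + 2) f - 2 * coeff (n + 1) f + coeff n f := by
  rw [sq, mul_assoc, coeff_succ_one_sub_X_mul, coeff_succ_one_sub_X_mul,
    coeff_succ_one_sub_X_mul]
  ring

theorem PowerSeries.rescale_C (a b : R) : rescale a (C b) = C b := by
  ext (_ | n) <;> simp [coeff_C]

/-- `∑ₘ [m, k]_q tᵐ`, which equals `tᵏ / ((1 - t)(1 - qt)⋯(1 - qᵏt))`. -/
noncomputable def qBinomSeries (q : R) (k : ℕ) : R⟦X⟧ := mk fun m => qBinom q m k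

namespace qBinomSeries

variable (q : R)

theorem one_sub_X_mul_zero : (1 - X) * qBinomSeries q 0 = 1 := by
  ext (_ | n)
  · simp [qBinomSeries]
  · simp [coeff_succ_one_sub_X_mul, qBinomSeries]

theorem C_pow_mul_one_sub_X_mul_succ (k : ℕ) :
    C q ^ k * ((1 - X) * qBinomSeries q (k + 1)) = X * rescale q (qBinomSeries q k) := by
  ext (_ | n)
  · simp [qBinomSeries, ← map_pow, qBinom.eq_zero_of_lt]
  · rw [← map_pow, coeff_C_mul, coeff_succ_one_sub_X_mul, coeff_succ_X_mul, coeff_rescale]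
    simp only [qBinomSeries, coeff_mk, qBinom.succ_succ, add_sub_cancel_left]
    rcases Nat.lt_or_ge n k with h | h
    · simp [qBinom.eq_zero_of_lt q h]
    · rw [← mul_assoc, ← pow_add, Nat.add_sub_cancel' h]

end qBinomSeries

/-- The generating function `∑ₙ cₖ(n) tⁿ` of the coefficient `cₖ(n)` of `xᵏ` in `Vₙ`. -/
noncomputable def vCoeffSeries (q : R) : ℕ → R⟦X⟧
  | 0 => qBinomSeries q 0
  | k + 1 => C (q ^ (k + 1) ^ 2) * X * (qBinomSeries q (k + 1) * qBinomSeries q k)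

namespace vCoeffSeries

variable (q : R)

theorem one_sub_X_sq_mul_succ (k : ℕ) :
    (1 - X) ^ 2 * vCoeffSeries q (k + 1) = C q * X ^ 2 * rescale q (vCoeffSeries q k) := by
  have h := qBinomSeries.C_pow_mul_one_sub_X_mul_succ q
  rcases k with _ | j
  · have h0 := h 0
    simp only [pow_zero, one_mul, zero_add] at h0
    simp only [vCoeffSeries, zero_add, one_pow, pow_one]
    linear_combination (C q * X * ((1 - X) * qBinomSeries q 0)) * h0
      + C q * X * (X * rescale q (qBinomSeries q 0)) * qBinomSeries.one_sub_X_mul_zero q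
  · simp only [vCoeffSeries, map_mul, map_pow, rescale_X, PowerSeries.rescale_C]
    linear_combination C q ^ ((j + 1) ^ 2 + 2) * X *
      ((C q ^ j * ((1 - X) * qBinomSeries q (j + 1))) * h (j + 1)
        + X * rescale q (qBinomSeries q (j + 1)) * h j)

@[simp] theorem coeff_zero (n : ℕ) : coeff n (vCoeffSeries q 0) = 1 := by
  simp [vCoeffSeries, qBinomSeries]

theorem coeff_succ (n k : ℕ) :
    coeff n (vCoeffSeries q (k + 1)) = q ^ (k + 1) ^ 2 *
      ∑ m ∈ Icc (k + 1) (n - (k + 1)), qBinom q m (k + 1) * qBinom q (n - m - 1) k := by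
  rw [vCoeffSeries, mul_assoc, coeff_C_mul]
  congr 1
  rcases n with _ | n
  · simp
  rw [coeff_succ_X_mul, coeff_mul, Nat.sum_antidiagonal_eq_sum_range_succ
    (fun i j => coeff i (qBinomSeries q (k + 1)) * coeff j (qBinomSeries q k))]
  simp only [qBinomSeries, coeff_mk]
  symm
  refine sum_subset (fun m hm => ?_) (fun m hm hm' => ?_) |>.trans (sum_congr rfl fun m _ => ?_)
  · simp only [mem_Icc, mem_range] at hm ⊢
    omega
  · simp only [mem_Icc, mem_range, not_and_or, not_le] at hm hm'
    rcases hm' with h | h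
    · rw [qBinom.eq_zero_of_lt q h, zero_mul]
    · rw [qBinom.eq_zero_of_lt q (by omega : n + 1 - m - 1 < k), mul_zero]
  · rw [Nat.sub_right_comm, Nat.add_sub_cancel_right]

theorem coeff_eq_zero_of_lt {n k : ℕ} (h : n < 2 * k) : coeff n (vCoeffSeries q k) = 0 := by
  obtain ⟨k, rfl⟩ := Nat.exists_eq_succ_of_ne_zero (by omega : k ≠ 0)
  rw [coeff_succ, Icc_eq_empty (by omega), sum_empty, mul_zero]

end vCoeffSeries

/-- `Vₙ(x, q) = ∑ₖ cₖ(n) xᵏ`; the range suffices because `cₖ(n) = 0` for `2k > n`. -/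
noncomputable def vSum (x q : R) (n : ℕ) : R :=
  ∑ k ∈ range (n / 2 + 1), x ^ k * coeff n (vCoeffSeries q k)

namespace vSum

variable (x q : R)

theorem eq_sum_range {n N : ℕ} (h : n / 2 < N) :
    vSum x q n = ∑ k ∈ range N, x ^ k * coeff n (vCoeffSeries q k) := by
  refine sum_subset (range_subset_range.2 h) fun k _ hk => ?_
  rw [vCoeffSeries.coeff_eq_zero_of_lt q (by simp only [mem_range] at hk; omega), mul_zero]

theorem eq_sum_range_add_one {n N : ℕ} (h : n / 2 < N + 1) :
    vSum x q n = ∑ k ∈ range N, x ^ (k + 1) * coeff n (vCoeffSeries q (k + 1)) + 1 := by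
  rw [eq_sum_range x q h, sum_range_succ', pow_zero, vCoeffSeries.coeff_zero, one_mul]

@[simp] theorem zero : vSum x q 0 = 1 := by simp [vSum, vCoeffSeries, qBinomSeries]

@[simp] theorem one : vSum x q 1 = 1 := by simp [vSum, vCoeffSeries, qBinomSeries]

theorem add_two (n : ℕ) :
    vSum x q (n + 2) = 2 * vSum x q (n + 1) + (x * q ^ (n + 1) - 1) * vSum x q n := by
  have hc (k : ℕ) : coeff (n + 2) (vCoeffSeries q (k + 1))
      = 2 * coeff (n + 1) (vCoeffSeries q (k + 1)) - coeff n (vCoeffSeries q (k + 1))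
        + q ^ (n + 1) * coeff n (vCoeffSeries q k) := by
    have h := congrArg (coeff (n + 2)) (vCoeffSeries.one_sub_X_sq_mul_succ q k)
    rw [coeff_add_two_one_sub_X_sq_mul, mul_assoc, coeff_C_mul, coeff_X_pow_mul',
      if_pos (by omega), Nat.add_sub_cancel, coeff_rescale] at h
    linear_combination h
  have hsum : ∑ k ∈ range (n + 2), x ^ (k + 1) * coeff (n + 2) (vCoeffSeries q (k + 1))
      = 2 * ∑ k ∈ range (n + 2), x ^ (k + 1) * coeff (n + 1) (vCoeffSeries q (k + 1))
        - ∑ k ∈ range (n + 2), x ^ (k + 1) * coeff n (vCoeffSeries q (k + 1))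
        + x * q ^ (n + 1) * ∑ k ∈ range (n + 2), x ^ k * coeff n (vCoeffSeries q k) := by
    simp only [hc, mul_sum, ← sum_sub_distrib, ← sum_add_distrib]
    exact sum_congr rfl fun k _ => by ring
  rw [eq_sum_range_add_one x q (N := n + 2) (by omega), hsum,
    eq_sum_range_add_one x q (n := n + 1) (N := n + 2) (by omega)]
  linear_combination eq_sum_range_add_one x q (n := n) (N := n + 2) (by omega)
    - x * q ^ (n + 1) * eq_sum_range x q (n := n) (N := n + 2) (by omega)

theorem eq_one_add_sum_Icc (n : ℕ) :
    vSum x q n = 1 + ∑ k ∈ Icc 1 (n / 2), x ^ k * q ^ (k ^ 2) *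
      ∑ m ∈ Icc k (n - k), qBinom q m k * qBinom q (n - m - 1) (k - 1) := by
  rw [eq_sum_range_add_one x q (N := n / 2) (by omega), add_comm,
    ← Ico_add_one_right_eq_Icc, sum_Ico_eq_sum_range, Nat.add_sub_cancel]
  refine congrArg (1 + ·) (sum_congr rfl fun k _ => ?_)
  rw [vCoeffSeries.coeff_succ, add_comm 1 k, Nat.add_sub_cancel, mul_assoc]

end vSum

theorem qpochM_eq_qPochhammer (n : ℕ) : qpochM n = qPochhammer (MvPolynomial.X 1) n := rfl

theorem qpochM_ne_zero (n : ℕ) : qpochM n ≠ 0 := fun h => by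
  simpa [qpochM] using congrArg (MvPolynomial.eval 0) h

/-- With `V₀ = V₁ = 1` and `V_n = 2·V_{n−1} + (x q^{n−1} − 1)·V_{n−2}` for `n ≥ 2`, one
has, for every `n ≥ 0`,
`V_n = 1 + Σ_{1 ≤ k ≤ n/2} x^k q^{k²} Σ_{m=k}^{n−k} [m,k]_q [n−m−1,k−1]_q`,
where `gauss n k` denotes the Gaussian polynomial `[n,k]_q`, characterized by
`[n,k]_q (q;q)_k (q;q)_{n−k} = (q;q)_n` for `k ≤ n`.  Here `X 0` plays the role of `x`
and `X 1` the role of `q`. -/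
theorem stmt2
    (V : ℕ → MvPolynomial (Fin 2) ℤ)
    (hV0 : V 0 = 1) (hV1 : V 1 = 1)
    (hVrec : ∀ n : ℕ, 2 ≤ n →
      V n = 2 * V (n - 1)
        + (MvPolynomial.X (0 : Fin 2) * MvPolynomial.X 1 ^ (n - 1) - 1) * V (n - 2))
    (gauss : ℕ → ℕ → MvPolynomial (Fin 2) ℤ)
    (hgauss : ∀ n k : ℕ, k ≤ n → gauss n k * qpochM k * qpochM (n - k) = qpochM n) :
    ∀ n : ℕ,
      V n = 1 + ∑ k ∈ Finset.Icc 1 (n / 2),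
        MvPolynomial.X (0 : Fin 2) ^ k * MvPolynomial.X 1 ^ (k ^ 2) *
          ∑ m ∈ Finset.Icc k (n - k), gauss m k * gauss (n - m - 1) (k - 1) := by
  have hgauss_eq {m k : ℕ} (h : k ≤ m) : gauss m k = qBinom (MvPolynomial.X 1) m k := by
    refine mul_right_cancel₀ (qpochM_ne_zero k) (mul_right_cancel₀ (qpochM_ne_zero (m - k)) ?_)
    rw [hgauss m k h]
    simp only [qpochM_eq_qPochhammer]
    exact (qBinom.mul_qPochhammer_mul_qPochhammer _ h).symm
  have hV (n : ℕ) : V n = vSum (MvPolynomial.X 0) (MvPolynomial.X 1) n := by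
    induction n using Nat.twoStepInduction with
    | zero => simp [hV0]
    | one => simp [hV1]
    | more n h0 h1 => rw [hVrec (n + 2) (by omega), Nat.add_sub_cancel, Nat.add_succ_sub_one,
        h0, h1, vSum.add_two]
  intro n
  rw [hV, vSum.eq_one_add_sum_Icc]
  refine congrArg (1 + ·) (sum_congr rfl fun k hk => congrArg _ (sum_congr rfl fun m hm => ?_))
  simp only [mem_Icc] at hk hm
  rw [hgauss_eq hm.1, hgauss_eq (by omega : k - 1 ≤ n - m - 1)]
end

section
/- For every m ≥ 1, the polynomials D_m satisfy the recurrence D_m(q) = D_{m−1}(q) + q^{m−1} · Σ_{h=0}^{m−2} D_h(q) (the sum being empty when m = 1), with D₀(q) = D₁(q) = 1. -/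
/-!
`D_m - D_{m-1}` counts the partitions `λ` with `λ₁ + ℓ(λ) = m`. Deleting the hook of `λ` (its
first row and first column, `m - 1` cells) leaves a partition `μ` with `μ₁ < λ₁` and
`ℓ(μ) < ℓ(λ)`. With `h = λ₁ - 1 + ℓ(μ)` this gives a bijection `λ ↦ (h, μ)` onto the pairs with
`h ≤ m - 2` and `μ₁ + ℓ(μ) ≤ h`; the inverse puts back a first row of length `h + 1 - ℓ(μ)`,
adds one to every part of `μ`, and appends `m - 2 - h` parts equal to one. Read coefficientwise,
this is the recurrence. At `m = 1` it reads `D₁ = D₀`, and `D₀ = 1` because only the empty partition has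
`λ₁ + ℓ(λ) = 0`.
-/

open Finset

namespace Multiset

theorem sup_mem_of_ne_zero {α : Type*} [LinearOrder α] [OrderBot α] {s : Multiset α}
    (hs : s ≠ 0) : s.sup ∈ s := by
  obtain ⟨y, hy, hmax⟩ := s.exists_max_image id hs
  rwa [le_antisymm (sup_le.2 hmax) (le_sup hy)]

theorem map_succ_filter_map_pred_add_replicate {u : Multiset ℕ} (hu : ∀ x ∈ u, 0 < x) :
    ((u.map (· - 1)).filter (· ≠ 0)).map (· + 1) + replicate (u.count 1) 1 = u := by
  have hfilter : u.filter ((· ≠ 0) ∘ (· - 1)) = u.filter (· ≠ 1) :=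
    filter_congr fun x hx => by have := hu x hx; simp only [Function.comp_apply]; omega
  have hmap : (u.filter (· ≠ 1)).map ((· + 1) ∘ (· - 1)) = u.filter (· ≠ 1) := by
    conv_rhs => rw [← map_id' (u.filter (· ≠ 1))]
    refine map_congr rfl fun x hx => ?_
    have := hu x (mem_of_mem_filter hx)
    have := of_mem_filter hx
    simp only [Function.comp_apply]
    omega
  rw [filter_map, map_map, hfilter, hmap, ← filter_eq']
  simpa using filter_add_not (· ≠ 1) u

/-- The parts of the partition obtained by deleting the first row and the first column of the
Ferrers diagram with parts `s`. -/
def removeHook (s : Multiset ℕ) : Multiset ℕ :=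
  ((s.erase s.sup).map (· - 1)).filter (· ≠ 0)

/-- The parts of the partition whose Ferrers diagram has first row `a`, below it the diagram
of `t` shifted one column to the right, and `k` further rows of length one. -/
def addHook (a k : ℕ) (t : Multiset ℕ) : Multiset ℕ :=
  a ::ₘ (t.map (· + 1) + replicate k 1)

theorem card_addHook (a k : ℕ) (t : Multiset ℕ) : card (addHook a k t) = card t + k + 1 := by
  simp [addHook]

theorem sum_addHook (a k : ℕ) (t : Multiset ℕ) :
    (addHook a k t).sum = a + t.sum + card t + k := by
  simp [addHook, sum_map_add]; omega

theorem pos_of_mem_addHook {a k : ℕ} {t : Multiset ℕ} (ha : 0 < a) {x : ℕ}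
    (hx : x ∈ addHook a k t) : 0 < x := by
  simp only [addHook, mem_cons, mem_add, mem_map, mem_replicate] at hx
  omega

theorem sup_addHook {a k : ℕ} {t : Multiset ℕ} (ha : t.sup < a) : (addHook a k t).sup = a := by
  refine le_antisymm (sup_le.2 fun x hx => ?_) (le_sup (mem_cons_self a _))
  simp only [addHook, mem_cons, mem_add, mem_map, mem_replicate] at hx
  rcases hx with rfl | ⟨y, hy, rfl⟩ | ⟨-, rfl⟩
  · rfl
  · exact le_sup hy |>.trans_lt ha
  · omega

theorem removeHook_addHook {a k : ℕ} {t : Multiset ℕ} (ha : t.sup < a) (ht : ∀ x ∈ t, 0 < x) :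
    removeHook (addHook a k t) = t := by
  rw [removeHook, sup_addHook ha, addHook, erase_cons_head, map_add, filter_add, map_map,
    map_replicate]
  have hid : t.map ((· - 1) ∘ (· + 1)) = t := by simp
  rw [hid, filter_eq_self.2 fun x hx => (ht x hx).ne', Nat.sub_self,
    filter_eq_nil.2 fun x hx => by simp [eq_of_mem_replicate hx], add_zero]

theorem pos_of_mem_removeHook {s : Multiset ℕ} {x : ℕ} (hx : x ∈ removeHook s) : 0 < x :=
  Nat.pos_of_ne_zero (of_mem_filter (p := (· ≠ 0)) hx)

theorem addHook_removeHook {s : Multiset ℕ} (hs : ∀ x ∈ s, 0 < x) (hne : s ≠ 0) :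
    addHook s.sup ((s.erase s.sup).count 1) (removeHook s) = s := by
  rw [addHook, removeHook, map_succ_filter_map_pred_add_replicate
    fun x hx => hs x (mem_of_mem_erase hx), cons_erase (sup_mem_of_ne_zero hne)]

theorem sup_removeHook_le (s : Multiset ℕ) : (removeHook s).sup ≤ s.sup - 1 := by
  refine sup_le.2 fun x hx => ?_
  obtain ⟨y, hy, rfl⟩ := mem_map.1 (mem_of_mem_filter hx)
  exact Nat.sub_le_sub_right (le_sup (mem_of_mem_erase hy)) 1

theorem card_eq_card_removeHook_add {s : Multiset ℕ} (hs : ∀ x ∈ s, 0 < x) (hne : s ≠ 0) :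
    card s = card (removeHook s) + (s.erase s.sup).count 1 + 1 := by
  conv_lhs => rw [← addHook_removeHook hs hne]
  exact card_addHook ..

theorem sum_eq_sum_removeHook_add {s : Multiset ℕ} (hs : ∀ x ∈ s, 0 < x) (hne : s ≠ 0) :
    s.sum = s.sup + (removeHook s).sum + card (removeHook s) + (s.erase s.sup).count 1 := by
  conv_lhs => rw [← addHook_removeHook hs hne]
  exact sum_addHook ..

end Multiset

namespace Nat.Partition

variable {n : ℕ}

/-- `λ₁ + ℓ(λ)`, with `λ₁ = 0` for the empty partition. -/
def halfPerimeter (p : n.Partition) : ℕ := p.parts.sup + Multiset.card p.parts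

theorem halfPerimeter_eq_zero_iff {p : n.Partition} : p.halfPerimeter = 0 ↔ n = 0 := by
  rw [halfPerimeter, Nat.add_eq_zero_iff, Multiset.card_eq_zero, and_iff_right_of_imp
    fun h => by simp [h]]
  refine ⟨fun h => by simp [← p.parts_sum, h], fun hn => ?_⟩
  exact Multiset.eq_zero_of_forall_notMem fun x hx =>
    (p.parts_pos hx).not_ge (hn ▸ le_of_mem_parts hx)

theorem halfPerimeter_le (p : n.Partition) : p.halfPerimeter ≤ n + 1 := by
  rcases eq_or_ne p.parts 0 with h | h
  · simp [halfPerimeter, h]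
  · have hcard := Multiset.card_eq_card_removeHook_add (fun x => p.parts_pos) h
    have hsum := Multiset.sum_eq_sum_removeHook_add (fun x => p.parts_pos) h
    rw [p.parts_sum] at hsum
    have hcore := Multiset.card_nsmul_le_sum (a := 1) fun x =>
      Multiset.pos_of_mem_removeHook (s := p.parts)
    simp only [smul_eq_mul, mul_one] at hcore
    unfold halfPerimeter
    omega

theorem parts_ne_zero_of_halfPerimeter_ne_zero {p : n.Partition} (hp : p.halfPerimeter ≠ 0) :
    p.parts ≠ 0 := by
  rintro h
  simp [halfPerimeter, h] at hp

def removeHook {m : ℕ} (p : (n + m).Partition) (hp : p.halfPerimeter = m + 1) : n.Partition where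
  parts := p.parts.removeHook
  parts_pos := Multiset.pos_of_mem_removeHook
  parts_sum := by
    have hne := parts_ne_zero_of_halfPerimeter_ne_zero (hp.trans_ne m.succ_ne_zero)
    have hcard := Multiset.card_eq_card_removeHook_add (fun x => p.parts_pos) hne
    have hsum := Multiset.sum_eq_sum_removeHook_add (fun x => p.parts_pos) hne
    rw [p.parts_sum] at hsum
    unfold halfPerimeter at hp
    omega

def addHook {m h : ℕ} (q : n.Partition) (hq : q.halfPerimeter ≤ h) (hh : h < m) :
    (n + m).Partition where
  parts := Multiset.addHook (h + 1 - Multiset.card q.parts) (m - 1 - h) q.parts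
  parts_pos := Multiset.pos_of_mem_addHook (by unfold halfPerimeter at hq; omega)
  parts_sum := by
    rw [Multiset.sum_addHook, q.parts_sum]
    unfold halfPerimeter at hq
    omega

theorem halfPerimeter_addHook {m h : ℕ} (q : n.Partition) (hq : q.halfPerimeter ≤ h) (hh : h < m) :
    (addHook q hq hh).halfPerimeter = m + 1 := by
  unfold halfPerimeter at hq ⊢
  simp only [addHook]
  rw [Multiset.sup_addHook (by omega), Multiset.card_addHook]
  omega

/-- `λ₁ - 1 + ℓ(μ)`, where `μ` is `λ` with its hook removed. Given `μ` and `λ₁ + ℓ(λ)`, it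
determines the arm `λ₁ - 1` and the leg `ℓ(λ) - 1` of the hook. -/
def hookIndex (p : n.Partition) : ℕ := p.parts.sup - 1 + Multiset.card p.parts.removeHook

theorem hookIndex_lt {m : ℕ} {p : (n + m).Partition} (hp : p.halfPerimeter = m + 1) :
    p.hookIndex < m := by
  have hne := parts_ne_zero_of_halfPerimeter_ne_zero (hp.trans_ne m.succ_ne_zero)
  have hcard := Multiset.card_eq_card_removeHook_add (fun x => p.parts_pos) hne
  have hsup_pos := p.parts_pos (Multiset.sup_mem_of_ne_zero hne)
  unfold halfPerimeter at hp
  unfold hookIndex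
  omega

theorem halfPerimeter_removeHook_le {m : ℕ} {p : (n + m).Partition}
    (hp : p.halfPerimeter = m + 1) : (removeHook p hp).halfPerimeter ≤ p.hookIndex := by
  have := p.parts.sup_removeHook_le
  unfold halfPerimeter hookIndex
  simp only [removeHook]
  omega

theorem addHook_removeHook {m : ℕ} {p : (n + m).Partition} (hp : p.halfPerimeter = m + 1) :
    addHook (removeHook p hp) (halfPerimeter_removeHook_le hp) (hookIndex_lt hp) = p := by
  have hne := parts_ne_zero_of_halfPerimeter_ne_zero (hp.trans_ne m.succ_ne_zero)
  have hcard := Multiset.card_eq_card_removeHook_add (fun x => p.parts_pos) hne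
  have hsup_pos := p.parts_pos (Multiset.sup_mem_of_ne_zero hne)
  unfold halfPerimeter at hp
  ext1
  simp only [addHook, removeHook, hookIndex]
  conv_rhs => rw [← Multiset.addHook_removeHook (fun x => p.parts_pos) hne]
  congr 1 <;> omega

theorem sup_parts_lt_of_halfPerimeter_le {h : ℕ} {q : n.Partition} (hq : q.halfPerimeter ≤ h) :
    q.parts.sup < h + 1 - Multiset.card q.parts := by
  unfold halfPerimeter at hq
  omega

theorem removeHook_addHook {m h : ℕ} {q : n.Partition} (hq : q.halfPerimeter ≤ h) (hh : h < m) :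
    removeHook (addHook q hq hh) (halfPerimeter_addHook q hq hh) = q :=
  Nat.Partition.ext <|
    Multiset.removeHook_addHook (sup_parts_lt_of_halfPerimeter_le hq) fun _ => q.parts_pos

theorem hookIndex_addHook {m h : ℕ} {q : n.Partition} (hq : q.halfPerimeter ≤ h) (hh : h < m) :
    (addHook q hq hh).hookIndex = h := by
  have hsup := sup_parts_lt_of_halfPerimeter_le hq
  unfold halfPerimeter at hq
  simp only [hookIndex, addHook, Multiset.sup_addHook hsup,
    Multiset.removeHook_addHook hsup fun _ => q.parts_pos]
  omega

theorem card_halfPerimeter_eq_add_one (n m : ℕ) :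
    #{p : (n + m).Partition | p.halfPerimeter = m + 1} =
      ∑ h ∈ range m, #{q : n.Partition | q.halfPerimeter ≤ h} := by
  rw [← Finset.card_sigma]
  refine card_bij' (fun p hp => ⟨p.hookIndex, removeHook p (mem_filter.1 hp).2⟩)
    (fun x hx => addHook x.2 (mem_filter.1 (mem_sigma.1 hx).2).2 (mem_range.1 (mem_sigma.1 hx).1))
    (fun p hp => ?_) (fun x hx => ?_) (fun p hp => addHook_removeHook (mem_filter.1 hp).2)
    (fun x hx => Sigma.ext (hookIndex_addHook ..) (heq_of_eq (removeHook_addHook ..)))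
  · simp only [mem_sigma, mem_range, mem_filter, mem_univ, true_and] at hp ⊢
    exact ⟨hookIndex_lt hp, halfPerimeter_removeHook_le hp⟩
  · simp only [mem_filter, mem_univ, true_and]
    exact halfPerimeter_addHook ..

theorem card_halfPerimeter_le_add_one (n m : ℕ) :
    #{p : n.Partition | p.halfPerimeter ≤ m + 1} =
      #{p : n.Partition | p.halfPerimeter ≤ m} + #{p : n.Partition | p.halfPerimeter = m + 1} := by
  simp_rw [Nat.le_succ_iff, filter_or]
  exact card_union_of_disjoint (disjoint_filter.2 fun p _ h => by omega)

theorem card_halfPerimeter_eq_add_one_of_lt {n m : ℕ} (h : n < m) :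
    #{p : n.Partition | p.halfPerimeter = m + 1} = 0 := by
  rw [Finset.card_eq_zero, filter_eq_empty_iff]
  intro p _
  have := p.halfPerimeter_le
  omega

theorem card_halfPerimeter_le_zero (n : ℕ) :
    #{p : n.Partition | p.halfPerimeter ≤ 0} = if n = 0 then 1 else 0 := by
  simp_rw [Nat.le_zero, halfPerimeter_eq_zero_iff]
  split_ifs with h
  · subst h
    simp
  · simp [h]

end Nat.Partition

/-- For every `m ≥ 1`, the area generating polynomial `D_m(q)` of extended Ferrers
diagrams of half-perimeter `m` (partitions `λ` with `λ₁ + ℓ(λ) ≤ m`, counted by size)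
satisfies `D_m(q) = D_{m−1}(q) + q^{m−1}·Σ_{h=0}^{m−2} D_h(q)`, with `D₀ = D₁ = 1`. -/
theorem stmt4
    (D : ℕ → Polynomial ℤ)
    (hD : ∀ m j : ℕ, (D m).coeff j =
      (Nat.card {p : Nat.Partition j // p.parts.sup + Multiset.card p.parts ≤ m} : ℤ)) :
    D 0 = 1 ∧ D 1 = 1 ∧
    ∀ m : ℕ, 1 ≤ m →
      D m = D (m - 1) + Polynomial.X ^ (m - 1) * ∑ h ∈ Finset.range (m - 1), D h := by
  have hcoeff (m j : ℕ) : (D m).coeff j = #{p : j.Partition | p.halfPerimeter ≤ m} := by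
    rw [hD, Nat.card_eq_fintype_card, Fintype.card_subtype]
    rfl
  have hzero : D 0 = 1 := by
    ext j
    rw [hcoeff, Nat.Partition.card_halfPerimeter_le_zero, Polynomial.coeff_one, eq_comm]
    split_ifs <;> simp_all
  have hsucc (m : ℕ) : D (m + 1) = D m + Polynomial.X ^ m * ∑ h ∈ range m, D h := by
    ext j
    rw [Polynomial.coeff_add, Polynomial.coeff_X_pow_mul', Polynomial.finsetSum_coeff, hcoeff,
      hcoeff, Nat.Partition.card_halfPerimeter_le_add_one, Nat.cast_add]
    split_ifs with hj
    · obtain ⟨n, rfl⟩ := Nat.exists_eq_add_of_le' hj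
      simp [Nat.Partition.card_halfPerimeter_eq_add_one, hcoeff]
    · simp [Nat.Partition.card_halfPerimeter_eq_add_one_of_lt (not_le.1 hj)]
  refine ⟨hzero, by simpa [hzero] using hsucc 0, fun m hm => ?_⟩
  obtain ⟨m, rfl⟩ := Nat.exists_eq_add_of_le' hm
  simpa using hsucc m
end

section
/- For every m ≥ 2, the polynomials D_m satisfy the three-term recurrence D_m(q) = (1+q)·D_{m−1}(q) + (q^{m−1} − q)·D_{m−2}(q), with D₀(q) = D₁(q) = 1. -/
/-!
Write `E_m = D_m - D_{m-1}` for the generating polynomial of the partitions with `λ₁ + ℓ(λ) = m`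
exactly; the recurrence is equivalent to `E_m = q E_{m-1} + q^{m-1} D_{m-2}`. Split those
partitions according to whether the first row has at least two cells and is strictly longer than
the second. If so, removing the last cell of the first row is a bijection onto the partitions
counted by `E_{m-1}` with one cell less. Otherwise removing the first row and the first column, a
hook of `m - 1` cells, is a bijection onto all partitions with `λ₁ + ℓ(λ) ≤ m - 2`: the first row
is one longer than the new largest part, and the first column is rebuilt by padding with ones.
-/

namespace ExtendedFerrers

lemma sup_cons_of_forall_le {α : Type*} [SemilatticeSup α] [OrderBot α] {a : α}
    {R : Multiset α} (h : ∀ x ∈ R, x ≤ a) : (a ::ₘ R).sup = a := by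
  rw [Multiset.sup_cons, sup_eq_left]
  exact Multiset.sup_le.2 h

lemma exists_eq_cons_of_ne_zero {α : Type*} [LinearOrder α] {M : Multiset α} (hM : M ≠ 0) :
    ∃ a R, (∀ x ∈ R, x ≤ a) ∧ M = a ::ₘ R := by
  obtain ⟨a, ha, hmax⟩ := M.toFinset.exists_max_image id (Multiset.toFinset_nonempty.2 hM)
  refine ⟨a, M.erase a, fun x hx => hmax x ?_,
    (Multiset.cons_erase (Multiset.mem_toFinset.1 ha)).symm⟩
  exact Multiset.mem_toFinset.2 (Multiset.mem_of_mem_erase hx)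

def halfPerim (M : Multiset ℕ) : ℕ := M.sup + Multiset.card M

/-- Partitions are encoded as multisets of positive parts: these are the extended Ferrers diagrams
of half-perimeter `m` and area `n`. -/
def extFerrers (m n : ℕ) : Set (Multiset ℕ) :=
  {M | (∀ x ∈ M, 0 < x) ∧ M.sum = n ∧ halfPerim M ≤ m}

def ferrers (m n : ℕ) : Set (Multiset ℕ) :=
  {M | (∀ x ∈ M, 0 < x) ∧ M.sum = n ∧ halfPerim M = m}

lemma natCard_partition_eq_ncard_extFerrers (m n : ℕ) :
    Nat.card {p : Nat.Partition n // p.parts.sup + Multiset.card p.parts ≤ m} =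
      (extFerrers m n).ncard := by
  rw [← Nat.card_coe_set_eq]
  exact Nat.card_congr
    { toFun := fun p => ⟨p.1.parts, fun _ hx => p.1.parts_pos hx, p.1.parts_sum, p.2⟩
      invFun := fun M => ⟨⟨M.1, fun hx => M.2.1 _ hx, M.2.2.1⟩, M.2.2.2⟩
      left_inv := fun _ => rfl
      right_inv := fun _ => rfl }

lemma finite_setOf_pos_sum_eq (n : ℕ) :
    {M : Multiset ℕ | (∀ x ∈ M, 0 < x) ∧ M.sum = n}.Finite :=
  (Set.finite_range (Nat.Partition.parts : Nat.Partition n → _)).subset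
    fun M hM => ⟨⟨M, fun hx => hM.1 _ hx, hM.2⟩, rfl⟩

lemma ferrers_finite (m n : ℕ) : (ferrers m n).Finite :=
  (finite_setOf_pos_sum_eq n).subset fun _ hM => ⟨hM.1, hM.2.1⟩

lemma extFerrers_finite (m n : ℕ) : (extFerrers m n).Finite :=
  (finite_setOf_pos_sum_eq n).subset fun _ hM => ⟨hM.1, hM.2.1⟩

lemma cons_mem_ferrers_iff {a m n : ℕ} {R : Multiset ℕ} (hR : ∀ x ∈ R, x ≤ a) :
    a ::ₘ R ∈ ferrers m n ↔
      0 < a ∧ (∀ x ∈ R, 0 < x) ∧ a + R.sum = n ∧ a + Multiset.card R + 1 = m := by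
  simp only [ferrers, halfPerim, Set.mem_ofPred_eq, Multiset.forall_mem_cons, Multiset.sum_cons,
    Multiset.card_cons, sup_cons_of_forall_le hR, add_assoc, and_assoc]

lemma ne_zero_of_mem_ferrers {M : Multiset ℕ} {m n : ℕ} (h : M ∈ ferrers (m + 1) n) : M ≠ 0 := by
  rintro rfl
  simp [ferrers, halfPerim] at h

lemma extFerrers_zero (m : ℕ) : extFerrers m 0 = {0} := by
  ext M
  simp only [extFerrers, Set.mem_ofPred_eq, Set.mem_singleton_iff]
  constructor
  · rintro ⟨hpos, hsum, -⟩
    exact Multiset.eq_zero_of_forall_notMem fun x hx =>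
      (hpos x hx).ne' (Multiset.sum_eq_zero_iff.1 hsum x hx)
  · rintro rfl
    simp [halfPerim]

lemma halfPerim_le_sum_add_one {M : Multiset ℕ} (hpos : ∀ x ∈ M, 0 < x) :
    halfPerim M ≤ M.sum + 1 := by
  rcases eq_or_ne M 0 with rfl | hM
  · simp [halfPerim]
  obtain ⟨a, R, hR, rfl⟩ := exists_eq_cons_of_ne_zero hM
  have hcard : Multiset.card R • 1 ≤ R.sum :=
    Multiset.card_nsmul_le_sum fun x hx => hpos x (Multiset.mem_cons_of_mem hx)
  simp only [halfPerim, sup_cons_of_forall_le hR, Multiset.card_cons, Multiset.sum_cons,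
    smul_eq_mul, mul_one] at hcard ⊢
  omega

lemma two_le_halfPerim {M : Multiset ℕ} (hpos : ∀ x ∈ M, 0 < x) (hM : M ≠ 0) :
    2 ≤ halfPerim M := by
  obtain ⟨a, R, hR, rfl⟩ := exists_eq_cons_of_ne_zero hM
  have := hpos a (Multiset.mem_cons_self a R)
  simp only [halfPerim, sup_cons_of_forall_le hR, Multiset.card_cons]
  omega

lemma ncard_extFerrers_of_le_one {m : ℕ} (hm : m ≤ 1) (n : ℕ) :
    (extFerrers m n).ncard = if n = 0 then 1 else 0 := by
  rcases n with _ | n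
  · simp [extFerrers_zero]
  refine (Set.ncard_eq_zero (extFerrers_finite m _)).2 (Set.eq_empty_of_forall_notMem ?_)
  rintro M ⟨hpos, hsum, hle⟩
  have hM : M ≠ 0 := by rintro rfl; simp at hsum
  have := two_le_halfPerim hpos hM
  omega

lemma ferrers_eq_empty {m n : ℕ} (h : n + 1 < m) : ferrers m n = ∅ :=
  Set.eq_empty_of_forall_notMem fun M ⟨hpos, hsum, hm⟩ => by
    have := halfPerim_le_sum_add_one hpos
    omega

lemma ncard_extFerrers_succ (m n : ℕ) :
    (extFerrers (m + 1) n).ncard = (extFerrers m n).ncard + (ferrers (m + 1) n).ncard := by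
  have hunion : extFerrers (m + 1) n = extFerrers m n ∪ ferrers (m + 1) n := by
    ext M
    simp only [extFerrers, ferrers, Set.mem_union, Set.mem_ofPred_eq, Nat.le_succ_iff, and_or_left]
  rw [hunion, Set.ncard_union_eq _ (extFerrers_finite m n) (ferrers_finite _ n)]
  exact Set.disjoint_left.2 fun M h₁ h₂ => by have := h₁.2.2; have := h₂.2.2; omega

/-- The last cell of the first row can be removed without losing that row. -/
def CanLowerTop (M : Multiset ℕ) : Prop := 2 ≤ M.sup ∧ M.count M.sup = 1

def replaceTop (f : ℕ → ℕ) (M : Multiset ℕ) : Multiset ℕ := f M.sup ::ₘ M.erase M.sup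

lemma replaceTop_cons (f : ℕ → ℕ) {a : ℕ} {R : Multiset ℕ} (hR : ∀ x ∈ R, x ≤ a) :
    replaceTop f (a ::ₘ R) = f a ::ₘ R := by
  rw [replaceTop, sup_cons_of_forall_le hR, Multiset.erase_cons_head]

lemma canLowerTop_cons_iff {a : ℕ} {R : Multiset ℕ} (hR : ∀ x ∈ R, x ≤ a) :
    CanLowerTop (a ::ₘ R) ↔ 2 ≤ a ∧ ∀ x ∈ R, x < a := by
  rw [CanLowerTop, sup_cons_of_forall_le hR, Multiset.count_cons_self, add_eq_right,
    Multiset.count_eq_zero]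
  refine and_congr_right fun _ => ⟨fun ha x hx => ?_, fun h ha => (h a ha).false⟩
  exact (hR x hx).lt_of_ne fun hxa => ha (hxa ▸ hx)

lemma ncard_ferrers_inter_canLowerTop (m n : ℕ) :
    (ferrers (m + 2) (n + 1) ∩ {M | CanLowerTop M}).ncard = (ferrers (m + 1) n).ncard := by
  refine Set.BijOn.ncard_eq (f := replaceTop (· - 1))
    (Set.InvOn.bijOn (f' := replaceTop (· + 1)) ⟨?_, ?_⟩ ?_ ?_)
  · rintro M ⟨hM, hlow⟩
    obtain ⟨a, R, hR, rfl⟩ := exists_eq_cons_of_ne_zero (ne_zero_of_mem_ferrers hM)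
    obtain ⟨ha, hRa⟩ := (canLowerTop_cons_iff hR).1 hlow
    rw [replaceTop_cons _ hR, replaceTop_cons _ (fun x hx => Nat.le_sub_one_of_lt (hRa x hx)),
      Nat.sub_add_cancel (by omega)]
  · intro N hN
    obtain ⟨b, R, hR, rfl⟩ := exists_eq_cons_of_ne_zero (ne_zero_of_mem_ferrers hN)
    rw [replaceTop_cons _ hR,
      replaceTop_cons _ (fun x hx => (hR x hx).trans (Nat.le_add_right b 1)), Nat.add_sub_cancel]
  · rintro M ⟨hM, hlow⟩
    obtain ⟨a, R, hR, rfl⟩ := exists_eq_cons_of_ne_zero (ne_zero_of_mem_ferrers hM)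
    obtain ⟨ha, hRa⟩ := (canLowerTop_cons_iff hR).1 hlow
    obtain ⟨-, hpos, hsum, hhp⟩ := (cons_mem_ferrers_iff hR).1 hM
    rw [replaceTop_cons _ hR,
      cons_mem_ferrers_iff (fun x hx => Nat.le_sub_one_of_lt (hRa x hx))]
    exact ⟨by omega, hpos, by omega, by omega⟩
  · intro N hN
    obtain ⟨b, R, hR, rfl⟩ := exists_eq_cons_of_ne_zero (ne_zero_of_mem_ferrers hN)
    obtain ⟨hb, hpos, hsum, hhp⟩ := (cons_mem_ferrers_iff hR).1 hN
    have hR' : ∀ x ∈ R, x ≤ b + 1 := fun x hx => (hR x hx).trans (Nat.le_add_right b 1)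
    rw [replaceTop_cons _ hR]
    exact ⟨(cons_mem_ferrers_iff hR').2 ⟨by omega, hpos, by omega, by omega⟩,
      (canLowerTop_cons_iff hR').2 ⟨by omega, fun x hx => Nat.lt_succ_of_le (hR x hx)⟩⟩

def dropFirstColumn (R : Multiset ℕ) : Multiset ℕ := (R.filter (2 ≤ ·)).map (· - 1)

def addFirstColumn (k : ℕ) (ν : Multiset ℕ) : Multiset ℕ :=
  ν.map (· + 1) + Multiset.replicate k 1

lemma addFirstColumn_dropFirstColumn {R : Multiset ℕ} (hpos : ∀ x ∈ R, 0 < x) :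
    addFirstColumn (R.count 1) (dropFirstColumn R) = R := by
  have hlong : ((R.filter (2 ≤ ·)).map (· - 1)).map (· + 1) = R.filter (2 ≤ ·) := by
    rw [Multiset.map_map]
    conv_rhs => rw [← Multiset.map_id (R.filter (2 ≤ ·))]
    refine Multiset.map_congr rfl fun x hx => ?_
    have := (Multiset.mem_filter.1 hx).2
    simp only [Function.comp_apply, id_eq]
    omega
  have hones : Multiset.replicate (R.count 1) 1 = R.filter (¬ 2 ≤ ·) := by
    rw [← Multiset.filter_eq']
    exact Multiset.filter_congr fun x hx => by have := hpos x hx; omega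
  rw [addFirstColumn, dropFirstColumn, hlong, hones, Multiset.filter_add_not]

lemma dropFirstColumn_addFirstColumn (k : ℕ) {ν : Multiset ℕ} (hpos : ∀ x ∈ ν, 0 < x) :
    dropFirstColumn (addFirstColumn k ν) = ν := by
  have hlong : ν.filter ((2 ≤ ·) ∘ (· + 1)) = ν :=
    Multiset.filter_eq_self.2 fun x hx => by
      have := hpos x hx
      simp only [Function.comp_apply]
      omega
  have hones : (Multiset.replicate k 1).filter (2 ≤ ·) = 0 :=
    Multiset.filter_eq_nil.2 fun x hx => by rw [Multiset.eq_of_mem_replicate hx]; omega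
  rw [dropFirstColumn, addFirstColumn, Multiset.filter_add, Multiset.filter_map, hlong, hones,
    add_zero, Multiset.map_map]
  simp

lemma sum_addFirstColumn (k : ℕ) (ν : Multiset ℕ) :
    (addFirstColumn k ν).sum = ν.sum + Multiset.card ν + k := by
  simp [addFirstColumn, Multiset.sum_map_add]

lemma card_addFirstColumn (k : ℕ) (ν : Multiset ℕ) :
    Multiset.card (addFirstColumn k ν) = Multiset.card ν + k := by
  simp [addFirstColumn]

lemma pos_and_le_of_mem_addFirstColumn {k x : ℕ} {ν : Multiset ℕ}
    (hx : x ∈ addFirstColumn k ν) : 0 < x ∧ x ≤ ν.sup + 1 := by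
  rcases Multiset.mem_add.1 hx with hx | hx
  · obtain ⟨y, hy, rfl⟩ := Multiset.mem_map.1 hx
    exact ⟨y.succ_pos, Nat.succ_le_succ (Multiset.le_sup hy)⟩
  · rw [Multiset.eq_of_mem_replicate hx]
    exact ⟨Nat.one_pos, Nat.le_add_left 1 _⟩

lemma sup_add_one_mem_addFirstColumn (k : ℕ) {ν : Multiset ℕ} (hν : ν ≠ 0) :
    ν.sup + 1 ∈ addFirstColumn k ν := by
  obtain ⟨b, S, hS, rfl⟩ := exists_eq_cons_of_ne_zero hν
  rw [sup_cons_of_forall_le hS]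
  exact Multiset.mem_add.2 (Or.inl (Multiset.mem_map_of_mem _ (Multiset.mem_cons_self b S)))

lemma card_dropFirstColumn_add_count {R : Multiset ℕ} (hpos : ∀ x ∈ R, 0 < x) :
    Multiset.card (dropFirstColumn R) + R.count 1 = Multiset.card R := by
  conv_rhs => rw [← addFirstColumn_dropFirstColumn hpos, card_addFirstColumn]

lemma sum_dropFirstColumn_add_card {R : Multiset ℕ} (hpos : ∀ x ∈ R, 0 < x) :
    (dropFirstColumn R).sum + Multiset.card R = R.sum := by
  conv_rhs => rw [← addFirstColumn_dropFirstColumn hpos, sum_addFirstColumn]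
  rw [← card_dropFirstColumn_add_count hpos, add_assoc]

lemma mem_dropFirstColumn {x : ℕ} {R : Multiset ℕ} :
    x ∈ dropFirstColumn R ↔ ∃ y ∈ R, 2 ≤ y ∧ y - 1 = x := by
  simp [dropFirstColumn, and_assoc]

lemma sup_dropFirstColumn_le {a : ℕ} {R : Multiset ℕ} (hR : ∀ x ∈ R, x ≤ a) :
    (dropFirstColumn R).sup ≤ a - 1 :=
  Multiset.sup_le.2 fun x hx => by
    obtain ⟨y, hy, -, rfl⟩ := mem_dropFirstColumn.1 hx
    exact Nat.sub_le_sub_right (hR y hy) 1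

def removeHook (M : Multiset ℕ) : Multiset ℕ := dropFirstColumn (M.erase M.sup)

/-- The first column is padded with ones so that the result has half-perimeter `m + 2`. -/
def addHook (m : ℕ) (ν : Multiset ℕ) : Multiset ℕ :=
  (ν.sup + 1) ::ₘ addFirstColumn (m - halfPerim ν) ν

lemma removeHook_cons {a : ℕ} {R : Multiset ℕ} (hR : ∀ x ∈ R, x ≤ a) :
    removeHook (a ::ₘ R) = dropFirstColumn R := by
  rw [removeHook, sup_cons_of_forall_le hR, Multiset.erase_cons_head]

lemma sup_dropFirstColumn_of_not_canLowerTop {a : ℕ} {R : Multiset ℕ} (hR : ∀ x ∈ R, x ≤ a)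
    (h : ¬ CanLowerTop (a ::ₘ R)) : (dropFirstColumn R).sup = a - 1 := by
  refine (sup_dropFirstColumn_le hR).antisymm ?_
  rcases lt_or_ge a 2 with ha | ha
  · omega
  obtain ⟨x, hx, hxa⟩ : ∃ x ∈ R, ¬ x < a := by
    simpa [canLowerTop_cons_iff hR, ha] using h
  obtain rfl : x = a := le_antisymm (hR x hx) (not_lt.1 hxa)
  exact Multiset.le_sup (mem_dropFirstColumn.2 ⟨x, hx, ha, rfl⟩)

lemma ncard_ferrers_diff_canLowerTop (m n : ℕ) :
    (ferrers (m + 2) (n + m + 1) \ {M | CanLowerTop M}).ncard = (extFerrers m n).ncard := by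
  refine Set.BijOn.ncard_eq (f := removeHook)
    (Set.InvOn.bijOn (f' := addHook m) ⟨?_, ?_⟩ ?_ ?_)
  · rintro M ⟨hM, hlow⟩
    obtain ⟨a, R, hR, rfl⟩ := exists_eq_cons_of_ne_zero (ne_zero_of_mem_ferrers hM)
    obtain ⟨ha, hpos, -, hhp⟩ := (cons_mem_ferrers_iff hR).1 hM
    have hsup := sup_dropFirstColumn_of_not_canLowerTop hR hlow
    have hcard := card_dropFirstColumn_add_count hpos
    rw [removeHook_cons hR, addHook, halfPerim, hsup,
      show m - (a - 1 + Multiset.card (dropFirstColumn R)) = R.count 1 by omega,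
      addFirstColumn_dropFirstColumn hpos, Nat.sub_add_cancel ha]
  · intro ν hν
    rw [addHook, removeHook_cons fun x hx => (pos_and_le_of_mem_addFirstColumn hx).2,
      dropFirstColumn_addFirstColumn _ hν.1]
  · rintro M ⟨hM, -⟩
    obtain ⟨a, R, hR, rfl⟩ := exists_eq_cons_of_ne_zero (ne_zero_of_mem_ferrers hM)
    obtain ⟨ha, hpos, hsum, hhp⟩ := (cons_mem_ferrers_iff hR).1 hM
    have hsup := sup_dropFirstColumn_le hR
    have hcard := card_dropFirstColumn_add_count hpos
    have hsumR := sum_dropFirstColumn_add_card hpos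
    rw [removeHook_cons hR]
    refine ⟨fun x hx => ?_, by omega, by rw [halfPerim]; omega⟩
    obtain ⟨y, -, hy, rfl⟩ := mem_dropFirstColumn.1 hx
    omega
  · rintro ν ⟨hpos, hsum, hle⟩
    have hC := fun x (hx : x ∈ addFirstColumn (m - halfPerim ν) ν) =>
      pos_and_le_of_mem_addFirstColumn hx
    rw [halfPerim] at hle
    refine ⟨(cons_mem_ferrers_iff fun x hx => (hC x hx).2).2
      ⟨Nat.succ_pos _, fun x hx => (hC x hx).1, ?_, ?_⟩, ?_⟩
    · rw [sum_addFirstColumn, halfPerim]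
      omega
    · rw [card_addFirstColumn, halfPerim]
      omega
    · rintro hlow
      obtain ⟨h2, hlt⟩ := (canLowerTop_cons_iff fun x hx => (hC x hx).2).1 hlow
      have hν : ν ≠ 0 := by rintro rfl; simp at h2
      exact (hlt _ (sup_add_one_mem_addFirstColumn _ hν)).false

lemma ncard_ferrers_add_two (m n : ℕ) :
    (ferrers (m + 2) (n + 1)).ncard =
      (ferrers (m + 1) n).ncard + if m ≤ n then (extFerrers m (n - m)).ncard else 0 := by
  split_ifs with h
  · obtain ⟨k, rfl⟩ := Nat.exists_eq_add_of_le' h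
    rw [← Set.ncard_inter_add_ncard_sdiff_eq_ncard _ {M | CanLowerTop M} (ferrers_finite _ _),
      ncard_ferrers_inter_canLowerTop, ncard_ferrers_diff_canLowerTop, Nat.add_sub_cancel]
  · rw [ferrers_eq_empty (by omega), ferrers_eq_empty (by omega), Set.ncard_empty]

end ExtendedFerrers

open ExtendedFerrers Polynomial

/-- For every `m ≥ 2`, the area generating polynomial `D_m(q)` of extended Ferrers
diagrams of half-perimeter `m` (partitions `λ` with `λ₁ + ℓ(λ) ≤ m`, counted by size)
satisfies `D_m(q) = (1+q)·D_{m−1}(q) + (q^{m−1} − q)·D_{m−2}(q)`, with `D₀ = D₁ = 1`. -/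
theorem stmt5
    (D : ℕ → Polynomial ℤ)
    (hD : ∀ m j : ℕ, (D m).coeff j =
      (Nat.card {p : Nat.Partition j // p.parts.sup + Multiset.card p.parts ≤ m} : ℤ)) :
    D 0 = 1 ∧ D 1 = 1 ∧
    ∀ m : ℕ, 2 ≤ m →
      D m = (1 + Polynomial.X) * D (m - 1)
        + (Polynomial.X ^ (m - 1) - Polynomial.X) * D (m - 2) := by
  have hcoeff (m j : ℕ) : (D m).coeff j = (extFerrers m j).ncard := by
    rw [hD, natCard_partition_eq_ncard_extFerrers]
  have hsmall (m : ℕ) (hm : m ≤ 1) : D m = 1 := by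
    ext j
    rw [hcoeff, coeff_one, ncard_extFerrers_of_le_one hm]
    split_ifs <;> rfl
  have hdiff (m j : ℕ) : (D (m + 1) - D m).coeff j = (ferrers (m + 1) j).ncard := by
    rw [coeff_sub, hcoeff, hcoeff, ncard_extFerrers_succ]
    push_cast
    ring
  refine ⟨hsmall 0 zero_le_one, hsmall 1 le_rfl, fun m hm => ?_⟩
  obtain ⟨m, rfl⟩ : ∃ k, m = k + 1 + 1 := ⟨m - 2, by omega⟩
  have key : D (m + 1 + 1) - D (m + 1) = X * (D (m + 1) - D m) + X ^ (m + 1) * D m := by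
    ext (_ | n)
    · rw [hdiff, ferrers_eq_empty (by omega)]
      simp
    · rw [hdiff, coeff_add, coeff_X_mul, hdiff, coeff_X_pow_mul', ncard_ferrers_add_two, hcoeff]
      simp only [Nat.add_le_add_iff_right, Nat.add_sub_add_right]
      split_ifs <;> simp
  rw [show m + 1 + 1 - 1 = m + 1 from rfl, show m + 1 + 1 - 2 = m from rfl]
  linear_combination key
end

section
/- The number of translation-classes of r-symmetric convex polyominoes with half-perimeter 2m equals 1 when m = 1 and equals 2^{m−2} for every m ≥ 2; moreover there are no r-symmetric convex polyominoes of odd half-perimeter. -/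
/-- A cell of the square lattice. -/
abbrev Cell : Type := ℤ × ℤ

/-- Translation of a finite set of cells by a vector `v`. -/
def cellTranslate (v : Cell) (P : Finset Cell) : Finset Cell :=
  P.image fun c => (c.1 + v.1, c.2 + v.2)

/-- A polyomino: a finite nonempty set of cells, connected under edge-adjacency. -/
def IsPolyomino (P : Finset Cell) : Prop :=
  P.Nonempty ∧ ∀ a ∈ P, ∀ b ∈ P,
    Relation.ReflTransGen
      (fun c d => c ∈ P ∧ d ∈ P ∧ (c.1 - d.1).natAbs + (c.2 - d.2).natAbs = 1) a b

/-- Convexity: the cells in each column and in each row form a contiguous interval. -/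
def IsConvexPoly (P : Finset Cell) : Prop :=
  (∀ x y₁ y₂ y : ℤ, (x, y₁) ∈ P → (x, y₂) ∈ P → y₁ ≤ y → y ≤ y₂ → (x, y) ∈ P) ∧
  (∀ y x₁ x₂ x : ℤ, (x₁, y) ∈ P → (x₂, y) ∈ P → x₁ ≤ x → x ≤ x₂ → (x, y) ∈ P)

/-- The width: number of distinct first coordinates. -/
def width (P : Finset Cell) : ℕ := (P.image Prod.fst).card

/-- The height: number of distinct second coordinates. -/
def height (P : Finset Cell) : ℕ := (P.image Prod.snd).card

/-- The area: number of cells. -/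
def area (P : Finset Cell) : ℕ := P.card

/-- Rotation by a right angle: `r(i,j) = (-j,i)`. -/
def rotMap : Cell → Cell := fun c => (-c.2, c.1)

/-- Horizontal reflection: `h(i,j) = (i,-j)`. -/
def hMap : Cell → Cell := fun c => (c.1, -c.2)

/-- Vertical reflection: `v(i,j) = (-i,j)`. -/
def vMap : Cell → Cell := fun c => (-c.1, c.2)

/-- Diagonal reflection `d₁(i,j) = (-j,-i)`. -/
def d1Map : Cell → Cell := fun c => (-c.2, -c.1)

/-- Diagonal reflection `d₂(i,j) = (j,i)`. -/
def d2Map : Cell → Cell := fun c => (c.2, c.1)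

/-- `P` is `g`-symmetric: `g·P` is a cellTranslate of `P`. -/
def SymBy (g : Cell → Cell) (P : Finset Cell) : Prop :=
  ∃ v : Cell, P.image g = cellTranslate v P

/-- The translation class of `P`: the set of all its translates. -/
def transClass (P : Finset Cell) : Set (Finset Cell) :=
  {Q | ∃ v : Cell, Q = cellTranslate v P}

/-- The number of translation classes of finite cell-sets satisfying the
(translation-invariant) predicate `Φ`. -/
noncomputable def classCount (Φ : Finset Cell → Prop) : ℕ :=
  Set.ncard {O : Set (Finset Cell) | ∃ P : Finset Cell, Φ P ∧ O = transClass P}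

namespace S7

lemma mem_cellTranslate {v : Cell} {P : Finset Cell} {c : Cell} :
    c ∈ cellTranslate v P ↔ (c.1 - v.1, c.2 - v.2) ∈ P := by
  constructor
  · intro h
    rw [cellTranslate, Finset.mem_image] at h
    obtain ⟨d, hd, rfl⟩ := h
    simpa using hd
  · intro h
    rw [cellTranslate, Finset.mem_image]
    exact ⟨_, h, by simp⟩

lemma cellTranslate_zero (P : Finset Cell) : cellTranslate 0 P = P := by
  simp [cellTranslate]

lemma cellTranslate_comp (v w : Cell) (P : Finset Cell) :
    cellTranslate v (cellTranslate w P) = cellTranslate (v + w) P := by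
  unfold cellTranslate
  rw [Finset.image_image]
  congr 1
  funext c
  simp [Prod.ext_iff]
  constructor <;> ring

lemma self_mem_transClass (P : Finset Cell) : P ∈ transClass P :=
  ⟨0, (cellTranslate_zero P).symm⟩

lemma transClass_translate (v : Cell) (P : Finset Cell) :
    transClass (cellTranslate v P) = transClass P := by
  ext Q
  constructor
  · rintro ⟨w, rfl⟩
    exact ⟨w + v, (cellTranslate_comp w v P)⟩
  · rintro ⟨w, rfl⟩
    refine ⟨w - v, ?_⟩
    rw [cellTranslate_comp]
    congr 1
    abel

lemma classCount_eq_card {Φ : Finset Cell → Prop} {ι : Type} (T : Finset ι)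
    (f : ι → Finset Cell)
    (h1 : ∀ a ∈ T, Φ (f a))
    (h2 : ∀ P, Φ P → ∃ a ∈ T, ∃ v, P = cellTranslate v (f a))
    (h3 : ∀ a ∈ T, ∀ b ∈ T, ∀ v, f b = cellTranslate v (f a) → a = b) :
    classCount Φ = T.card := by
  have hset : {O : Set (Finset Cell) | ∃ P, Φ P ∧ O = transClass P}
      = (fun a => transClass (f a)) '' (T : Set ι) := by
    ext O
    constructor
    · rintro ⟨P, hP, rfl⟩
      obtain ⟨a, ha, v, rfl⟩ := h2 P hP
      exact ⟨a, ha, (transClass_translate v (f a)).symm⟩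
    · rintro ⟨a, ha, rfl⟩
      exact ⟨f a, h1 a ha, rfl⟩
  rw [classCount, hset]
  rw [Set.ncard_image_of_injOn, Set.ncard_coe_finset]
  intro a ha b hb h
  simp only at h
  have : f b ∈ transClass (f a) := by
    rw [h]; exact self_mem_transClass (f b)
  obtain ⟨v, hv⟩ := this
  exact h3 a ha b hb v hv

/-! ### widths under translation and rotation -/

lemma width_cellTranslate (v : Cell) (P : Finset Cell) :
    width (cellTranslate v P) = width P := by
  unfold width cellTranslate
  rw [Finset.image_image]
  have : (Prod.fst ∘ fun c : Cell => (c.1 + v.1, c.2 + v.2)) = (fun c : Cell => c.1 + v.1) := rfl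
  rw [this]
  have : (fun c : Cell => c.1 + v.1) = ((fun x : ℤ => x + v.1) ∘ Prod.fst) := rfl
  rw [this, ← Finset.image_image]
  exact Finset.card_image_of_injective _ (add_left_injective v.1)

lemma height_cellTranslate (v : Cell) (P : Finset Cell) :
    height (cellTranslate v P) = height P := by
  unfold height cellTranslate
  rw [Finset.image_image]
  have : (Prod.snd ∘ fun c : Cell => (c.1 + v.1, c.2 + v.2)) = ((fun x : ℤ => x + v.2) ∘ Prod.snd) := rfl
  rw [this, ← Finset.image_image]
  exact Finset.card_image_of_injective _ (add_left_injective v.2)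

lemma width_rot (P : Finset Cell) : width (P.image rotMap) = height P := by
  unfold width height rotMap
  rw [Finset.image_image]
  have : (Prod.fst ∘ fun c : Cell => ((-c.2 : ℤ), c.1)) = (Neg.neg ∘ Prod.snd) := rfl
  rw [this, ← Finset.image_image]
  exact Finset.card_image_of_injective _ neg_injective

lemma sym_width_eq_height {P : Finset Cell} (h : SymBy rotMap P) : width P = height P := by
  obtain ⟨v, hv⟩ := h
  have := width_rot P
  rw [hv, width_cellTranslate] at this
  exact this

lemma not_odd_part (P : Finset Cell) (_h1 : IsPolyomino P) (_h2 : IsConvexPoly P)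
    (h3 : SymBy rotMap P) : ¬ Odd (width P + height P) := by
  rw [sym_width_eq_height h3]
  simp [Nat.odd_iff, Nat.add_mod]
  omega

/-! ### the m = 1 case -/

lemma case_one :
    classCount (fun P => IsPolyomino P ∧ IsConvexPoly P ∧ SymBy rotMap P ∧
        width P + height P = 2 * 1) = 1 := by
  have := classCount_eq_card (Φ := fun P => IsPolyomino P ∧ IsConvexPoly P ∧ SymBy rotMap P ∧
      width P + height P = 2 * 1) ({()} : Finset Unit) (fun _ => {((0 : ℤ), (0 : ℤ))})
  rw [this]
  · rfl
  · intro a _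
    refine ⟨⟨⟨(0,0), by simp⟩, ?_⟩, ⟨?_, ?_⟩, ⟨0, by decide⟩, by rfl⟩
    · intro a ha b hb
      simp only [Finset.mem_singleton] at ha hb
      subst ha; subst hb; exact Relation.ReflTransGen.refl
    · intro x y₁ y₂ y h1 h2 hl hr
      simp only [Finset.mem_singleton, Prod.mk.injEq] at h1 h2 ⊢
      omega
    · intro x y₁ y₂ y h1 h2 hl hr
      simp only [Finset.mem_singleton, Prod.mk.injEq] at h1 h2 ⊢
      omega
  · intro P hP
    obtain ⟨⟨hne, _⟩, _, hsym, hwh⟩ := hP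
    have hw : width P = 1 := by
      have := sym_width_eq_height hsym; omega
    have hh : height P = 1 := by
      have := sym_width_eq_height hsym; omega
    obtain ⟨x, hx⟩ := Finset.card_eq_one.mp hw
    obtain ⟨y, hy⟩ := Finset.card_eq_one.mp hh
    refine ⟨(), by simp, (x, y), ?_⟩
    ext c
    rw [mem_cellTranslate]
    simp only [Finset.mem_singleton, Prod.mk.injEq]
    constructor
    · intro hc
      have h1 : c.1 ∈ P.image Prod.fst := Finset.mem_image_of_mem _ hc
      have h2 : c.2 ∈ P.image Prod.snd := Finset.mem_image_of_mem _ hc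
      rw [hx, Finset.mem_singleton] at h1
      rw [hy, Finset.mem_singleton] at h2
      omega
    · intro hc
      obtain ⟨d, hd⟩ := hne
      have h1 : d.1 ∈ P.image Prod.fst := Finset.mem_image_of_mem _ hd
      have h2 : d.2 ∈ P.image Prod.snd := Finset.mem_image_of_mem _ hd
      rw [hx, Finset.mem_singleton] at h1
      rw [hy, Finset.mem_singleton] at h2
      have : c = d := by
        have := Prod.mk.eta (p := c)
        have := Prod.mk.eta (p := d)
        obtain ⟨c1, c2⟩ := c; obtain ⟨d1, d2⟩ := d
        simp_all
        omega
      rw [this]; exact hd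
  · intro a _ b _ _ _
    rfl

/-! ### profiles -/

open Finset

noncomputable def win (M : ℤ) : Finset ℤ := Finset.Icc 0 (M-1)

lemma mem_win {M z : ℤ} : z ∈ win M ↔ 0 ≤ z ∧ z ≤ M - 1 := by simp [win]

lemma card_win {M : ℤ} (hM : 0 ≤ M) : ((win M).card : ℤ) = M := by
  simp [win, Int.card_Icc]
  omega

/-- down-closed subsets of the window are prefixes -/
lemma mem_down_filter {M : ℤ} (p : ℤ → Prop) [DecidablePred p]
    (hdown : ∀ z₁ z₂, 0 ≤ z₁ → z₁ ≤ z₂ → z₂ ≤ M - 1 → p z₂ → p z₁) (z : ℤ) :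
    z ∈ (win M).filter p ↔ 0 ≤ z ∧ z < (((win M).filter p).card : ℤ) := by
  rcases Finset.eq_empty_or_nonempty ((win M).filter p) with he | hne
  · rw [he]; simp
  · have hmax := Finset.max'_mem _ hne
    set a := Finset.max' _ hne with ha
    rw [Finset.mem_filter, mem_win] at hmax
    have heq : (win M).filter p = Finset.Icc 0 a := by
      apply Finset.ext
      intro w
      rw [Finset.mem_filter, mem_win, Finset.mem_Icc]
      constructor
      · rintro ⟨⟨h0, h1⟩, h2⟩
        exact ⟨h0, Finset.le_max' _ w (by rw [Finset.mem_filter, mem_win]; exact ⟨⟨h0, h1⟩, h2⟩)⟩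
      · rintro ⟨h0, h1⟩
        exact ⟨⟨h0, le_trans h1 hmax.1.2⟩, hdown w a h0 h1 hmax.1.2 hmax.2⟩
    rw [heq]
    rw [heq] at *
    simp [Int.card_Icc]
    omega

/-- up-closed subsets of the window are suffixes -/
lemma mem_up_filter {M : ℤ} (p : ℤ → Prop) [DecidablePred p]
    (hup : ∀ z₁ z₂, 0 ≤ z₁ → z₁ ≤ z₂ → z₂ ≤ M - 1 → p z₁ → p z₂) (z : ℤ) :
    z ∈ (win M).filter p ↔ M - (((win M).filter p).card : ℤ) ≤ z ∧ z ≤ M - 1 := by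
  rcases Finset.eq_empty_or_nonempty ((win M).filter p) with he | hne
  · rw [he]; simp
  · have hmin := Finset.min'_mem _ hne
    set a := Finset.min' _ hne with ha
    rw [Finset.mem_filter, mem_win] at hmin
    have heq : (win M).filter p = Finset.Icc a (M-1) := by
      apply Finset.ext
      intro w
      rw [Finset.mem_filter, mem_win, Finset.mem_Icc]
      constructor
      · rintro ⟨⟨h0, h1⟩, h2⟩
        exact ⟨Finset.min'_le _ w (by rw [Finset.mem_filter, mem_win]; exact ⟨⟨h0, h1⟩, h2⟩), h1⟩
      · rintro ⟨h0, h1⟩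
        exact ⟨⟨le_trans hmin.1.1 h0, h1⟩, hup a w hmin.1.1 h0 h1 hmin.2⟩
    rw [heq]
    rw [heq] at *
    simp [Int.card_Icc]
    omega

/-- the conjugate profile -/
noncomputable def lamC (M : ℤ) (Λ : ℤ → ℤ) (t : ℤ) : ℤ := (((win M).filter (fun z => t < Λ z)).card : ℤ)

lemma lamC_nonneg (M : ℤ) (Λ : ℤ → ℤ) (t : ℤ) : 0 ≤ lamC M Λ t := Int.ofNat_nonneg _

lemma lamC_anti (M : ℤ) (Λ : ℤ → ℤ) {t₁ t₂ : ℤ} (h : t₁ ≤ t₂) :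
    lamC M Λ t₂ ≤ lamC M Λ t₁ := by
  unfold lamC
  have hsub : (win M).filter (fun z => t₂ < Λ z) ⊆ (win M).filter (fun z => t₁ < Λ z) := by
    intro z hz
    rw [Finset.mem_filter] at *
    exact ⟨hz.1, by omega⟩
  exact_mod_cast Finset.card_le_card hsub

lemma lamC_le_M (M : ℤ) (Λ : ℤ → ℤ) (t : ℤ) (hM : 0 ≤ M) : lamC M Λ t ≤ M := by
  unfold lamC
  calc (_ : ℤ) ≤ ((win M).card : ℤ) := by exact_mod_cast Finset.card_le_card (Finset.filter_subset _ _)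
  _ = M := card_win hM

structure Good (M : ℤ) (Λ : ℤ → ℤ) : Prop where
  mono : ∀ ⦃z₁ z₂ : ℤ⦄, 0 ≤ z₁ → z₁ ≤ z₂ → z₂ ≤ M - 1 → Λ z₁ ≤ Λ z₂
  nonneg : ∀ z, 0 ≤ z → z ≤ M - 1 → 0 ≤ Λ z
  bound : Λ (M-1) + lamC M Λ 0 ≤ M - 1

namespace Good

/-- the fundamental conjugation relation -/
lemma conj {M : ℤ} {Λ : ℤ → ℤ} (hG : Good M Λ) {z t : ℤ}
    (h0 : 0 ≤ z) (h1 : z ≤ M - 1) (ht : 1 ≤ t) :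
    t ≤ Λ z ↔ M - z ≤ lamC M Λ (t-1) := by
  have h := mem_up_filter (M := M) (fun w => t - 1 < Λ w)
    (fun z₁ z₂ ha hb hc hp => lt_of_lt_of_le hp (hG.mono ha hb hc)) z
  rw [Finset.mem_filter, mem_win] at h
  unfold lamC
  constructor
  · intro hle
    have := h.mp ⟨⟨h0, h1⟩, by omega⟩
    omega
  · intro hle
    have := h.mpr ⟨by omega, h1⟩
    omega

lemma lam_le_top {M : ℤ} {Λ : ℤ → ℤ} (hG : Good M Λ) {z : ℤ} (h0 : 0 ≤ z) (h1 : z ≤ M - 1) :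
    Λ z ≤ Λ (M-1) := hG.mono h0 h1 (le_refl _)

lemma supp_char {M : ℤ} {Λ : ℤ → ℤ} (hG : Good M Λ) {z : ℤ} (h0 : 0 ≤ z) (h1 : z ≤ M - 1) :
    1 ≤ Λ z ↔ M - lamC M Λ 0 ≤ z := by
  have h := hG.conj h0 h1 (t := 1) (le_refl _)
  have h11 : (1:ℤ) - 1 = 0 := by norm_num
  rw [h11] at h
  omega

lemma lamC_pos_imp {M : ℤ} {Λ : ℤ → ℤ} (hG : Good M Λ) {t : ℤ} (h : 1 ≤ lamC M Λ t) :
    t ≤ Λ (M-1) - 1 := by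
  unfold lamC at h
  have hne : ((win M).filter (fun z => t < Λ z)).Nonempty := by
    rw [← Finset.card_pos]
    omega
  obtain ⟨w, hw⟩ := hne
  rw [Finset.mem_filter, mem_win] at hw
  have := hG.lam_le_top hw.1.1 hw.1.2
  omega

/-- key inequality A -/
lemma keyA {M : ℤ} {Λ : ℤ → ℤ} (hG : Good M Λ) {z₁ z₂ : ℤ}
    (h₁ : 0 ≤ z₁) (h₁' : z₁ ≤ M - 1) (h₂ : 0 ≤ z₂) (h₂' : z₂ ≤ M - 1)
    (hs : z₁ + z₂ ≤ M) : Λ z₁ + Λ z₂ ≤ M - 1 := by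
  by_contra hc
  push_neg at hc
  have hn0 := lamC_nonneg M Λ 0
  have hb := hG.bound
  have ht1 := hG.lam_le_top h₁ h₁'
  have ht2 := hG.lam_le_top h₂ h₂'
  have e1 : 1 ≤ Λ z₁ := by omega
  have e2 : 1 ≤ Λ z₂ := by omega
  have s1 := (hG.supp_char h₁ h₁').mp e1
  have s2 := (hG.supp_char h₂ h₂').mp e2
  omega

/-- key inequality B (conjugate version) -/
lemma keyB {M : ℤ} {Λ : ℤ → ℤ} (hG : Good M Λ) {z₁ z₂ : ℤ} (hM : 1 ≤ M)
    (h₁ : 0 ≤ z₁) (h₂ : 0 ≤ z₂)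
    (hs : M - 2 ≤ z₁ + z₂) : lamC M Λ z₁ + lamC M Λ z₂ ≤ M - 1 := by
  by_contra hc
  push_neg at hc
  have hn0 := hG.nonneg (M-1) (by omega) (le_refl _)
  have hb := hG.bound
  have ht1 := lamC_anti M Λ h₁
  have ht2 := lamC_anti M Λ h₂
  have e1 : 1 ≤ lamC M Λ z₁ := by omega
  have e2 : 1 ≤ lamC M Λ z₂ := by omega
  have s1 := hG.lamC_pos_imp e1
  have s2 := hG.lamC_pos_imp e2
  omega

/-- key inequality C (mixed) -/
lemma keyC {M : ℤ} {Λ : ℤ → ℤ} (hG : Good M Λ) {z₁ z₂ : ℤ}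
    (h₁ : 0 ≤ z₁) (h₁' : z₁ ≤ M - 1) (h₂ : 0 ≤ z₂) :
    Λ z₁ + lamC M Λ z₂ ≤ M - 1 := by
  have h3 := hG.lam_le_top h₁ h₁'
  have h4 := lamC_anti M Λ h₂
  have h5 := hG.bound
  omega

end Good

/-- the combined cut profile -/
noncomputable def LL (M : ℤ) (Λ : ℤ → ℤ) (z : ℤ) : ℤ := max (Λ z) (lamC M Λ z)

lemma Good.LL_nonneg {M : ℤ} {Λ : ℤ → ℤ} (hG : Good M Λ) {z : ℤ} (h0 : 0 ≤ z) (h1 : z ≤ M-1) :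
    0 ≤ LL M Λ z := le_trans (hG.nonneg z h0 h1) (le_max_left _ _)

lemma Good.keyLL {M : ℤ} {Λ : ℤ → ℤ} (hG : Good M Λ) {z₁ z₂ : ℤ}
    (h₁ : 0 ≤ z₁) (h₁' : z₁ ≤ M - 1) (h₂ : 0 ≤ z₂) (h₂' : z₂ ≤ M - 1)
    (hlo : M - 2 ≤ z₁ + z₂) (hhi : z₁ + z₂ ≤ M) :
    LL M Λ z₁ + LL M Λ z₂ ≤ M - 1 := by
  have hM : (1:ℤ) ≤ M := by omega
  unfold LL
  rcases max_cases (Λ z₁) (lamC M Λ z₁) with ⟨he1, _⟩ | ⟨he1, _⟩ <;>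
    rcases max_cases (Λ z₂) (lamC M Λ z₂) with ⟨he2, _⟩ | ⟨he2, _⟩ <;> rw [he1, he2]
  · exact hG.keyA h₁ h₁' h₂ h₂' hhi
  · exact hG.keyC h₁ h₁' h₂
  · have := hG.keyC h₂ h₂' h₁; omega
  · exact hG.keyB hM h₁ h₂ hlo
/-! ### the polyomino associated with a profile -/

noncomputable def boxM (M : ℤ) : Finset Cell := (win M) ×ˢ (win M)

lemma mem_boxM {M : ℤ} {c : Cell} :
    c ∈ boxM M ↔ (0 ≤ c.1 ∧ c.1 ≤ M-1) ∧ (0 ≤ c.2 ∧ c.2 ≤ M-1) := by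
  rw [boxM, Finset.mem_product, mem_win, mem_win]

noncomputable def PofL (M : ℤ) (Λ : ℤ → ℤ) : Finset Cell :=
  (boxM M).filter fun c => Λ c.2 ≤ c.1 ∧ Λ (M-1-c.1) ≤ c.2 ∧
    c.1 + Λ (M-1-c.2) ≤ M-1 ∧ c.2 + Λ c.1 ≤ M-1

lemma mem_PofL {M : ℤ} {Λ : ℤ → ℤ} {x y : ℤ} :
    (x, y) ∈ PofL M Λ ↔ ((0 ≤ x ∧ x ≤ M-1) ∧ (0 ≤ y ∧ y ≤ M-1)) ∧
      (Λ y ≤ x ∧ Λ (M-1-x) ≤ y ∧ x + Λ (M-1-y) ≤ M-1 ∧ y + Λ x ≤ M-1) := by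
  rw [PofL, Finset.mem_filter, mem_boxM]

/-- row characterisation -/
lemma Good.row_char {M : ℤ} {Λ : ℤ → ℤ} (hG : Good M Λ) {x y : ℤ}
    (hy0 : 0 ≤ y) (hy1 : y ≤ M - 1) :
    (x, y) ∈ PofL M Λ ↔ LL M Λ y ≤ x ∧ x + LL M Λ (M-1-y) ≤ M-1 := by
  rw [mem_PofL]
  constructor
  · rintro ⟨⟨⟨hx0, hx1⟩, _⟩, h1, h2, h3, h4⟩
    constructor
    · rw [LL, max_le_iff]
      refine ⟨h1, ?_⟩
      by_contra hc
      push_neg at hc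
      have := (hG.conj (z := M-1-x) (t := y+1) (by omega) (by omega) (by omega)).mpr
        (by rw [show y+1-1 = y by ring]; omega)
      omega
    · rw [LL]
      rcases max_cases (Λ (M-1-y)) (lamC M Λ (M-1-y)) with ⟨he, _⟩ | ⟨he, _⟩
      · omega
      · rw [he]
        by_contra hc
        push_neg at hc
        have := (hG.conj (z := x) (t := M-y) hx0 hx1 (by omega)).mpr
          (by rw [show M-y-1 = M-1-y by ring]; omega)
        omega
  · rintro ⟨h1, h2⟩
    have hL1 : 0 ≤ LL M Λ y := hG.LL_nonneg hy0 hy1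
    have hL2 : 0 ≤ LL M Λ (M-1-y) := hG.LL_nonneg (by omega) (by omega)
    have hx0 : 0 ≤ x := by omega
    have hx1 : x ≤ M - 1 := by omega
    have e1 : Λ y ≤ x := le_trans (le_max_left _ _) h1
    have e1' : lamC M Λ y ≤ x := le_trans (le_max_right _ _) h1
    have e3 : x + Λ (M-1-y) ≤ M - 1 := by
      have := le_max_left (Λ (M-1-y)) (lamC M Λ (M-1-y)); rw [← LL] at this; omega
    have e3' : x + lamC M Λ (M-1-y) ≤ M-1 := by
      have := le_max_right (Λ (M-1-y)) (lamC M Λ (M-1-y)); rw [← LL] at this; omega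
    refine ⟨⟨⟨hx0, hx1⟩, ⟨hy0, hy1⟩⟩, e1, ?_, e3, ?_⟩
    · by_contra hc
      push_neg at hc
      have := (hG.conj (z := M-1-x) (t := y+1) (by omega) (by omega) (by omega)).mp (by omega)
      rw [show y+1-1 = y by ring] at this
      omega
    · by_contra hc
      push_neg at hc
      have := (hG.conj (z := x) (t := M-y) hx0 hx1 (by omega)).mp (by omega)
      rw [show M-y-1 = M-1-y by ring] at this
      omega

def rho (M : ℤ) (c : Cell) : Cell := (M-1-c.2, c.1)

lemma Good.mem_rho {M : ℤ} {Λ : ℤ → ℤ} {c : Cell} :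
    c ∈ PofL M Λ ↔ rho M c ∈ PofL M Λ := by
  obtain ⟨x, y⟩ := c
  rw [show rho M (x, y) = (M-1-y, x) from rfl, mem_PofL, mem_PofL]
  rw [show M-1-(M-1-y) = y by ring]
  constructor <;> intro h <;> omega

/-- column characterisation -/
lemma Good.col_char {M : ℤ} {Λ : ℤ → ℤ} (hG : Good M Λ) {x y : ℤ}
    (hx0 : 0 ≤ x) (hx1 : x ≤ M - 1) :
    (x, y) ∈ PofL M Λ ↔ LL M Λ (M-1-x) ≤ y ∧ y + LL M Λ x ≤ M-1 := by
  rw [Good.mem_rho (M := M), show rho M (x, y) = (M-1-y, x) from rfl, hG.row_char hx0 hx1]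
  constructor <;> rintro ⟨a, b⟩ <;> constructor <;> omega

lemma Good.row_nonempty {M : ℤ} {Λ : ℤ → ℤ} (hG : Good M Λ) {y : ℤ}
    (hy0 : 0 ≤ y) (hy1 : y ≤ M - 1) : (LL M Λ y, y) ∈ PofL M Λ := by
  rw [hG.row_char hy0 hy1]
  exact ⟨le_refl _, hG.keyLL hy0 hy1 (by omega) (by omega) (by omega) (by omega)⟩

lemma Good.col_nonempty {M : ℤ} {Λ : ℤ → ℤ} (hG : Good M Λ) {x : ℤ}
    (hx0 : 0 ≤ x) (hx1 : x ≤ M - 1) : (x, LL M Λ (M-1-x)) ∈ PofL M Λ := by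
  rw [hG.col_char hx0 hx1]
  exact ⟨le_refl _, hG.keyLL (by omega) (by omega) hx0 hx1 (by omega) (by omega)⟩

lemma Good.fst_image {M : ℤ} {Λ : ℤ → ℤ} (hG : Good M Λ) :
    (PofL M Λ).image Prod.fst = win M := by
  apply Finset.Subset.antisymm
  · intro x hx
    rw [Finset.mem_image] at hx
    obtain ⟨c, hc, rfl⟩ := hx
    rw [PofL, Finset.mem_filter, mem_boxM] at hc
    rw [mem_win]
    exact hc.1.1
  · intro x hx
    rw [mem_win] at hx
    rw [Finset.mem_image]
    exact ⟨(x, LL M Λ (M-1-x)), hG.col_nonempty hx.1 hx.2, rfl⟩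

lemma Good.snd_image {M : ℤ} {Λ : ℤ → ℤ} (hG : Good M Λ) :
    (PofL M Λ).image Prod.snd = win M := by
  apply Finset.Subset.antisymm
  · intro y hy
    rw [Finset.mem_image] at hy
    obtain ⟨c, hc, rfl⟩ := hy
    rw [PofL, Finset.mem_filter, mem_boxM] at hc
    rw [mem_win]
    exact hc.1.2
  · intro y hy
    rw [mem_win] at hy
    rw [Finset.mem_image]
    exact ⟨(LL M Λ y, y), hG.row_nonempty hy.1 hy.2, rfl⟩

lemma Good.convex {M : ℤ} {Λ : ℤ → ℤ} (hG : Good M Λ) : IsConvexPoly (PofL M Λ) := by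
  constructor
  · intro x y₁ y₂ y h1 h2 hl hr
    have hx : 0 ≤ x ∧ x ≤ M - 1 := by
      rw [PofL, Finset.mem_filter, mem_boxM] at h1; exact h1.1.1
    have hy1 : 0 ≤ y₁ ∧ y₁ ≤ M-1 := by
      rw [PofL, Finset.mem_filter, mem_boxM] at h1; exact h1.1.2
    have hy2 : 0 ≤ y₂ ∧ y₂ ≤ M-1 := by
      rw [PofL, Finset.mem_filter, mem_boxM] at h2; exact h2.1.2
    rw [hG.col_char hx.1 hx.2] at h1 h2 ⊢
    omega
  · intro y x₁ x₂ x h1 h2 hl hr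
    have hy : 0 ≤ y ∧ y ≤ M - 1 := by
      rw [PofL, Finset.mem_filter, mem_boxM] at h1; exact h1.1.2
    rw [hG.row_char hy.1 hy.2] at h1 h2 ⊢
    omega
/-! ### connectivity of PofL -/


def adjRel (P : Finset Cell) : Cell → Cell → Prop :=
  fun c d => c ∈ P ∧ d ∈ P ∧ (c.1 - d.1).natAbs + (c.2 - d.2).natAbs = 1

lemma adjRel_symm (P : Finset Cell) : Symmetric (adjRel P) := by
  intro a b ⟨h1, h2, h3⟩
  exact ⟨h2, h1, by omega⟩

/-- walking along a row -/
lemma row_walk {P : Finset Cell} (hconv : IsConvexPoly P) {y : ℤ} :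
    ∀ (n : ℕ) (x₁ x₂ : ℤ), x₂ = x₁ + n → (x₁, y) ∈ P → (x₂, y) ∈ P →
      Relation.ReflTransGen (adjRel P) (x₁, y) (x₂, y) := by
  intro n
  induction n with
  | zero => intro x₁ x₂ h _ _; rw [show x₂ = x₁ by omega]
  | succ n ih =>
    intro x₁ x₂ h h1 h2
    have hmid : (x₁ + n, y) ∈ P := hconv.2 y x₁ x₂ _ h1 h2 (by omega) (by omega)
    refine Relation.ReflTransGen.tail (ih x₁ (x₁ + n) rfl h1 hmid) ?_
    exact ⟨hmid, h2, by omega⟩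

lemma row_conn {P : Finset Cell} (hconv : IsConvexPoly P) {y x₁ x₂ : ℤ}
    (h1 : (x₁, y) ∈ P) (h2 : (x₂, y) ∈ P) :
    Relation.ReflTransGen (adjRel P) (x₁, y) (x₂, y) := by
  rcases le_or_gt x₁ x₂ with h | h
  · exact row_walk hconv (x₂ - x₁).toNat x₁ x₂ (by omega) h1 h2
  · haveI : Std.Symm (adjRel P) := ⟨fun a b h => adjRel_symm P h⟩
    exact Std.Symm.symm _ _
      (row_walk hconv (x₁ - x₂).toNat x₂ x₁ (by omega) h2 h1)

lemma Good.conn {M : ℤ} {Λ : ℤ → ℤ} (hG : Good M Λ) :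
    ∀ a ∈ PofL M Λ, ∀ b ∈ PofL M Λ, Relation.ReflTransGen (adjRel (PofL M Λ)) a b := by
  have key : ∀ (n : ℕ) (a b : Cell), a ∈ PofL M Λ → b ∈ PofL M Λ → b.2 = a.2 + n →
      Relation.ReflTransGen (adjRel (PofL M Λ)) a b := by
    intro n
    induction n with
    | zero =>
      intro a b ha hb h
      obtain ⟨x₁, y⟩ := a
      obtain ⟨x₂, y₂⟩ := b
      simp only at h
      have : y₂ = y := by omega
      subst this
      exact row_conn hG.convex ha hb
    | succ n ih =>
      intro a b ha hb h
      obtain ⟨x₁, y⟩ := a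
      obtain ⟨x₂, y₂⟩ := b
      simp only at h
      have hy : 0 ≤ y ∧ y ≤ M - 1 := by
        rw [PofL, Finset.mem_filter, mem_boxM] at ha; exact ha.1.2
      have hy2 : 0 ≤ y₂ ∧ y₂ ≤ M - 1 := by
        rw [PofL, Finset.mem_filter, mem_boxM] at hb; exact hb.1.2
      have hyw : y + 1 ≤ M - 1 := by omega
      have k1 := hG.keyLL hy.1 hy.2 (show (0:ℤ) ≤ M-1-y by omega) (by omega)
        (by omega) (by omega)
      have k2 := hG.keyLL (show (0:ℤ) ≤ y+1 by omega) hyw (show (0:ℤ) ≤ M-1-y by omega)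
        (by omega) (by omega) (by omega)
      have k3 := hG.keyLL hy.1 hy.2 (show (0:ℤ) ≤ M-1-(y+1) by omega) (by omega)
        (by omega) (by omega)
      have k4 := hG.keyLL (show (0:ℤ) ≤ y+1 by omega) hyw (show (0:ℤ) ≤ M-1-(y+1) by omega)
        (by omega) (by omega) (by omega)
      have hu1 : (max (LL M Λ y) (LL M Λ (y+1)), y) ∈ PofL M Λ := by
        rw [hG.row_char hy.1 hy.2]
        omega
      have hu2 : (max (LL M Λ y) (LL M Λ (y+1)), y+1) ∈ PofL M Λ := by
        rw [hG.row_char (by omega : (0:ℤ) ≤ y+1) hyw]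
        omega
      have step1 : Relation.ReflTransGen (adjRel (PofL M Λ)) (x₁, y)
          (max (LL M Λ y) (LL M Λ (y+1)), y) := row_conn hG.convex ha hu1
      have step2 : Relation.ReflTransGen (adjRel (PofL M Λ))
          (max (LL M Λ y) (LL M Λ (y+1)), y) (max (LL M Λ y) (LL M Λ (y+1)), y+1) :=
        Relation.ReflTransGen.single ⟨hu1, hu2, by omega⟩
      have step3 : Relation.ReflTransGen (adjRel (PofL M Λ))
          (max (LL M Λ y) (LL M Λ (y+1)), y+1) (x₂, y₂) :=
        ih _ (x₂, y₂) hu2 hb (by show y₂ = (y+1) + (n:ℤ); omega)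
      exact (step1.trans step2).trans step3
  intro a ha b hb
  rcases le_or_gt a.2 b.2 with h | h
  · exact key (b.2 - a.2).toNat a b ha hb (by omega)
  · haveI : Std.Symm (adjRel (PofL M Λ)) := ⟨fun a b h => adjRel_symm _ h⟩
    exact Std.Symm.symm _ _
      (key (a.2 - b.2).toNat b a hb ha (by omega))

lemma Good.polyomino {M : ℤ} {Λ : ℤ → ℤ} (hG : Good M Λ) (hM : 1 ≤ M) :
    IsPolyomino (PofL M Λ) := by
  constructor
  · exact ⟨_, hG.row_nonempty (y := 0) (by omega) (by omega)⟩
  · exact hG.conn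

/-! ### rotation symmetry of PofL -/

lemma Good.rho_image {M : ℤ} {Λ : ℤ → ℤ} :
    (PofL M Λ).image (rho M) = PofL M Λ := by
  apply Finset.ext
  intro c
  rw [Finset.mem_image]
  constructor
  · rintro ⟨d, hd, rfl⟩
    exact Good.mem_rho.mp hd
  · intro hc
    refine ⟨(c.2, M-1-c.1), ?_, ?_⟩
    · rw [Good.mem_rho (M := M)]
      rw [show rho M (c.2, M-1-c.1) = (M-1-(M-1-c.1), c.2) from rfl]
      rw [show M-1-(M-1-c.1) = c.1 by ring]
      rw [show ((c.1 : ℤ), c.2) = c from rfl]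
      exact hc
    · rw [show rho M (c.2, M-1-c.1) = (M-1-(M-1-c.1), c.2) from rfl]
      rw [show M-1-(M-1-c.1) = c.1 by ring]

lemma Good.symBy {M : ℤ} {Λ : ℤ → ℤ} : SymBy rotMap (PofL M Λ) := by
  refine ⟨(1-M, 0), ?_⟩
  have h := Good.rho_image (M := M) (Λ := Λ)
  conv_rhs => rw [← h]
  rw [cellTranslate, Finset.image_image]
  congr 1
  funext c
  simp [rho, rotMap]
  ring

/-! ### reconstruction of the profile from the polyomino -/

def rectDead (M : ℤ) (P : Finset Cell) (y : ℤ) (x : ℤ) : Prop :=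
  ∀ x' ∈ Finset.Icc 0 x, ∀ y' ∈ Finset.Icc y (M-1), (x', y') ∉ P

noncomputable instance {M : ℤ} {P : Finset Cell} {y : ℤ} : DecidablePred (rectDead M P y) := by
  intro x
  unfold rectDead
  infer_instance

noncomputable def lamR (M : ℤ) (P : Finset Cell) (y : ℤ) : ℤ :=
  (((win M).filter (rectDead M P y)).card : ℤ)

lemma lamR_nonneg (M : ℤ) (P : Finset Cell) (y : ℤ) : 0 ≤ lamR M P y := by
  unfold lamR; positivity

lemma lamR_mono (M : ℤ) (P : Finset Cell) : ∀ ⦃z₁ z₂ : ℤ⦄, 0 ≤ z₁ → z₁ ≤ z₂ → z₂ ≤ M - 1 →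
    lamR M P z₁ ≤ lamR M P z₂ := by
  intro z₁ z₂ _ h _
  unfold lamR
  have hsub : (win M).filter (rectDead M P z₁) ⊆ (win M).filter (rectDead M P z₂) := by
    intro x hx
    rw [Finset.mem_filter] at *
    refine ⟨hx.1, fun x' hx' y' hy' => hx.2 x' hx' y' ?_⟩
    rw [Finset.mem_Icc] at *
    omega
  exact_mod_cast Finset.card_le_card hsub

/-- the rectangle-condition set is a prefix -/
lemma lamR_mem (M : ℤ) (P : Finset Cell) (y : ℤ) (x : ℤ) :
    x ∈ (win M).filter (rectDead M P y) ↔ 0 ≤ x ∧ x < lamR M P y := by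
  refine mem_down_filter _ (fun z₁ z₂ h0 h1 _ hp => ?_) x
  intro x' hx' y' hy'
  refine hp x' ?_ y' hy'
  rw [Finset.mem_Icc] at *
  omega
/-! ### lamR recovers the profile -/

lemma Good.lamR_PofL {M : ℤ} {Λ : ℤ → ℤ} (hG : Good M Λ) {y : ℤ}
    (hy0 : 0 ≤ y) (hy1 : y ≤ M - 1) : lamR M (PofL M Λ) y = Λ y := by
  have hset : (win M).filter (rectDead M (PofL M Λ) y) = Finset.Ico 0 (Λ y) := by
    apply Finset.ext
    intro x
    rw [Finset.mem_filter, mem_win, Finset.mem_Ico]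
    constructor
    · rintro ⟨⟨hx0, hx1⟩, hrect⟩
      refine ⟨hx0, ?_⟩
      by_contra hc
      push_neg at hc
      rcases le_or_gt (LL M Λ y) x with lel | ltl
      · -- witness in row y
        have hkey := hG.keyLL hy0 hy1 (show (0:ℤ) ≤ M-1-y by omega) (by omega) (by omega)
          (by omega)
        have hL0 : 0 ≤ LL M Λ y := hG.LL_nonneg hy0 hy1
        have h1 : LL M Λ y ≤ min x (M-1-LL M Λ (M-1-y)) := le_min lel (by omega)
        have h3 : min x (M-1-LL M Λ (M-1-y)) ≤ x := min_le_left _ _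
        have h2 : min x (M-1-LL M Λ (M-1-y)) + LL M Λ (M-1-y) ≤ M-1 := by
          have h4 := min_le_right x (M-1-LL M Λ (M-1-y))
          exact add_le_of_le_sub_right h4
        have hw : (min x (M-1-LL M Λ (M-1-y)), y) ∈ PofL M Λ := by
          rw [hG.row_char hy0 hy1]
          exact ⟨h1, h2⟩
        exact hrect _ (Finset.mem_Icc.mpr ⟨le_trans hL0 h1, h3⟩) y
          (Finset.mem_Icc.mpr ⟨le_refl y, hy1⟩) hw
      · -- x is in the SW shadow: witness at the top of column x
        have hcy : x + 1 ≤ lamC M Λ y := by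
          have hLLdef : LL M Λ y = max (Λ y) (lamC M Λ y) := rfl
          rw [hLLdef] at ltl
          rcases max_cases (Λ y) (lamC M Λ y) with ⟨he, _⟩ | ⟨he, _⟩ <;> rw [he] at ltl <;> omega
        have hLam : y + 1 ≤ Λ (M-1-x) := by
          have := (hG.conj (z := M-1-x) (t := y+1) (by omega) (by omega) (by omega)).mpr
            (by rw [show y+1-1 = y by ring]; omega)
          exact this
        have hx1' : Λ x ≤ M-1-y := by
          by_contra hcc
          push_neg at hcc
          have := hG.keyA (z₁ := x) (z₂ := M-1-x) hx0 hx1 (by omega) (by omega) (by omega)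
          omega
        have hx2' : lamC M Λ x ≤ M-1-y := by
          by_contra hcc
          push_neg at hcc
          have := (hG.conj (z := y) (t := x+1) hy0 hy1 (by omega)).mpr
            (by rw [show x+1-1 = x by ring]; omega)
          omega
        have hLLx : LL M Λ x ≤ M-1-y := by
          rw [LL]; omega
        have hLLx0 : 0 ≤ LL M Λ x := hG.LL_nonneg hx0 hx1
        have hw : (x, M-1-LL M Λ x) ∈ PofL M Λ := by
          rw [hG.col_char hx0 hx1]
          have := hG.keyLL (show (0:ℤ) ≤ M-1-x by omega) (by omega) hx0 hx1 (by omega) (by omega)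
          omega
        exact hrect x (by rw [Finset.mem_Icc]; omega) _ (by rw [Finset.mem_Icc]; omega) hw
    · rintro ⟨hx0, hxl⟩
      have htop := hG.lam_le_top hy0 hy1
      have hb := hG.bound
      have hl0 := lamC_nonneg M Λ 0
      refine ⟨⟨hx0, by omega⟩, ?_⟩
      intro x' hx' y' hy' hmem
      rw [Finset.mem_Icc] at hx' hy'
      rw [hG.row_char (by omega) (by omega)] at hmem
      have hmono := hG.mono hy0 hy'.1 hy'.2
      have := le_max_left (Λ y') (lamC M Λ y')
      rw [show max (Λ y') (lamC M Λ y') = LL M Λ y' from rfl] at this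
      omega
  rw [lamR, hset]
  rw [Int.card_Ico]
  have := hG.nonneg y hy0 hy1
  omega

/-- PofL only depends on window values of the profile -/
lemma PofL_congr {M : ℤ} {Λ₁ Λ₂ : ℤ → ℤ}
    (h : ∀ z, 0 ≤ z → z ≤ M - 1 → Λ₁ z = Λ₂ z) : PofL M Λ₁ = PofL M Λ₂ := by
  apply Finset.ext
  rintro ⟨x, y⟩
  rw [mem_PofL, mem_PofL]
  constructor
  · rintro ⟨⟨hx, hy⟩, h1, h2, h3, h4⟩
    rw [h y hy.1 hy.2, h (M-1-x) (by omega) (by omega), h (M-1-y) (by omega) (by omega),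
      h x hx.1 hx.2] at *
    exact ⟨⟨hx, hy⟩, h1, h2, h3, h4⟩
  · rintro ⟨⟨hx, hy⟩, h1, h2, h3, h4⟩
    rw [h y hy.1 hy.2, h (M-1-x) (by omega) (by omega), h (M-1-y) (by omega) (by omega),
      h x hx.1 hx.2]
    exact ⟨⟨hx, hy⟩, h1, h2, h3, h4⟩

lemma Good.width_PofL {M : ℤ} {Λ : ℤ → ℤ} (hG : Good M Λ) (hM : 0 ≤ M) :
    (width (PofL M Λ) : ℤ) = M := by
  rw [width, hG.fst_image, card_win hM]

lemma Good.height_PofL {M : ℤ} {Λ : ℤ → ℤ} (hG : Good M Λ) (hM : 0 ≤ M) :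
    (height (PofL M Λ) : ℤ) = M := by
  rw [height, hG.snd_image, card_win hM]
/-! ### rows and columns of a general convex polyomino -/

def rowImg (P : Finset Cell) (y : ℤ) : Finset ℤ :=
  (P.filter (fun c => c.2 = y)).image Prod.fst

noncomputable def lP (P : Finset Cell) (y : ℤ) : ℤ := WithTop.untopD 0 (rowImg P y).min

noncomputable def rP (P : Finset Cell) (y : ℤ) : ℤ := WithBot.unbotD 0 (rowImg P y).max

lemma lP_eq_min' {P : Finset Cell} {y : ℤ} (hne : (rowImg P y).Nonempty) :
    lP P y = (rowImg P y).min' hne := by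
  have h2 : ((rowImg P y).min' hne : WithTop ℤ) = (rowImg P y).min := Finset.coe_min' hne
  rw [lP, ← h2]
  rfl

lemma rP_eq_max' {P : Finset Cell} {y : ℤ} (hne : (rowImg P y).Nonempty) :
    rP P y = (rowImg P y).max' hne := by
  have h2 : ((rowImg P y).max' hne : WithBot ℤ) = (rowImg P y).max := Finset.coe_max' hne
  rw [rP, ← h2]
  rfl

lemma mem_rowImg {P : Finset Cell} {y x : ℤ} : x ∈ rowImg P y ↔ (x, y) ∈ P := by
  rw [rowImg, Finset.mem_image]
  constructor
  · rintro ⟨c, hc, rfl⟩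
    rw [Finset.mem_filter] at hc
    obtain ⟨h1, h2⟩ := hc
    rwa [← h2, Prod.mk.eta]
  · intro h
    exact ⟨(x, y), by rw [Finset.mem_filter]; exact ⟨h, rfl⟩, rfl⟩

lemma lP_mem {P : Finset Cell} {y : ℤ} (hne : (rowImg P y).Nonempty) : (lP P y, y) ∈ P := by
  rw [← mem_rowImg, lP_eq_min' hne]
  exact Finset.min'_mem _ hne

lemma rP_mem {P : Finset Cell} {y : ℤ} (hne : (rowImg P y).Nonempty) : (rP P y, y) ∈ P := by
  rw [← mem_rowImg, rP_eq_max' hne]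
  exact Finset.max'_mem _ hne

lemma lP_le {P : Finset Cell} {y x : ℤ} (h : (x, y) ∈ P) : lP P y ≤ x := by
  have hne : (rowImg P y).Nonempty := ⟨x, mem_rowImg.mpr h⟩
  rw [lP_eq_min' hne]
  exact Finset.min'_le _ _ (mem_rowImg.mpr h)

lemma le_rP {P : Finset Cell} {y x : ℤ} (h : (x, y) ∈ P) : x ≤ rP P y := by
  have hne : (rowImg P y).Nonempty := ⟨x, mem_rowImg.mpr h⟩
  rw [rP_eq_max' hne]
  exact Finset.le_max' _ _ (mem_rowImg.mpr h)

lemma mem_row_iff {P : Finset Cell} (hconv : IsConvexPoly P) {y : ℤ}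
    (hne : (rowImg P y).Nonempty) (x : ℤ) :
    (x, y) ∈ P ↔ lP P y ≤ x ∧ x ≤ rP P y := by
  constructor
  · intro h
    exact ⟨lP_le h, le_rP h⟩
  · rintro ⟨h1, h2⟩
    exact hconv.2 y _ _ x (lP_mem hne) (rP_mem hne) h1 h2

/-! ### crossing lemmas -/

lemma cross_horiz {P : Finset Cell} (hpoly : IsPolyomino P) {y : ℤ} {a b : Cell}
    (ha : a ∈ P) (hb : b ∈ P) (hay : a.2 ≤ y) (hby : y < b.2) :
    ∃ x, (x, y) ∈ P ∧ (x, y+1) ∈ P := by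
  have key : ∀ b : Cell, Relation.ReflTransGen (adjRel P) a b → y < b.2 →
      ∃ x, (x, y) ∈ P ∧ (x, y+1) ∈ P := by
    intro b hpath
    induction hpath with
    | refl => intro h; omega
    | @tail p q hap hpq ih =>
      intro hq
      rcases le_or_gt p.2 y with h | h
      · obtain ⟨hp, hq', hadj⟩ := hpq
        have h1 : q.2 = p.2 + 1 ∧ q.1 = p.1 := by omega
        have h2 : p.2 = y := by omega
        refine ⟨p.1, ?_, ?_⟩
        · rw [← h2]; rwa [Prod.mk.eta]
        · rw [show y + 1 = q.2 by omega, ← h1.2]; rwa [Prod.mk.eta]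
      · exact ih h
  exact key b (hpoly.2 a ha b hb) hby

lemma cross_vert {P : Finset Cell} (hpoly : IsPolyomino P) {x : ℤ} {a b : Cell}
    (ha : a ∈ P) (hb : b ∈ P) (hax : a.1 ≤ x) (hbx : x < b.1) :
    ∃ y, (x, y) ∈ P ∧ (x+1, y) ∈ P := by
  have key : ∀ b : Cell, Relation.ReflTransGen (adjRel P) a b → x < b.1 →
      ∃ y, (x, y) ∈ P ∧ (x+1, y) ∈ P := by
    intro b hpath
    induction hpath with
    | refl => intro h; omega
    | @tail p q hap hpq ih =>
      intro hq
      rcases le_or_gt p.1 x with h | h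
      · obtain ⟨hp, hq', hadj⟩ := hpq
        have h1 : q.1 = p.1 + 1 ∧ q.2 = p.2 := by omega
        have h2 : p.1 = x := by omega
        refine ⟨p.2, ?_, ?_⟩
        · rw [← h2]; rwa [Prod.mk.eta]
        · rw [show x + 1 = q.1 by omega, ← h1.2]; rwa [Prod.mk.eta]
      · exact ih h
  exact key b (hpoly.2 a ha b hb) hbx

/-! ### projections are intervals -/

lemma proj_fst_interval {P : Finset Cell} (hpoly : IsPolyomino P) {a b : Cell}
    (ha : a ∈ P) (hb : b ∈ P) {v : ℤ} (h1 : a.1 ≤ v) (h2 : v ≤ b.1) :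
    v ∈ P.image Prod.fst := by
  rcases eq_or_lt_of_le h2 with he | hlt
  · rw [he]; exact Finset.mem_image_of_mem _ hb
  · obtain ⟨y, hy1, _⟩ := cross_vert hpoly ha hb h1 hlt
    exact Finset.mem_image_of_mem Prod.fst hy1

lemma proj_snd_interval {P : Finset Cell} (hpoly : IsPolyomino P) {a b : Cell}
    (ha : a ∈ P) (hb : b ∈ P) {v : ℤ} (h1 : a.2 ≤ v) (h2 : v ≤ b.2) :
    v ∈ P.image Prod.snd := by
  rcases eq_or_lt_of_le h2 with he | hlt
  · rw [he]; exact Finset.mem_image_of_mem _ hb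
  · obtain ⟨x, hx1, _⟩ := cross_horiz hpoly ha hb h1 hlt
    exact Finset.mem_image_of_mem Prod.snd hx1
/-! ### the master reconstruction lemma -/

def swDead (P : Finset Cell) (y : ℤ) (x : ℤ) : Prop :=
  ∀ x' ∈ Finset.Icc 0 x, ∀ y' ∈ Finset.Icc 0 y, (x', y') ∉ P

noncomputable instance {P : Finset Cell} {y : ℤ} : DecidablePred (swDead P y) := by
  intro x
  unfold swDead
  infer_instance

lemma swDead_mem (M : ℤ) (P : Finset Cell) (y : ℤ) (x : ℤ) :
    x ∈ (win M).filter (swDead P y) ↔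
      0 ≤ x ∧ x < ((((win M).filter (swDead P y)).card : ℤ)) := by
  refine mem_down_filter _ (fun z₁ z₂ h0 h1 _ hp => ?_) x
  intro x' hx' y' hy'
  refine hp x' ?_ y' hy'
  rw [Finset.mem_Icc] at *
  omega

lemma master {M : ℤ} (hM : 2 ≤ M) {P : Finset Cell}
    (hpoly : IsPolyomino P) (hconv : IsConvexPoly P)
    (hrho : ∀ c : Cell, c ∈ P ↔ rho M c ∈ P)
    (hfst : P.image Prod.fst = win M) (hsnd : P.image Prod.snd = win M) :
    Good M (lamR M P) ∧ P = PofL M (lamR M P) := by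
  have hboxmem : ∀ c ∈ P, (0 ≤ c.1 ∧ c.1 ≤ M-1) ∧ (0 ≤ c.2 ∧ c.2 ≤ M-1) := by
    intro c hc
    have h1 : c.1 ∈ P.image Prod.fst := Finset.mem_image_of_mem _ hc
    have h2 : c.2 ∈ P.image Prod.snd := Finset.mem_image_of_mem _ hc
    rw [hfst, mem_win] at h1
    rw [hsnd, mem_win] at h2
    exact ⟨h1, h2⟩
  have hrowNE : ∀ y, 0 ≤ y → y ≤ M-1 → (rowImg P y).Nonempty := by
    intro y h0 h1
    have : y ∈ P.image Prod.snd := by rw [hsnd, mem_win]; exact ⟨h0, h1⟩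
    rw [Finset.mem_image] at this
    obtain ⟨c, hc, rfl⟩ := this
    exact ⟨c.1, mem_rowImg.mpr (by rwa [Prod.mk.eta])⟩
  have hrow : ∀ y, 0 ≤ y → y ≤ M-1 → ∀ x, ((x,y) ∈ P ↔ lP P y ≤ x ∧ x ≤ rP P y) :=
    fun y h0 h1 => mem_row_iff hconv (hrowNE y h0 h1)
  have hlr_le : ∀ y, 0 ≤ y → y ≤ M-1 → lP P y ≤ rP P y := by
    intro y h0 h1
    have := lP_mem (hrowNE y h0 h1)
    exact le_rP this
  have hlbounds : ∀ y, 0 ≤ y → y ≤ M-1 → (0 ≤ lP P y ∧ rP P y ≤ M-1) := by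
    intro y h0 h1
    have hl := hboxmem _ (lP_mem (hrowNE y h0 h1))
    have hr := hboxmem _ (rP_mem (hrowNE y h0 h1))
    exact ⟨hl.1.1, hr.1.2⟩
  have hcolchar : ∀ x, 0 ≤ x → x ≤ M-1 → ∀ y,
      ((x,y) ∈ P ↔ M-1-rP P x ≤ y ∧ y ≤ M-1-lP P x) := by
    intro x h0 h1 y
    rw [hrho (x,y), show rho M (x,y) = (M-1-y, x) from rfl, hrow x h0 h1 (M-1-y)]
    omega
  have hrho2 : ∀ c : Cell, c ∈ P ↔ ((M-1-c.1, M-1-c.2) : Cell) ∈ P := by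
    intro c
    rw [hrho c, hrho (rho M c)]
    rfl
  have hlr_sym : ∀ y, 0 ≤ y → y ≤ M-1 →
      lP P y = M-1-rP P (M-1-y) ∧ rP P y = M-1-lP P (M-1-y) := by
    intro y h0 h1
    have hiff : ∀ x, (lP P y ≤ x ∧ x ≤ rP P y) ↔
        (M-1-rP P (M-1-y) ≤ x ∧ x ≤ M-1-lP P (M-1-y)) := by
      intro x
      rw [← hrow y h0 h1 x, hrho2 (x,y), show ((M-1-(x,y).1, M-1-(x,y).2) : Cell) = (M-1-x, M-1-y) from rfl,
        hrow (M-1-y) (by omega) (by omega) (M-1-x)]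
      omega
    have e1 := hiff (lP P y)
    have e2 := hiff (rP P y)
    have e3 := hiff (M-1-rP P (M-1-y))
    have e4 := hiff (M-1-lP P (M-1-y))
    have f1 := hlr_le y h0 h1
    have f2 := hlr_le (M-1-y) (by omega) (by omega)
    omega
  -- N2 : the conjugate of lamR equals the SW-shadow count
  have hN2 : ∀ y, 0 ≤ y → y ≤ M-1 →
      lamC M (lamR M P) y = (((win M).filter (swDead P y)).card : ℤ) := by
    intro y hy0 hy1
    rw [lamC]
    have hcore : ∀ w, 0 ≤ w → w ≤ M-1 → ((y < lamR M P w) ↔ swDead P y (M-1-w)) := by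
      intro w hw0 hw1
      have h1 := lamR_mem M P w y
      rw [Finset.mem_filter, mem_win] at h1
      constructor
      · intro hlt
        intro a ha b hb hmem
        rw [Finset.mem_Icc] at ha hb
        have hrect : rectDead M P w y := (h1.mpr ⟨hy0, hlt⟩).2
        have : (b, M-1-a) ∈ P := by
          rw [hrho (b, M-1-a), show rho M (b, M-1-a) = (M-1-(M-1-a), b) from rfl,
            show M-1-(M-1-a) = a by ring]
          exact hmem
        exact hrect b (by rw [Finset.mem_Icc]; omega) (M-1-a)
          (by rw [Finset.mem_Icc]; omega) this
      · intro hsw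
        have hrect : rectDead M P w y := by
          intro a ha b hb hmem
          rw [Finset.mem_Icc] at ha hb
          have : (M-1-b, a) ∈ P := by
            rw [← show rho M (a, b) = (M-1-b, a) from rfl]
            exact (hrho (a,b)).mp hmem
          exact hsw (M-1-b) (by rw [Finset.mem_Icc]; omega) a
            (by rw [Finset.mem_Icc]; omega) this
        have := h1.mp ⟨⟨hy0, hy1⟩, hrect⟩
        omega
    have hbij := Finset.card_bij' (s := (win M).filter (fun w => y < lamR M P w))
      (t := (win M).filter (swDead P y))
      (i := fun w _ => M-1-w) (j := fun u _ => M-1-u)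
      (hi := by
        intro w hw
        show M-1-w ∈ (win M).filter (swDead P y)
        rw [Finset.mem_filter, mem_win] at *
        exact ⟨⟨by omega, by omega⟩, (hcore w hw.1.1 hw.1.2).mp hw.2⟩)
      (hj := by
        intro u hu
        show M-1-u ∈ (win M).filter (fun w => y < lamR M P w)
        rw [Finset.mem_filter, mem_win] at *
        refine ⟨⟨by omega, by omega⟩, ?_⟩
        have hmp := (hcore (M-1-u) (by omega) (by omega)).mpr
        rw [show M-1-(M-1-u) = u by ring] at hmp
        exact hmp hu.2)
      (left_inv := by intro w _; omega)
      (right_inv := by intro u _; omega)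
    exact_mod_cast congrArg (Nat.cast : ℕ → ℤ) hbij
  -- N1a
  have hN1a : ∀ y, 0 ≤ y → y ≤ M-1 →
      lamR M P y ≤ lP P y ∧ lamC M (lamR M P) y ≤ lP P y := by
    intro y hy0 hy1
    have hl0 := (hlbounds y hy0 hy1).1
    constructor
    · have hsub : (win M).filter (rectDead M P y) ⊆ Finset.Ico 0 (lP P y) := by
        intro x hx
        have hx' := hx
        rw [Finset.mem_filter, mem_win] at hx'
        rw [Finset.mem_Ico]
        refine ⟨hx'.1.1, ?_⟩
        by_contra hc
        push_neg at hc
        exact hx'.2 (lP P y) (by rw [Finset.mem_Icc]; omega) y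
          (by rw [Finset.mem_Icc]; omega) (lP_mem (hrowNE y hy0 hy1))
      have := Finset.card_le_card hsub
      rw [lamR]
      rw [Int.card_Ico] at this
      omega
    · rw [hN2 y hy0 hy1]
      have hsub : (win M).filter (swDead P y) ⊆ Finset.Ico 0 (lP P y) := by
        intro x hx
        rw [Finset.mem_filter, mem_win] at hx
        rw [Finset.mem_Ico]
        refine ⟨hx.1.1, ?_⟩
        by_contra hc
        push_neg at hc
        exact hx.2 (lP P y) (by rw [Finset.mem_Icc]; omega) y
          (by rw [Finset.mem_Icc]; omega) (lP_mem (hrowNE y hy0 hy1))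
      have := Finset.card_le_card hsub
      rw [Int.card_Ico] at this
      omega
  have hoverlapcol : ∀ x, 0 ≤ x → x + 1 ≤ M-1 → ∃ y', (x,y') ∈ P ∧ (x+1,y') ∈ P := by
    intro x h0 h1
    have hx : x ∈ P.image Prod.fst := by rw [hfst, mem_win]; omega
    have hx1 : x+1 ∈ P.image Prod.fst := by rw [hfst, mem_win]; omega
    rw [Finset.mem_image] at hx hx1
    obtain ⟨a, ha, hax⟩ := hx
    obtain ⟨b, hb, hbx⟩ := hx1
    exact cross_vert hpoly ha hb (by omega) (by omega)
  -- downward propagation of shadows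
  have hshadowA : ∀ y, 0 ≤ y → y ≤ M-1 → ∀ x₀, 0 ≤ x₀ → x₀ ≤ M-1 → x₀ < lP P y →
      M-1-lP P x₀ < y → ∀ n : ℕ, ∀ x', x' = x₀ - n → 0 ≤ x' → M-1-lP P x' < y := by
    intro y hy0 hy1 x₀ h0 h1 hxl hA n
    induction n with
    | zero =>
      intro x' hx' _
      rw [show x' = x₀ by omega]
      exact hA
    | succ n ih =>
      intro x' hx' hx'0
      have hprev := ih (x'+1) (by omega) (by omega)
      have hnm : (x', y) ∉ P := by
        rw [hrow y hy0 hy1 x']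
        omega
      rw [hcolchar x' hx'0 (by omega) y] at hnm
      push_neg at hnm
      rcases le_or_gt (M-1-rP P x') y with hcase | hcase
      · omega
      · obtain ⟨y'', hy''1, hy''2⟩ := hoverlapcol x' hx'0 (by omega)
        rw [hcolchar x' hx'0 (by omega) y''] at hy''1
        rw [hcolchar (x'+1) (by omega) (by omega) y''] at hy''2
        omega
  have hshadowB : ∀ y, 0 ≤ y → y ≤ M-1 → ∀ x₀, 0 ≤ x₀ → x₀ ≤ M-1 → x₀ < lP P y →
      y < M-1-rP P x₀ → ∀ n : ℕ, ∀ x', x' = x₀ - n → 0 ≤ x' → y < M-1-rP P x' := by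
    intro y hy0 hy1 x₀ h0 h1 hxl hB n
    induction n with
    | zero =>
      intro x' hx' _
      rw [show x' = x₀ by omega]
      exact hB
    | succ n ih =>
      intro x' hx' hx'0
      have hprev := ih (x'+1) (by omega) (by omega)
      have hnm : (x', y) ∉ P := by
        rw [hrow y hy0 hy1 x']
        omega
      rw [hcolchar x' hx'0 (by omega) y] at hnm
      push_neg at hnm
      rcases le_or_gt (M-1-rP P x') y with hcase | hcase
      · obtain ⟨y'', hy''1, hy''2⟩ := hoverlapcol x' hx'0 (by omega)
        rw [hcolchar x' hx'0 (by omega) y''] at hy''1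
        rw [hcolchar (x'+1) (by omega) (by omega) y''] at hy''2
        omega
      · exact hcase
  -- N1b
  have hN1b : ∀ y, 0 ≤ y → y ≤ M-1 →
      lP P y ≤ max (lamR M P y) (lamC M (lamR M P) y) := by
    intro y hy0 hy1
    by_contra hc
    push_neg at hc
    set x₀ := max (lamR M P y) (lamC M (lamR M P) y) with hx₀
    have hx₀0 : 0 ≤ x₀ := le_trans (lamR_nonneg M P y) (le_max_left _ _)
    have hx₀M : x₀ ≤ M-1 := by
      have := (hlbounds y hy0 hy1)
      have := hlr_le y hy0 hy1
      have h2 := (hlr_sym y hy0 hy1).2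
      have := (hlbounds (M-1-y) (by omega) (by omega)).1
      omega
    have hnm : (x₀, y) ∉ P := by
      rw [hrow y hy0 hy1 x₀]
      omega
    rw [hcolchar x₀ hx₀0 hx₀M y] at hnm
    push_neg at hnm
    rcases le_or_gt (M-1-rP P x₀) y with hcase | hcase
    · -- NW shadow: x₀ is in the rectDead prefix
      have hA : M-1-lP P x₀ < y := by omega
      have hmem : x₀ ∈ (win M).filter (rectDead M P y) := by
        rw [Finset.mem_filter, mem_win]
        refine ⟨⟨hx₀0, hx₀M⟩, ?_⟩
        intro x' hx' y' hy' hmemP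
        rw [Finset.mem_Icc] at hx' hy'
        have hsh := hshadowA y hy0 hy1 x₀ hx₀0 hx₀M hc hA (x₀ - x').toNat x' (by omega) hx'.1
        rw [hcolchar x' hx'.1 (by omega) y'] at hmemP
        omega
      rw [lamR_mem] at hmem
      omega
    · -- SW shadow
      have hmem : x₀ ∈ (win M).filter (swDead P y) := by
        rw [Finset.mem_filter, mem_win]
        refine ⟨⟨hx₀0, hx₀M⟩, ?_⟩
        intro x' hx' y' hy' hmemP
        rw [Finset.mem_Icc] at hx' hy'
        have hsh := hshadowB y hy0 hy1 x₀ hx₀0 hx₀M hc hcase (x₀ - x').toNat x' (by omega) hx'.1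
        rw [hcolchar x' hx'.1 (by omega) y'] at hmemP
        omega
      rw [swDead_mem] at hmem
      have := hN2 y hy0 hy1
      omega
  have hLLeq : ∀ y, 0 ≤ y → y ≤ M-1 → lP P y = LL M (lamR M P) y := by
    intro y hy0 hy1
    have h1 := hN1a y hy0 hy1
    have h2 := hN1b y hy0 hy1
    rw [LL]
    omega
  have hGood : Good M (lamR M P) := by
    refine ⟨lamR_mono M P, fun z _ _ => lamR_nonneg M P z, ?_⟩
    have h1 := (hN1a (M-1) (by omega) (le_refl _)).1
    have h2 := (hN1a 0 (le_refl _) (by omega)).2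
    have h3 := hlr_le (M-1) (by omega) (le_refl _)
    have h4 := (hlr_sym (M-1) (by omega) (le_refl _)).2
    rw [show M-1-(M-1) = (0:ℤ) by ring] at h4
    have h5 : lamC M (lamR M P) 0 ≤ lamC M (lamR M P) 0 := le_refl _
    omega
  refine ⟨hGood, ?_⟩
  apply Finset.ext
  rintro ⟨x, y⟩
  constructor
  · intro hmem
    have hb := hboxmem _ hmem
    simp only at hb
    rw [hrow y hb.2.1 hb.2.2 x] at hmem
    rw [hGood.row_char hb.2.1 hb.2.2]
    have e1 := hLLeq y hb.2.1 hb.2.2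
    have e2 := hLLeq (M-1-y) (by omega) (by omega)
    have e3 := (hlr_sym y hb.2.1 hb.2.2).2
    omega
  · intro hmem
    have hb : (0 ≤ x ∧ x ≤ M-1) ∧ (0 ≤ y ∧ y ≤ M-1) := (mem_PofL.mp hmem).1
    rw [hGood.row_char hb.2.1 hb.2.2] at hmem
    rw [hrow y hb.2.1 hb.2.2 x]
    have e1 := hLLeq y hb.2.1 hb.2.2
    have e2 := hLLeq (M-1-y) (by omega) (by omega)
    have e3 := (hlr_sym y hb.2.1 hb.2.2).2
    omega
/-! ### encoding profiles by subsets -/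

noncomputable def SofL (M : ℤ) (Λ : ℤ → ℤ) : Finset ℤ :=
  (Finset.Ico (M - lamC M Λ 0) M).image (fun z => Λ z + z - (M - lamC M Λ 0))

noncomputable def LofS (M : ℤ) (S : Finset ℤ) (z : ℤ) : ℤ :=
  if h : 0 ≤ z - (M - S.card) ∧ z - (M - S.card) < (S.card : ℤ) then
    S.orderEmbOfFin rfl ⟨(z - (M - S.card)).toNat, by omega⟩ - (z - (M - S.card))
  else 0

lemma LofS_in (M : ℤ) (S : Finset ℤ) {z : ℤ}
    (h : 0 ≤ z - (M - S.card) ∧ z - (M - S.card) < (S.card : ℤ)) :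
    LofS M S z = S.orderEmbOfFin rfl ⟨(z - (M - S.card)).toNat, by omega⟩ - (z - (M - S.card)) :=
  dif_pos h

lemma strictMono_gap {k : ℕ} (f : Fin k → ℤ) (hf : StrictMono f) :
    ∀ (n : ℕ) (i j : Fin k), (j : ℕ) = (i : ℕ) + n → f i + (n : ℤ) ≤ f j := by
  intro n
  induction n with
  | zero =>
    intro i j h
    have : i = j := Fin.ext (by omega)
    subst this
    simp
  | succ n ih =>
    intro i j h
    have hj' : (i : ℕ) + n < k := by omega
    have h1 := ih i ⟨(i : ℕ) + n, hj'⟩ rfl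
    have h2 : f ⟨(i : ℕ) + n, hj'⟩ < f j := hf (by simp [Fin.lt_def]; omega)
    push_cast at h1 ⊢
    omega

section LofSfacts

variable {M : ℤ} {S : Finset ℤ} (hM : 2 ≤ M) (hS : S ⊆ Finset.Icc 1 (M-2))

include hM hS

lemma card_S_le : (S.card : ℤ) ≤ M - 2 := by
  have h := Finset.card_le_card hS
  have h2 : (Finset.Icc (1:ℤ) (M-2)).card = (M-2).toNat := by
    rw [Int.card_Icc]
    congr 1
    omega
  rw [h2] at h
  omega

lemma LofS_val {z : ℤ} (h0 : 0 ≤ z - (M - S.card)) (h1 : z - (M - S.card) < (S.card : ℤ)) :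
    1 ≤ LofS M S z ∧ LofS M S z ≤ M - 1 - S.card := by
  have hcard := card_S_le hM hS
  rw [LofS, dif_pos ⟨h0, h1⟩]
  set j : Fin S.card := ⟨(z - (M - S.card)).toNat, by omega⟩ with hj
  have hmem : S.orderEmbOfFin rfl j ∈ S := Finset.orderEmbOfFin_mem S rfl j
  have hmem2 := hS hmem
  rw [Finset.mem_Icc] at hmem2
  have hmono := (S.orderEmbOfFin rfl).strictMono
  constructor
  · -- f j ≥ 1 + j
    rcases Nat.eq_zero_or_pos (j : ℕ) with hz | hpos
    · have : ((j:ℕ) : ℤ) = z - (M - S.card) := by simp [hj]; omega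
      omega
    · have h0' : (0 : ℕ) < S.card := by omega
      have hgap := strictMono_gap _ hmono (j : ℕ) ⟨0, h0'⟩ j (by simp)
      have hmem0 : S.orderEmbOfFin rfl ⟨0, h0'⟩ ∈ S := Finset.orderEmbOfFin_mem S rfl _
      have hmem0' := hS hmem0
      rw [Finset.mem_Icc] at hmem0'
      have : ((j:ℕ) : ℤ) = z - (M - S.card) := by simp [hj]; omega
      omega
  · -- f j - j ≤ M - 1 - ℓ
    have hlast : (S.card - 1 : ℕ) < S.card := by omega
    have hgap := strictMono_gap _ hmono (S.card - 1 - (j:ℕ)) j ⟨S.card - 1, hlast⟩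
      (by simp; omega)
    have hmeml : S.orderEmbOfFin rfl ⟨S.card - 1, hlast⟩ ∈ S := Finset.orderEmbOfFin_mem S rfl _
    have hmeml' := hS hmeml
    rw [Finset.mem_Icc] at hmeml'
    have h2 : ((j:ℕ) : ℤ) = z - (M - S.card) := by simp [hj]; omega
    have h3 : ((S.card - 1 - (j:ℕ) : ℕ) : ℤ) = (S.card : ℤ) - 1 - (j : ℕ) := by
      have : (j : ℕ) ≤ S.card - 1 := by omega
      omega
    omega

lemma LofS_zero_out {z : ℤ} (h : z < M - S.card ∨ M ≤ z) : LofS M S z = 0 := by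
  rw [LofS, dif_neg]
  omega

lemma LofS_lamC : lamC M (LofS M S) 0 = (S.card : ℤ) := by
  have hcard := card_S_le hM hS
  have hset : (win M).filter (fun z => 0 < LofS M S z) = Finset.Icc (M - S.card) (M-1) := by
    apply Finset.ext
    intro z
    rw [Finset.mem_filter, mem_win, Finset.mem_Icc]
    constructor
    · rintro ⟨⟨h0, h1⟩, h2⟩
      by_contra hc
      push_neg at hc
      rw [LofS_zero_out hM hS (by omega)] at h2
      omega
    · rintro ⟨h0, h1⟩
      have := LofS_val hM hS (z := z) (by omega) (by omega)
      exact ⟨⟨by omega, h1⟩, by omega⟩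
  rw [lamC, hset, Int.card_Icc]
  omega

lemma LofS_good : Good M (LofS M S) := by
  have hcard := card_S_le hM hS
  refine ⟨?_, ?_, ?_⟩
  · intro z₁ z₂ h0 h1 h2
    rcases le_or_gt (M - S.card) z₁ with ha | ha
    · have v1 := LofS_val hM hS (z := z₁) (by omega) (by omega)
      have v2 := LofS_val hM hS (z := z₂) (by omega) (by omega)
      rw [LofS_in M S (z := z₁) ⟨by omega, by omega⟩, LofS_in M S (z := z₂) ⟨by omega, by omega⟩]
      have hmono := (S.orderEmbOfFin (k := S.card) rfl).strictMono
      have hgap := strictMono_gap _ hmono (z₂ - z₁).toNat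
        ⟨(z₁ - (M - S.card)).toNat, by omega⟩ ⟨(z₂ - (M - S.card)).toNat, by omega⟩
        (by simp; omega)
      have he : ((z₂ - z₁).toNat : ℤ) = z₂ - z₁ := by omega
      have he1 : (((z₁ - (M - S.card)).toNat : ℕ) : ℤ) = z₁ - (M - S.card) := by omega
      have he2 : (((z₂ - (M - S.card)).toNat : ℕ) : ℤ) = z₂ - (M - S.card) := by omega
      omega
    · rw [LofS_zero_out hM hS (Or.inl ha)]
      rcases le_or_gt (M - S.card) z₂ with hb | hb
      · have v2 := LofS_val hM hS (z := z₂) (by omega) (by omega)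
        omega
      · rw [LofS_zero_out hM hS (Or.inl hb)]
  · intro z h0 h1
    rcases le_or_gt (M - S.card) z with ha | ha
    · have := LofS_val hM hS (z := z) (by omega) (by omega)
      omega
    · rw [LofS_zero_out hM hS (Or.inl ha)]
  · rw [LofS_lamC hM hS]
    rcases Nat.eq_zero_or_pos S.card with hz | hpos
    · rw [LofS_zero_out hM hS (by omega)]
      omega
    · have := LofS_val hM hS (z := M-1) (by omega) (by omega)
      omega

end LofSfacts

/-! ### round trips -/

lemma SofL_subset {M : ℤ} (hM : 2 ≤ M) {Λ : ℤ → ℤ} (hG : Good M Λ) :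
    SofL M Λ ⊆ Finset.Icc 1 (M-2) := by
  intro e he
  rw [SofL, Finset.mem_image] at he
  obtain ⟨z, hz, rfl⟩ := he
  rw [Finset.mem_Ico] at hz
  have hl0 := lamC_nonneg M Λ 0
  have hlM := lamC_le_M M Λ 0 (by omega)
  have hzw : 0 ≤ z ∧ z ≤ M - 1 := by omega
  have hsupp := (hG.supp_char hzw.1 hzw.2).mpr (by omega)
  have htop := hG.lam_le_top hzw.1 hzw.2
  have hb := hG.bound
  rw [Finset.mem_Icc]
  omega

lemma SofL_card {M : ℤ} (hM : 2 ≤ M) {Λ : ℤ → ℤ} (hG : Good M Λ) :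
    ((SofL M Λ).card : ℤ) = lamC M Λ 0 := by
  have hl0 := lamC_nonneg M Λ 0
  have hlM := lamC_le_M M Λ 0 (by omega)
  rw [SofL, Finset.card_image_of_injOn, Int.card_Ico]
  · omega
  · intro z₁ h₁ z₂ h₂ heq
    rw [Finset.coe_Ico, Set.mem_Ico] at h₁ h₂
    dsimp only at heq
    rcases lt_trichotomy z₁ z₂ with h | h | h
    · have := hG.mono (z₁ := z₁) (z₂ := z₂) (by omega) (by omega) (by omega)
      omega
    · exact h
    · have := hG.mono (z₁ := z₂) (z₂ := z₁) (by omega) (by omega) (by omega)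
      omega

lemma LofS_SofL {M : ℤ} (hM : 2 ≤ M) {Λ : ℤ → ℤ} (hG : Good M Λ) :
    ∀ z, 0 ≤ z → z ≤ M - 1 → LofS M (SofL M Λ) z = Λ z := by
  have hl0 := lamC_nonneg M Λ 0
  have hlM := lamC_le_M M Λ 0 (by omega)
  have hb := hG.bound
  have hcardS := SofL_card hM hG
  set S := SofL M Λ with hSdef
  have hmem : ∀ j : Fin S.card, (fun j : Fin S.card => Λ (M - lamC M Λ 0 + (j:ℕ)) + (j:ℕ)) j ∈ S := by
    intro j
    show Λ (M - lamC M Λ 0 + (j:ℕ)) + ((j:ℕ) : ℤ) ∈ SofL M Λ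
    rw [SofL, Finset.mem_image]
    refine ⟨M - lamC M Λ 0 + (j:ℕ), ?_, by ring⟩
    rw [Finset.mem_Ico]
    have : ((j:ℕ) : ℤ) < (S.card : ℤ) := by exact_mod_cast j.2
    omega
  have hmono : StrictMono (fun j : Fin S.card => Λ (M - lamC M Λ 0 + (j:ℕ)) + (j:ℕ)) := by
    intro i j hij
    have hij' : (i : ℕ) < (j : ℕ) := hij
    have hij'' : ((i:ℕ) : ℤ) < ((j:ℕ) : ℤ) := by exact_mod_cast hij'
    have hjc : ((j:ℕ) : ℤ) < (S.card : ℤ) := by exact_mod_cast j.2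
    have := hG.mono (z₁ := M - lamC M Λ 0 + (i:ℕ)) (z₂ := M - lamC M Λ 0 + (j:ℕ))
      (by omega) (by omega) (by omega)
    dsimp only
    omega
  have hfeq := Finset.orderEmbOfFin_unique (s := S) (k := S.card) rfl (fun j => hmem j) hmono
  intro z h0 h1
  rw [LofS]
  split_ifs with h
  · have hfeq' := congrFun hfeq ⟨(z - (M - S.card)).toNat, by omega⟩
    simp only at hfeq'
    rw [← hfeq']
    have harg : M - lamC M Λ 0 + (((z - (M - S.card)).toNat : ℕ) : ℤ) = z := by omega
    rw [harg]
    omega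
  · have hz : z < M - lamC M Λ 0 := by omega
    have hnn := hG.nonneg z h0 h1
    have hsupp := hG.supp_char h0 h1
    omega

lemma SofL_LofS {M : ℤ} (hM : 2 ≤ M) {S : Finset ℤ} (hS : S ⊆ Finset.Icc 1 (M-2)) :
    SofL M (LofS M S) = S := by
  have hG := LofS_good hM hS
  have hcard := card_S_le hM hS
  have hl := LofS_lamC hM hS
  have hsub : SofL M (LofS M S) ⊆ S := by
    intro e he
    rw [SofL, Finset.mem_image] at he
    obtain ⟨z, hz, rfl⟩ := he
    rw [Finset.mem_Ico, hl] at hz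
    rw [hl, LofS, dif_pos (by omega : 0 ≤ z - (M - S.card) ∧ z - (M - S.card) < (S.card:ℤ))]
    have hmem := Finset.orderEmbOfFin_mem S rfl ⟨(z - (M - S.card)).toNat, by omega⟩
    have : S.orderEmbOfFin rfl ⟨(z - (M - S.card)).toNat, by omega⟩ - (z - (M - S.card)) + z -
        (M - S.card) = S.orderEmbOfFin rfl ⟨(z - (M - S.card)).toNat, by omega⟩ := by ring
    rw [this]
    exact hmem
  have hcards : ((SofL M (LofS M S)).card : ℤ) = (S.card : ℤ) := by
    rw [SofL_card hM hG, hl]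
  exact Finset.eq_of_subset_of_card_le hsub (by omega)
/-! ### translation invariance -/

lemma isPolyomino_translate {P : Finset Cell} (h : IsPolyomino P) (v : Cell) :
    IsPolyomino (cellTranslate v P) := by
  obtain ⟨hne, hconn⟩ := h
  constructor
  · exact hne.image _
  · intro a ha b hb
    rw [mem_cellTranslate] at ha hb
    have key := hconn _ ha _ hb
    have lift : Relation.ReflTransGen
        (fun c d : Cell => c ∈ cellTranslate v P ∧ d ∈ cellTranslate v P ∧
          (c.1 - d.1).natAbs + (c.2 - d.2).natAbs = 1)
        ((a.1 - v.1) + v.1, (a.2 - v.2) + v.2) ((b.1 - v.1) + v.1, (b.2 - v.2) + v.2) := by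
      refine Relation.ReflTransGen.lift (fun c : Cell => (c.1 + v.1, c.2 + v.2)) ?_ _ _ key
      intro c d hcd
      obtain ⟨h1, h2, h3⟩ := hcd
      refine ⟨?_, ?_, ?_⟩
      · rw [mem_cellTranslate]; simpa using h1
      · rw [mem_cellTranslate]; simpa using h2
      · dsimp only
        omega
    have e1 : ((a.1 - v.1) + v.1, (a.2 - v.2) + v.2) = a := by
      obtain ⟨a1, a2⟩ := a; simp
    have e2 : ((b.1 - v.1) + v.1, (b.2 - v.2) + v.2) = b := by
      obtain ⟨b1, b2⟩ := b; simp
    rwa [e1, e2] at lift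

lemma isConvexPoly_translate {P : Finset Cell} (h : IsConvexPoly P) (v : Cell) :
    IsConvexPoly (cellTranslate v P) := by
  obtain ⟨h1, h2⟩ := h
  constructor
  · intro x y₁ y₂ y m1 m2 hl hr
    rw [mem_cellTranslate] at *
    exact h1 (x - v.1) _ _ (y - v.2) m1 m2 (by omega) (by omega)
  · intro y x₁ x₂ x m1 m2 hl hr
    rw [mem_cellTranslate] at *
    exact h2 (y - v.2) _ _ (x - v.1) m1 m2 (by omega) (by omega)

lemma rotMap_translate (v : Cell) (P : Finset Cell) :
    (cellTranslate v P).image rotMap = cellTranslate (rotMap v) (P.image rotMap) := by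
  rw [cellTranslate, cellTranslate, Finset.image_image, Finset.image_image]
  congr 1
  funext c
  simp only [Function.comp_apply, rotMap, Prod.mk.injEq]
  exact ⟨by ring, trivial⟩

lemma symBy_translate {P : Finset Cell} (h : SymBy rotMap P) (v : Cell) :
    SymBy rotMap (cellTranslate v P) := by
  obtain ⟨w, hw⟩ := h
  refine ⟨rotMap v + w - v, ?_⟩
  rw [rotMap_translate, hw, cellTranslate_comp, cellTranslate_comp]
  congr 1
  abel

/-! ### intervals and windows -/

lemma interval_eq_win {M : ℤ} {T : Finset ℤ} (h0 : 0 ∈ T) (hnn : ∀ x ∈ T, 0 ≤ x)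
    (hiv : ∀ x₁ ∈ T, ∀ x₂ ∈ T, ∀ x, x₁ ≤ x → x ≤ x₂ → x ∈ T)
    (hcard : (T.card : ℤ) = M) : T = win M := by
  have hne : T.Nonempty := ⟨0, h0⟩
  obtain ⟨b, hbmem, hble⟩ : ∃ b, b ∈ T ∧ ∀ x ∈ T, x ≤ b :=
    ⟨T.max' hne, Finset.max'_mem T hne, fun x hx => Finset.le_max' T x hx⟩
  have heq : T = Finset.Icc 0 b := by
    apply Finset.ext
    intro x
    rw [Finset.mem_Icc]
    constructor
    · intro hx
      exact ⟨hnn x hx, hble x hx⟩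
    · rintro ⟨hx1, hx2⟩
      exact hiv 0 h0 _ hbmem x hx1 hx2
  rw [heq] at hcard
  rw [Int.card_Icc] at hcard
  have hb0 := hnn _ hbmem
  rw [heq, win]
  congr 1
  omega

lemma image_neg_win {M : ℤ} : (win M).image Neg.neg = Finset.Icc (1-M) 0 := by
  apply Finset.ext
  intro z
  rw [Finset.mem_image, Finset.mem_Icc]
  constructor
  · rintro ⟨w, hw, rfl⟩
    rw [mem_win] at hw
    omega
  · intro hz
    exact ⟨-z, by rw [mem_win]; omega, by ring⟩

lemma image_add_win {M c : ℤ} : (win M).image (· + c) = Finset.Icc c (M-1+c) := by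
  apply Finset.ext
  intro z
  rw [Finset.mem_image, Finset.mem_Icc]
  constructor
  · rintro ⟨w, hw, rfl⟩
    rw [mem_win] at hw
    omega
  · intro hz
    exact ⟨z - c, by rw [mem_win]; omega, by ring⟩

lemma fst_image_translate (v : Cell) (P : Finset Cell) :
    (cellTranslate v P).image Prod.fst = (P.image Prod.fst).image (· + v.1) := by
  rw [cellTranslate, Finset.image_image, Finset.image_image]
  rfl

lemma snd_image_translate (v : Cell) (P : Finset Cell) :
    (cellTranslate v P).image Prod.snd = (P.image Prod.snd).image (· + v.2) := by
  rw [cellTranslate, Finset.image_image, Finset.image_image]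
  rfl

lemma fst_image_rot (P : Finset Cell) :
    (P.image rotMap).image Prod.fst = (P.image Prod.snd).image Neg.neg := by
  rw [Finset.image_image, Finset.image_image]
  rfl

lemma snd_image_rot (P : Finset Cell) :
    (P.image rotMap).image Prod.snd = P.image Prod.fst := by
  rw [Finset.image_image]
  rfl

/-- determination of the rotation center for a normalized symmetric set -/
lemma rho_of_sym {M : ℤ} (hM : 2 ≤ M) {P : Finset Cell} (hsym : SymBy rotMap P)
    (hfst : P.image Prod.fst = win M) (hsnd : P.image Prod.snd = win M) :
    ∀ c : Cell, c ∈ P ↔ rho M c ∈ P := by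
  obtain ⟨v, hv⟩ := hsym
  have h1 : (P.image rotMap).image Prod.fst = Finset.Icc (1-M) 0 := by
    rw [fst_image_rot, hsnd, image_neg_win]
  have h2 : (P.image rotMap).image Prod.fst = Finset.Icc v.1 (M-1+v.1) := by
    rw [hv, fst_image_translate, hfst, image_add_win]
  have hv1 : v.1 = 1 - M := by
    have e1 : (1-M) ∈ Finset.Icc v.1 (M-1+v.1) := by
      rw [← h2, h1]; rw [Finset.mem_Icc]; omega
    have e2 : v.1 ∈ Finset.Icc (1-M) 0 := by
      rw [← h1, h2]; rw [Finset.mem_Icc]; omega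
    rw [Finset.mem_Icc] at e1 e2
    omega
  have h3 : (P.image rotMap).image Prod.snd = win M := by
    rw [snd_image_rot, hfst]
  have h4 : (P.image rotMap).image Prod.snd = Finset.Icc v.2 (M-1+v.2) := by
    rw [hv, snd_image_translate, hsnd, image_add_win]
  have hv2 : v.2 = 0 := by
    have e1 : (0:ℤ) ∈ Finset.Icc v.2 (M-1+v.2) := by
      rw [← h4, h3]; rw [mem_win]; omega
    have e2 : v.2 ∈ win M := by
      rw [← h3, h4]; rw [Finset.mem_Icc]; omega
    rw [Finset.mem_Icc] at e1
    rw [mem_win] at e2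
    omega
  have hrotinj : Function.Injective rotMap := by
    intro a b hab
    rw [rotMap, rotMap, Prod.ext_iff] at hab
    rw [Prod.ext_iff]
    simp at hab
    omega
  intro c
  have step1 : c ∈ P ↔ rotMap c ∈ P.image rotMap := by
    constructor
    · exact fun h => Finset.mem_image_of_mem _ h
    · intro h
      obtain ⟨d, hd, he⟩ := Finset.mem_image.mp h
      rwa [← hrotinj he]
  rw [step1, hv, mem_cellTranslate, hv1, hv2]
  rw [show ((rotMap c).1 - (1 - M), (rotMap c).2 - 0) = rho M c by
    simp only [rotMap, rho, Prod.mk.injEq]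
    constructor <;> ring]
/-! ### final assembly -/

lemma SofL_congr {M : ℤ} (hM : 0 ≤ M) {Λ₁ Λ₂ : ℤ → ℤ}
    (h : ∀ z, 0 ≤ z → z ≤ M - 1 → Λ₁ z = Λ₂ z) : SofL M Λ₁ = SofL M Λ₂ := by
  have hc : ∀ t, lamC M Λ₁ t = lamC M Λ₂ t := by
    intro t
    have hfeq : (win M).filter (fun z => t < Λ₁ z) = (win M).filter (fun z => t < Λ₂ z) := by
      apply Finset.filter_congr
      intro z hz
      rw [mem_win] at hz
      rw [h z hz.1 hz.2]
    rw [lamC, lamC, hfeq]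
  rw [SofL, SofL, hc 0]
  apply Finset.image_congr
  intro z hz
  rw [Finset.coe_Ico, Set.mem_Ico] at hz
  have h2 := lamC_le_M M Λ₂ 0 hM
  have h3 := lamC_nonneg M Λ₂ 0
  dsimp only
  rw [h z (by omega) (by omega)]

lemma case_ge_two (m : ℕ) (hm : 2 ≤ m) :
    classCount (fun P => IsPolyomino P ∧ IsConvexPoly P ∧ SymBy rotMap P ∧
        width P + height P = 2 * m) = 2 ^ (m - 2) := by
  set M : ℤ := (m : ℤ) with hMdef
  have hM : (2:ℤ) ≤ M := by omega
  have hcardIcc : (Finset.Icc (1:ℤ) (M-2)).card = m - 2 := by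
    rw [Int.card_Icc]
    omega
  have h1 : ∀ S ∈ (Finset.Icc (1:ℤ) (M-2)).powerset,
      (fun P => IsPolyomino P ∧ IsConvexPoly P ∧ SymBy rotMap P ∧
        width P + height P = 2 * m) (PofL M (LofS M S)) := by
    intro S hS'
    have hS := Finset.mem_powerset.mp hS'
    have hG := LofS_good hM hS
    refine ⟨hG.polyomino (by omega), hG.convex, Good.symBy, ?_⟩
    have hw := hG.width_PofL (by omega)
    have hh := hG.height_PofL (by omega)
    rw [hMdef] at hw hh
    have hw' : width (PofL M (LofS M S)) = m := by exact_mod_cast hw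
    have hh' : height (PofL M (LofS M S)) = m := by exact_mod_cast hh
    omega
  have h2 : ∀ P, (IsPolyomino P ∧ IsConvexPoly P ∧ SymBy rotMap P ∧
      width P + height P = 2 * m) → ∃ S ∈ (Finset.Icc (1:ℤ) (M-2)).powerset,
      ∃ v, P = cellTranslate v (PofL M (LofS M S)) := by
    rintro P ⟨hpoly, hconv, hsym, hwh⟩
    have hwhh := sym_width_eq_height hsym
    have hwm : width P = m := by omega
    have hhm : height P = m := by omega
    obtain ⟨c₀, hc₀⟩ := hpoly.1
    have hfne : (P.image Prod.fst).Nonempty := ⟨c₀.1, Finset.mem_image_of_mem _ hc₀⟩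
    have hsne : (P.image Prod.snd).Nonempty := ⟨c₀.2, Finset.mem_image_of_mem _ hc₀⟩
    set a := (P.image Prod.fst).min' hfne with ha
    set b := (P.image Prod.snd).min' hsne with hb
    set Q := cellTranslate (-a, -b) P with hQ
    have hQpoly := isPolyomino_translate hpoly (-a, -b)
    have hQconv := isConvexPoly_translate hconv (-a, -b)
    have hQsym := symBy_translate hsym (-a, -b)
    have hQfst : Q.image Prod.fst = win M := by
      refine interval_eq_win ?_ ?_ ?_ ?_
      · have hma : a ∈ P.image Prod.fst := Finset.min'_mem _ _
        rw [Finset.mem_image] at hma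
        obtain ⟨c, hc, hca⟩ := hma
        rw [Finset.mem_image]
        refine ⟨(c.1 + -a, c.2 + -b), ?_, by dsimp only; omega⟩
        rw [hQ, cellTranslate, Finset.mem_image]
        exact ⟨c, hc, rfl⟩
      · intro x hx
        rw [hQ, fst_image_translate, Finset.mem_image] at hx
        obtain ⟨w, hw, rfl⟩ := hx
        have := Finset.min'_le _ w hw
        dsimp only
        omega
      · intro x₁ hx₁ x₂ hx₂ x hl hr
        rw [Finset.mem_image] at hx₁ hx₂
        obtain ⟨cc₁, hcc₁, rfl⟩ := hx₁
        obtain ⟨cc₂, hcc₂, rfl⟩ := hx₂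
        exact proj_fst_interval hQpoly hcc₁ hcc₂ hl hr
      · have hwQ : width Q = m := by rw [hQ, width_cellTranslate]; exact hwm
        rw [width] at hwQ
        omega
    have hQsnd : Q.image Prod.snd = win M := by
      refine interval_eq_win ?_ ?_ ?_ ?_
      · have hmb : b ∈ P.image Prod.snd := Finset.min'_mem _ _
        rw [Finset.mem_image] at hmb
        obtain ⟨c, hc, hcb⟩ := hmb
        rw [Finset.mem_image]
        refine ⟨(c.1 + -a, c.2 + -b), ?_, by dsimp only; omega⟩
        rw [hQ, cellTranslate, Finset.mem_image]
        exact ⟨c, hc, rfl⟩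
      · intro y hy
        rw [hQ, snd_image_translate, Finset.mem_image] at hy
        obtain ⟨w, hw, rfl⟩ := hy
        have := Finset.min'_le _ w hw
        dsimp only
        omega
      · intro y₁ hy₁ y₂ hy₂ y hl hr
        rw [Finset.mem_image] at hy₁ hy₂
        obtain ⟨cc₁, hcc₁, rfl⟩ := hy₁
        obtain ⟨cc₂, hcc₂, rfl⟩ := hy₂
        exact proj_snd_interval hQpoly hcc₁ hcc₂ hl hr
      · have hhQ : height Q = m := by rw [hQ, height_cellTranslate]; exact hhm
        rw [height] at hhQ
        omega
    have hrho := rho_of_sym hM hQsym hQfst hQsnd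
    obtain ⟨hGood, hPQ⟩ := master hM hQpoly hQconv hrho hQfst hQsnd
    have hSsub : SofL M (lamR M Q) ⊆ Finset.Icc 1 (M-2) := SofL_subset hM hGood
    refine ⟨SofL M (lamR M Q), Finset.mem_powerset.mpr hSsub, (a, b), ?_⟩
    have he1 : PofL M (LofS M (SofL M (lamR M Q))) = PofL M (lamR M Q) :=
      PofL_congr (LofS_SofL hM hGood)
    rw [he1, ← hPQ, cellTranslate_comp]
    rw [show ((a,b) + (-a,-b) : Cell) = 0 by
      rw [Prod.ext_iff]; constructor <;> simp]
    rw [cellTranslate_zero]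
  have h3 : ∀ S₁ ∈ (Finset.Icc (1:ℤ) (M-2)).powerset, ∀ S₂ ∈ (Finset.Icc (1:ℤ) (M-2)).powerset,
      ∀ v, PofL M (LofS M S₂) = cellTranslate v (PofL M (LofS M S₁)) → S₁ = S₂ := by
    intro S₁ hS₁' S₂ hS₂' v hv
    have hS₁ := Finset.mem_powerset.mp hS₁'
    have hS₂ := Finset.mem_powerset.mp hS₂'
    have hG₁ := LofS_good hM hS₁
    have hG₂ := LofS_good hM hS₂
    have hv1 : v.1 = 0 := by
      have e : (PofL M (LofS M S₂)).image Prod.fst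
          = ((PofL M (LofS M S₁)).image Prod.fst).image (· + v.1) := by
        rw [hv, fst_image_translate]
      rw [hG₁.fst_image, hG₂.fst_image, image_add_win] at e
      have e1 : (0:ℤ) ∈ Finset.Icc v.1 (M-1+v.1) := by rw [← e, mem_win]; omega
      have e2 : v.1 ∈ win M := by rw [e, Finset.mem_Icc]; omega
      rw [Finset.mem_Icc] at e1
      rw [mem_win] at e2
      omega
    have hv2 : v.2 = 0 := by
      have e : (PofL M (LofS M S₂)).image Prod.snd
          = ((PofL M (LofS M S₁)).image Prod.snd).image (· + v.2) := by
        rw [hv, snd_image_translate]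
      rw [hG₁.snd_image, hG₂.snd_image, image_add_win] at e
      have e1 : (0:ℤ) ∈ Finset.Icc v.2 (M-1+v.2) := by rw [← e, mem_win]; omega
      have e2 : v.2 ∈ win M := by rw [e, Finset.mem_Icc]; omega
      rw [Finset.mem_Icc] at e1
      rw [mem_win] at e2
      omega
    have hveq : v = (0 : Cell) := by
      rw [Prod.ext_iff]
      exact ⟨hv1, hv2⟩
    rw [hveq, cellTranslate_zero] at hv
    have hkey : SofL M (LofS M S₁) = SofL M (LofS M S₂) := by
      apply SofL_congr (by omega : (0:ℤ) ≤ M)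
      intro z h0 h1
      rw [← hG₁.lamR_PofL h0 h1, ← hG₂.lamR_PofL h0 h1, hv]
    rwa [SofL_LofS hM hS₁, SofL_LofS hM hS₂] at hkey
  rw [classCount_eq_card ((Finset.Icc (1:ℤ) (M-2)).powerset)
    (fun S => PofL M (LofS M S)) h1 h2 h3]
  rw [Finset.card_powerset, hcardIcc]

end S7

/-- The number of translation classes of `r`-symmetric convex polyominoes of
half-perimeter `2m` is `1` for `m = 1` and `2^{m−2}` for `m ≥ 2`; and there are no
`r`-symmetric convex polyominoes of odd half-perimeter. -/

theorem stmt7 :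
    classCount (fun P => IsPolyomino P ∧ IsConvexPoly P ∧ SymBy rotMap P ∧
        width P + height P = 2 * 1) = 1 ∧
    (∀ m : ℕ, 2 ≤ m →
      classCount (fun P => IsPolyomino P ∧ IsConvexPoly P ∧ SymBy rotMap P ∧
          width P + height P = 2 * m) = 2 ^ (m - 2)) ∧
    (∀ P : Finset Cell, IsPolyomino P → IsConvexPoly P → SymBy rotMap P →
      ¬ Odd (width P + height P)) := by
  refine ⟨S7.case_one, ?_, ?_⟩
  · intro m hm
    exact S7.case_ge_two m hm
  · intro P h1 h2 h3
    exact S7.not_odd_part P h1 h2 h3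
end
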